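/- arXiv:2408.05483 — 3 statements merged into one kernel-verified Lean document; each statement's English description precedes it below -/
import Mathlib

section
/- Let μ = (μ₁ ≥ μ₂ ≥ ⋯ ≥ μ_m ≥ 0) be a partition with at most m parts. In ℤ², set a_i = (i−1, i−1) and b_i = (μ_{m+1−i} + i − 1, i − 2) for 1 ≤ i ≤ m. Then Y↑(μ) = q^{−D} · det( w(a_i → b_j) )_{1 ≤ i,j ≤ m}, where D := Σ_{i=1}^m (i−1)·μ_{m+1−i}; equivalently, det( w(a_i → b_j) )_{1 ≤ i,j ≤ m} = q^{D} · Σ_{μ' ⊆ μ} q^{|μ'|}. -/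
noncomputable section

open LaurentPolynomial

/-- The weighted count `w(x → y)` of right-down lattice paths from `x` to `y` in `ℤ²`:
a path uses steps `(1,0)` (right) and `(0,−1)` (down); a right step taken at height `h`
has weight `q^{h+1}`, and the weight of a path is the product of the weights of its right
steps.  A path with `r` right steps and `d` down steps is encoded by a function
`f : Fin (r+d) → Bool` (`true` = right step) having exactly `r` `true`s; the height at
which step `t` is taken is `x.2` minus the number of down steps before `t`. -/
def pw (x y : ℤ × ℤ) : LaurentPolynomial ℤ :=
  if x.1 ≤ y.1 ∧ y.2 ≤ x.2 then
    ∑ᶠ (f : Fin ((y.1 - x.1).toNat + (x.2 - y.2).toNat) → Bool)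
      (_ : Nat.card {t // f t = true} = (y.1 - x.1).toNat),
      ∏ᶠ (t : Fin ((y.1 - x.1).toNat + (x.2 - y.2).toNat)) (_ : f t = true),
        LaurentPolynomial.T
          (x.2 - (Nat.card {s // s < t ∧ f s = false} : ℤ) + 1)
  else 0

def cnt {n : ℕ} (f : Fin n → Bool) : ℕ := (Finset.univ.filter fun t => f t = true).card

def dbef {n : ℕ} (f : Fin n → Bool) (t : Fin n) : ℕ :=
  (Finset.univ.filter fun s => s < t ∧ f s = false).card

def wt {n : ℕ} (x2 : ℤ) (f : Fin n → Bool) : LaurentPolynomial ℤ :=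
  ∏ t, if f t = true then T (x2 - (dbef f t : ℤ) + 1) else 1

def sumF (x2 : ℤ) (n r : ℕ) : LaurentPolynomial ℤ :=
  ∑ f : Fin n → Bool, if cnt f = r then wt x2 f else 0

lemma pw_eq {x y : ℤ × ℤ} (h : x.1 ≤ y.1 ∧ y.2 ≤ x.2) :
    pw x y = sumF x.2 ((y.1 - x.1).toNat + (x.2 - y.2).toNat) (y.1 - x.1).toNat := by
  rw [pw, if_pos h, sumF]
  rw [finsum_eq_sum_of_fintype]
  refine Finset.sum_congr rfl fun f _ => ?_
  have hc : Nat.card {t // f t = true} = cnt f := by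
    rw [Nat.card_eq_fintype_card, Fintype.card_subtype, cnt]
  rw [hc, finsum_eq_if]
  congr 1
  rw [wt, finprod_eq_prod_of_fintype]
  refine Finset.prod_congr rfl fun t _ => ?_
  rw [finprod_eq_if]
  have hd : Nat.card {s // s < t ∧ f s = false} = dbef f t := by
    rw [Nat.card_eq_fintype_card, Fintype.card_subtype, dbef]
  rw [hd]

lemma pw_of_not {x y : ℤ × ℤ} (h : ¬(x.1 ≤ y.1 ∧ y.2 ≤ x.2)) : pw x y = 0 := if_neg h

lemma cnt_le {n : ℕ} (f : Fin n → Bool) : cnt f ≤ n := by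
  rw [cnt]; exact (Finset.card_filter_le _ _).trans (by simp)

lemma sumF_of_lt {x2 : ℤ} {n r : ℕ} (h : n < r) : sumF x2 n r = 0 := by
  rw [sumF]
  refine Finset.sum_eq_zero fun f _ => ?_
  rw [if_neg]
  intro hc; have := cnt_le f; omega

lemma cnt_snoc {n : ℕ} (g : Fin n → Bool) (b : Bool) :
    cnt (Fin.snoc g b) = cnt g + (if b = true then 1 else 0) := by
  rw [cnt, cnt, Finset.card_filter, Finset.card_filter, Fin.sum_univ_castSucc]
  simp [Fin.snoc_castSucc, Fin.snoc_last]

lemma dbef_snoc_castSucc {n : ℕ} (g : Fin n → Bool) (b : Bool) (t : Fin n) :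
    dbef (Fin.snoc g b) (Fin.castSucc t) = dbef g t := by
  rw [dbef, dbef, Finset.card_filter, Finset.card_filter, Fin.sum_univ_castSucc]
  have hlast : ¬(Fin.last n < Fin.castSucc t ∧
      (Fin.snoc g b : Fin (n+1) → Bool) (Fin.last n) = false) :=
    fun h => absurd h.1 (Fin.castSucc_lt_last t).asymm
  rw [if_neg hlast, add_zero]
  refine Finset.sum_congr rfl fun s _ => ?_
  simp [Fin.snoc_castSucc, Fin.castSucc_lt_castSucc_iff]

lemma cnt_compl {n : ℕ} (g : Fin n → Bool) :
    (∑ s : Fin n, if g s = false then 1 else 0) + cnt g = n := by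
  rw [cnt, Finset.card_filter, ← Finset.sum_add_distrib]
  have h1 : ∀ s : Fin n, ((if g s = false then 1 else 0) + if g s = true then 1 else 0) = 1 :=
    fun s => by cases hs : g s <;> simp [hs]
  rw [Finset.sum_congr rfl fun s _ => h1 s]
  simp

lemma dbef_snoc_last {n : ℕ} (g : Fin n → Bool) (b : Bool) :
    dbef (Fin.snoc g b) (Fin.last n) = n - cnt g := by
  rw [dbef, Finset.card_filter, Fin.sum_univ_castSucc]
  have hlast : ¬(Fin.last n < Fin.last n ∧
      (Fin.snoc g b : Fin (n+1) → Bool) (Fin.last n) = false) :=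
    fun h => absurd h.1 (lt_irrefl _)
  rw [if_neg hlast, add_zero]
  have h1 : ∀ s : Fin n, (if Fin.castSucc s < Fin.last n ∧
      (Fin.snoc g b : Fin (n+1) → Bool) (Fin.castSucc s) = false then 1 else 0)
      = if g s = false then 1 else 0 := by
    intro s
    simp [Fin.snoc_castSucc, Fin.castSucc_lt_last]
  rw [Finset.sum_congr rfl fun s _ => h1 s]
  have := cnt_compl g
  omega

lemma wt_snoc {n : ℕ} (x2 : ℤ) (g : Fin n → Bool) (b : Bool) :
    wt x2 (Fin.snoc g b) =
      wt x2 g * (if b = true then T (x2 - ((n - cnt g : ℕ) : ℤ) + 1) else 1) := by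
  rw [wt, wt, Fin.prod_univ_castSucc]
  congr 1
  · refine Finset.prod_congr rfl fun t _ => ?_
    rw [Fin.snoc_castSucc, dbef_snoc_castSucc]
  · rw [Fin.snoc_last, dbef_snoc_last]

def snocEquiv (n : ℕ) : ((Fin n → Bool) × Bool) ≃ (Fin (n+1) → Bool) where
  toFun p := Fin.snoc p.1 p.2
  invFun f := (Fin.init f, f (Fin.last n))
  left_inv p := by simp [Fin.init_snoc, Fin.snoc_last]
  right_inv f := Fin.snoc_init_self f

lemma key (x2 : ℤ) (n r : ℕ) :
    sumF x2 (n+1) r =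
      (if r = 0 then 0 else T (x2 - ((n + 1 - r : ℕ) : ℤ) + 1) * sumF x2 n (r-1))
        + sumF x2 n r := by
  rw [sumF, ← Equiv.sum_comp (snocEquiv n), Fintype.sum_prod_type]
  have hsplit : ∀ g : Fin n → Bool,
      (∑ b : Bool, (if cnt (snocEquiv n (g, b)) = r then wt x2 (snocEquiv n (g, b)) else 0))
      = (if cnt g + 1 = r then wt x2 g * T (x2 - ((n - cnt g : ℕ) : ℤ) + 1) else 0)
        + (if cnt g = r then wt x2 g else 0) := by
    intro g
    rw [Fintype.sum_bool]
    congr 1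
    · show (if cnt (Fin.snoc g true) = r then wt x2 (Fin.snoc g true) else 0) = _
      rw [cnt_snoc, wt_snoc]
      simp
    · show (if cnt (Fin.snoc g false) = r then wt x2 (Fin.snoc g false) else 0) = _
      rw [cnt_snoc, wt_snoc]
      simp
  rw [Finset.sum_congr rfl (fun g _ => hsplit g), Finset.sum_add_distrib]
  congr 1
  · rcases r with _ | r'
    · simp
    · rw [if_neg (Nat.succ_ne_zero r')]
      have : ∀ g : Fin n → Bool,
          (if cnt g + 1 = r' + 1 then wt x2 g * T (x2 - ((n - cnt g : ℕ) : ℤ) + 1) else 0)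
          = (if cnt g = r' then wt x2 g else 0) * T (x2 - ((n + 1 - (r'+1) : ℕ) : ℤ) + 1) := by
        intro g
        by_cases h : cnt g = r'
        · rw [if_pos (by omega), if_pos h, h, Nat.succ_sub_succ]
        · rw [if_neg (by omega), if_neg h, zero_mul]
      rw [Finset.sum_congr rfl (fun g _ => this g), ← Finset.sum_mul, mul_comm]
      rw [sumF]
      rfl

lemma cnt_eq_zero_iff {n : ℕ} {f : Fin n → Bool} : cnt f = 0 ↔ f = fun _ => false := by
  rw [cnt, Finset.card_eq_zero, Finset.filter_eq_empty_iff]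
  constructor
  · intro h; funext t; simpa using h (Finset.mem_univ t)
  · intro h t _; rw [h]; simp

lemma cnt_eq_n_iff {n : ℕ} {f : Fin n → Bool} : cnt f = n ↔ f = fun _ => true := by
  constructor
  · intro h
    funext t
    by_contra ht
    have hss : (Finset.univ.filter fun t => f t = true) ⊂ Finset.univ :=
      Finset.filter_ssubset.2 ⟨t, Finset.mem_univ t, by simpa using ht⟩
    have hlt := Finset.card_lt_card hss
    rw [← cnt, h] at hlt
    simp at hlt
  · intro h; rw [h, cnt]; simp

lemma wt_false {n : ℕ} (x2 : ℤ) : wt x2 (fun _ => false : Fin n → Bool) = 1 := by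
  rw [wt]; simp

lemma wt_true {n : ℕ} (x2 : ℤ) : wt x2 (fun _ => true : Fin n → Bool) = T (n * (x2 + 1)) := by
  rw [wt]
  have h1 : ∀ t : Fin n, dbef (fun _ => true : Fin n → Bool) t = 0 := by
    intro t; rw [dbef, Finset.card_eq_zero, Finset.filter_eq_empty_iff]; simp
  calc (∏ t : Fin n, if (fun _ => true : Fin n → Bool) t = true
          then T (x2 - (dbef (fun _ => true : Fin n → Bool) t : ℤ) + 1) else 1)
      = ∏ _t : Fin n, T (x2 + 1) := by
        refine Finset.prod_congr rfl fun t _ => ?_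
        rw [if_pos rfl, h1]
        norm_num
    _ = T (x2 + 1) ^ n := by rw [Finset.prod_const, Finset.card_univ, Fintype.card_fin]
    _ = T (n * (x2 + 1)) := T_pow _ _

lemma sumF_zero (x2 : ℤ) (n : ℕ) : sumF x2 n 0 = 1 := by
  rw [sumF]
  rw [Finset.sum_eq_single (fun _ => false : Fin n → Bool)]
  · rw [if_pos (cnt_eq_zero_iff.2 rfl), wt_false]
  · intro b _ hb
    rw [if_neg (fun h => hb (cnt_eq_zero_iff.1 h))]
  · intro h; exact absurd (Finset.mem_univ _) h

lemma sumF_full (x2 : ℤ) (n : ℕ) : sumF x2 n n = T (n * (x2 + 1)) := by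
  rw [sumF]
  rw [Finset.sum_eq_single (fun _ => true : Fin n → Bool)]
  · rw [if_pos (cnt_eq_n_iff.2 rfl), wt_true]
  · intro b _ hb
    rw [if_neg (fun h => hb (cnt_eq_n_iff.1 h))]
  · intro h; exact absurd (Finset.mem_univ _) h

lemma pw_eq' {x1 x2 y1 y2 : ℤ} (h1 : x1 ≤ y1) (h2 : y2 ≤ x2) :
    pw (x1, x2) (y1, y2) = sumF x2 ((y1 - x1).toNat + (x2 - y2).toNat) (y1 - x1).toNat :=
  pw_eq ⟨h1, h2⟩

lemma pw_of_not' {x1 x2 y1 y2 : ℤ} (h : ¬(x1 ≤ y1 ∧ y2 ≤ x2)) : pw (x1, x2) (y1, y2) = 0 :=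
  pw_of_not h

lemma pw_vert {x1 x2 y2 : ℤ} (h : y2 ≤ x2) : pw (x1, x2) (x1, y2) = 1 := by
  rw [pw_eq' (le_refl x1) h]
  simp only [sub_self, Int.toNat_zero]
  rw [show (0 : ℕ) + (x2 - y2).toNat = (x2 - y2).toNat from by omega]
  exact sumF_zero _ _

lemma pw_horiz {x1 x2 y1 : ℤ} (h : x1 ≤ y1) : pw (x1, x2) (y1, x2) = T ((y1 - x1) * (x2 + 1)) := by
  rw [pw_eq' h (le_refl x2)]
  simp only [sub_self, Int.toNat_zero, add_zero]
  rw [sumF_full]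
  congr 1
  have : ((y1 - x1).toNat : ℤ) = y1 - x1 := by omega
  rw [this]

lemma pw_pascal' {x1 x2 y1 y2 : ℤ} (hne : ¬(x1 = y1 ∧ x2 = y2)) :
    pw (x1, x2) (y1, y2) = T (y2 + 1) * pw (x1, x2) (y1 - 1, y2) + pw (x1, x2) (y1, y2 + 1) := by
  by_cases hx1 : x1 ≤ y1
  swap
  · rw [pw_of_not' (fun h => hx1 h.1),
      pw_of_not' (x1 := x1) (x2 := x2) (y1 := y1 - 1) (y2 := y2)
        (fun h => hx1 (by omega : x1 ≤ y1)),
      pw_of_not' (x1 := x1) (x2 := x2) (y1 := y1) (y2 := y2 + 1) (fun h => hx1 h.1)]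
    simp
  by_cases hy2 : y2 ≤ x2
  swap
  · rw [pw_of_not' (fun h => hy2 h.2),
      pw_of_not' (x1 := x1) (x2 := x2) (y1 := y1 - 1) (y2 := y2) (fun h => hy2 h.2),
      pw_of_not' (x1 := x1) (x2 := x2) (y1 := y1) (y2 := y2 + 1)
        (fun h => hy2 (by omega : y2 ≤ x2))]
    simp
  have hn0 : (y1 - x1).toNat + (x2 - y2).toNat ≠ 0 := by
    intro h
    exact hne (by omega)
  obtain ⟨n, hn⟩ := Nat.exists_eq_succ_of_ne_zero hn0
  rw [pw_eq' hx1 hy2, hn, key]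
  congr 1
  · by_cases hr : (y1 - x1).toNat = 0
    · rw [if_pos hr,
        pw_of_not' (x1 := x1) (x2 := x2) (y1 := y1 - 1) (y2 := y2)
          (fun h => by omega), mul_zero]
    · rw [if_neg hr]
      have h1 : x1 ≤ y1 - 1 := by omega
      rw [pw_eq' h1 hy2]
      have h2 : (y1 - 1 - x1).toNat = (y1 - x1).toNat - 1 := by omega
      have h3 : ((y1 - x1).toNat - 1) + (x2 - y2).toNat = n := by omega
      rw [h2, h3]
      congr 2
      omega
  · by_cases hd : (x2 - y2).toNat = 0
    · rw [pw_of_not' (x1 := x1) (x2 := x2) (y1 := y1) (y2 := y2 + 1) (fun h => by omega)]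
      exact sumF_of_lt (by omega)
    · rw [pw_eq' hx1 (by omega : y2 + 1 ≤ x2)]
      have h2 : (x2 - (y2 + 1)).toNat = (x2 - y2).toNat - 1 := by omega
      have h3 : (y1 - x1).toNat + ((x2 - y2).toNat - 1) = n := by omega
      rw [h2, h3]

def NM (m : ℕ) (ν : Fin m → ℕ) : Matrix (Fin m) (Fin m) (LaurentPolynomial ℤ) :=
  Matrix.of fun i j => pw ((i : ℤ), (i : ℤ)) ((ν j : ℤ) + (j : ℤ), (j : ℤ) - 1)


lemma detC (m : ℕ) (ν : Fin (m+1) → ℕ) (h : 1 ≤ ν (Fin.last m)) :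
    (NM (m+1) ν).det
      = T m * (NM (m+1) (Function.update ν (Fin.last m) (ν (Fin.last m) - 1))).det
        + T ((m + 1) * (ν (Fin.last m) : ℤ)) * (NM m (ν ∘ Fin.castSucc)).det := by
  set a : ℕ := ν (Fin.last m) with ha
  set ν' : Fin (m+1) → ℕ := Function.update ν (Fin.last m) (a - 1) with hν'
  set c2 : Fin (m+1) → LaurentPolynomial ℤ :=
    fun i => pw ((i : ℤ), (i : ℤ)) ((a : ℤ) + (m : ℤ), (m : ℤ)) with hc2
  have hcolsplit : NM (m+1) ν = Matrix.updateCol (NM (m+1) ν) (Fin.last m)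
      (((T (m : ℤ) : LaurentPolynomial ℤ) • fun i => NM (m+1) ν' i (Fin.last m)) + c2) := by
    refine Matrix.ext fun i j => ?_
    by_cases hj : j = Fin.last m
    · subst hj
      rw [Matrix.updateCol_self]
      have step : pw ((i : ℤ), (i : ℤ)) ((a : ℤ) + (Fin.last m : ℤ), (Fin.last m : ℤ) - 1)
          = T ((Fin.last m : ℤ) - 1 + 1) *
              pw ((i : ℤ), (i : ℤ)) ((a : ℤ) + (Fin.last m : ℤ) - 1, (Fin.last m : ℤ) - 1)
            + pw ((i : ℤ), (i : ℤ)) ((a : ℤ) + (Fin.last m : ℤ), (Fin.last m : ℤ) - 1 + 1) := by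
        apply pw_pascal'
        rintro ⟨h1, h2⟩
        have hi : (i : ℤ) ≤ m := by
          have := i.isLt
          omega
        simp at h1 h2
        omega
      show NM (m+1) ν i (Fin.last m) = _
      simp only [NM, Matrix.of_apply]
      rw [step]
      simp only [Pi.add_apply, Pi.smul_apply, smul_eq_mul]
      congr 1
      · simp only [Fin.val_last, Fin.cast_val_eq_self]
        congr 2
        · simp
        · simp only [NM, Matrix.of_apply, hν', Function.update_self]
          congr 2
          push_cast [Nat.cast_sub h]
          ring
      · rw [hc2]
        congr 1
        simp
    · rw [Matrix.updateCol_ne hj]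
  rw [hcolsplit, Matrix.det_updateCol_add, Matrix.det_updateCol_smul]
  congr 1
  · have hupd : Matrix.updateCol (NM (m+1) ν) (Fin.last m)
        (fun i => NM (m+1) ν' i (Fin.last m)) = NM (m+1) ν' := by
      refine Matrix.ext fun i j => ?_
      by_cases hj : j = Fin.last m
      · subst hj; rw [Matrix.updateCol_self]
      · rw [Matrix.updateCol_ne hj]
        simp only [NM, Matrix.of_apply]
        rw [hν', Function.update_of_ne hj]
    rw [hupd]
  · -- second determinant
    have hz : ∀ i : Fin (m+1), i ≠ Fin.last m → c2 i = 0 := by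
      intro i hi
      rw [hc2]
      apply pw_of_not'
      rintro ⟨h1, h2⟩
      have : (i : ℕ) < m := Fin.val_lt_last hi
      omega
    have hlastval : c2 (Fin.last m) = T ((m + 1) * (a : ℤ)) := by
      have h1 : c2 (Fin.last m) = pw ((m:ℤ), (m:ℤ)) ((a:ℤ) + m, (m:ℤ)) := by
        rw [hc2]
        norm_num
      rw [h1, show pw ((m:ℤ), (m:ℤ)) ((a:ℤ) + m, (m:ℤ)) = T (((a:ℤ) + m - m) * ((m:ℤ) + 1)) from
        pw_horiz (by omega)]
      congr 1
      ring
    rw [Matrix.det_succ_column _ (Fin.last m)]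
    rw [Finset.sum_eq_single (Fin.last m)]
    · rw [Matrix.updateCol_self, hlastval]
      have hsign : ((-1 : LaurentPolynomial ℤ)) ^ ((Fin.last m : ℕ) + (Fin.last m : ℕ)) = 1 :=
        Even.neg_one_pow ⟨m, by simp [Fin.val_last]⟩
      rw [hsign, one_mul]
      have hsub : ((NM (m+1) ν).updateCol (Fin.last m) c2).submatrix
          (Fin.last m).succAbove (Fin.last m).succAbove = NM m (ν ∘ Fin.castSucc) := by
        refine Matrix.ext fun i j => ?_
        rw [Matrix.submatrix_apply]
        simp only [Fin.succAbove_last]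
        rw [Matrix.updateCol_ne (Fin.castSucc_lt_last j).ne]
        simp only [NM, Matrix.of_apply, Function.comp_apply]
        congr 2 <;> simp
      rw [hsub]
    · intro i _ hi
      rw [Matrix.updateCol_self, hz i hi]
      ring
    · intro hmem
      exact absurd (Finset.mem_univ _) hmem

lemma detB (m : ℕ) (ν : Fin m → ℕ) (j k : Fin m) (hjk : (j : ℕ) + 1 = (k : ℕ))
    (h1 : 1 ≤ ν j) (hk : ν k = ν j - 1) :
    (NM m ν).det = T (j : ℤ) * (NM m (Function.update ν j (ν j - 1))).det := by
  set ν' : Fin m → ℕ := Function.update ν j (ν j - 1) with hν'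
  have hsplit : NM m ν = Matrix.updateCol (NM m ν) j
      (((T (j : ℤ) : LaurentPolynomial ℤ) • fun i => NM m ν' i j) + fun i => NM m ν i k) := by
    refine Matrix.ext fun i l => ?_
    by_cases hl : l = j
    · subst hl
      rw [Matrix.updateCol_self]
      have step : pw ((i : ℤ), (i : ℤ)) ((ν l : ℤ) + (l : ℤ), (l : ℤ) - 1)
          = T ((l : ℤ) - 1 + 1) *
              pw ((i : ℤ), (i : ℤ)) ((ν l : ℤ) + (l : ℤ) - 1, (l : ℤ) - 1)
            + pw ((i : ℤ), (i : ℤ)) ((ν l : ℤ) + (l : ℤ), (l : ℤ) - 1 + 1) := by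
        apply pw_pascal'
        rintro ⟨hA, hB⟩
        omega
      show NM m ν i l = _
      simp only [NM, Matrix.of_apply]
      rw [step]
      simp only [Pi.add_apply, Pi.smul_apply, smul_eq_mul]
      congr 1
      · congr 1
        · congr 1
          ring
        · simp only [NM, Matrix.of_apply, hν', Function.update_self]
          congr 2
          push_cast [Nat.cast_sub h1]
          ring
      · show _ = pw ((i : ℤ), (i : ℤ)) ((ν k : ℤ) + (k : ℤ), (k : ℤ) - 1)
        have hkc : (k : ℤ) = (l : ℤ) + 1 := by
          have := hjk
          omega
        congr 1
        rw [hk, hkc]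
        push_cast [Nat.cast_sub h1]
        rw [Prod.ext_iff]
        constructor <;> dsimp only <;> ring
    · rw [Matrix.updateCol_ne hl]
  rw [hsplit, Matrix.det_updateCol_add, Matrix.det_updateCol_smul]
  have hdup : (Matrix.updateCol (NM m ν) j fun i => NM m ν i k).det = 0 :=
    Matrix.det_updateCol_eq_zero (fun hkj => by omega : k ≠ j)
  rw [hdup, add_zero]
  congr 1
  have hupd : Matrix.updateCol (NM m ν) j (fun i => NM m ν' i j) = NM m ν' := by
    refine Matrix.ext fun i l => ?_
    by_cases hl : l = j
    · subst hl; rw [Matrix.updateCol_self]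
    · rw [Matrix.updateCol_ne hl]
      simp only [NM, Matrix.of_apply]
      rw [hν', Function.update_of_ne hl]
  rw [hupd]

lemma det_NM_zero (m : ℕ) : (NM m (fun _ => 0)).det = 1 := by
  have htri : (NM m (fun _ => 0)).BlockTriangular id := by
    intro i j hij
    simp only [NM, Matrix.of_apply]
    apply pw_of_not'
    rintro ⟨hA, _⟩
    have : (j : ℕ) < (i : ℕ) := hij
    omega
  rw [Matrix.det_of_upperTriangular htri]
  have hdiag : ∀ i : Fin m, NM m (fun _ => 0) i i = 1 := by
    intro i
    simp only [NM, Matrix.of_apply, Nat.cast_zero, zero_add]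
    exact pw_vert (by omega)
  calc ∏ i, NM m (fun _ => 0) i i = ∏ _i : Fin m, (1 : LaurentPolynomial ℤ) :=
        Finset.prod_congr rfl fun i _ => hdiag i
    _ = 1 := Finset.prod_const_one

lemma det_chain (m : ℕ) (ν : Fin m → ℕ) (a t₀ : ℕ) (ha : 1 ≤ a)
    (hchar : ∀ l : Fin m, ν l = a ↔ t₀ ≤ (l : ℕ)) (t : ℕ) (ht0 : t₀ ≤ t) (ht : t ≤ m - 1) :
    (NM m (fun l => if t ≤ (l : ℕ) then a - 1 else ν l)).det
      = T (∑ l : Fin m, if t₀ ≤ (l : ℕ) ∧ (l : ℕ) < t then (l : ℤ) else 0)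
        * (NM m (fun l => if t₀ ≤ (l : ℕ) then a - 1 else ν l)).det := by
  induction t, ht0 using Nat.le_induction with
  | base =>
    have hE : (∑ l : Fin m, if t₀ ≤ (l : ℕ) ∧ (l : ℕ) < t₀ then (l : ℤ) else 0) = 0 :=
      Finset.sum_eq_zero fun l _ => by rw [if_neg (by omega)]
    rw [hE, T_zero, one_mul]
  | succ t ht0 ihc =>
    have hm : t + 1 < m := by omega
    set j : Fin m := ⟨t, by omega⟩ with hj
    set k : Fin m := ⟨t + 1, by omega⟩ with hk'
    set νB : Fin m → ℕ := fun l => if t + 1 ≤ (l : ℕ) then a - 1 else ν l with hνB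
    have hνBj : νB j = a := by
      rw [hνB]
      simp only
      rw [if_neg (by simp [hj])]
      exact (hchar j).2 (by simp [hj, ht0])
    have hνBk : νB k = a - 1 := by
      show (if t + 1 ≤ (k : ℕ) then a - 1 else ν k) = a - 1
      rw [if_pos (by simp [hk'])]
    have hB := detB m νB j k (by simp [hj, hk']) (by omega) (by rw [hνBk, hνBj])
    have hupd : Function.update νB j (νB j - 1)
        = (fun l : Fin m => if t ≤ (l : ℕ) then a - 1 else ν l) := by
      funext l
      by_cases hl : l = j
      · subst hl
        rw [Function.update_self, hνBj, if_pos (by simp [hj])]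
      · rw [Function.update_of_ne hl]
        show (if t + 1 ≤ (l : ℕ) then a - 1 else ν l) = (if t ≤ (l : ℕ) then a - 1 else ν l)
        have hlt : (l : ℕ) ≠ t := fun hc => hl (Fin.ext (by simp [hj, hc]))
        split_ifs <;> first | rfl | (exfalso; omega)
    rw [hB, hupd, ihc (by omega)]
    have hpt : ∀ l : Fin m, (if t₀ ≤ (l : ℕ) ∧ (l : ℕ) < t + 1 then (l : ℤ) else 0)
        = (if (l : ℕ) = t then (l : ℤ) else 0)
          + (if t₀ ≤ (l : ℕ) ∧ (l : ℕ) < t then (l : ℤ) else 0) := fun l => by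
      split_ifs <;> omega
    rw [Finset.sum_congr rfl fun l _ => hpt l, Finset.sum_add_distrib]
    have hsingle : (∑ l : Fin m, if (l : ℕ) = t then (l : ℤ) else 0) = (t : ℤ) := by
      rw [Finset.sum_eq_single j]
      · rw [if_pos (by simp [hj])]
      · intro b _ hb
        rw [if_neg (fun hc => hb (Fin.ext (by simp [hj, hc])))]
      · intro hmem; exact absurd (Finset.mem_univ _) hmem
    rw [hsingle, T_add, mul_assoc]

def FS (m : ℕ) (μ : Fin m → ℕ) : Finset (Fin m → ℕ) :=
  @Finset.filter _ (fun μ' => Antitone μ' ∧ ∀ i, μ' i ≤ μ i) (Classical.decPred _)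
    (Fintype.piFinset fun i => Finset.range (μ i + 1))

lemma mem_FS {m : ℕ} {μ x : Fin m → ℕ} : x ∈ FS m μ ↔ (Antitone x ∧ ∀ i, x i ≤ μ i) := by
  unfold FS
  rw [@Finset.mem_filter _ _ (Classical.decPred _)]
  constructor
  · exact fun h => h.2
  · intro h
    refine ⟨?_, h⟩
    rw [Fintype.mem_piFinset]
    intro i
    rw [Finset.mem_range]
    exact Nat.lt_succ_of_le (h.2 i)

lemma F_eq (m : ℕ) (μ : Fin m → ℕ) :
    (∑ᶠ (μ' : Fin m → ℕ) (_ : Antitone μ' ∧ ∀ i, μ' i ≤ μ i), (T (∑ i, (μ' i : ℤ)) : LaurentPolynomial ℤ))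
      = ∑ μ' ∈ FS m μ, T (∑ i, (μ' i : ℤ)) :=
  finsum_cond_eq_sum_of_cond_iff _ (fun {x} _ => mem_FS.symm)

lemma F_zero (m : ℕ) : (∑ μ' ∈ FS m (fun _ => 0), (T (∑ i, (μ' i : ℤ)) : LaurentPolynomial ℤ)) = 1 := by
  have hFS : FS m (fun _ => 0) = {fun _ => 0} := by
    apply Finset.ext
    intro x
    rw [mem_FS, Finset.mem_singleton]
    constructor
    · intro h
      funext i
      exact Nat.le_zero.1 (h.2 i)
    · intro h
      subst h
      exact ⟨fun _ _ _ => le_refl _, fun i => le_refl _⟩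
  rw [hFS, Finset.sum_singleton]
  have : (∑ i : Fin m, ((0 : ℕ) : ℤ)) = 0 := by simp
  rw [this, T_zero]

lemma F_split (m : ℕ) (μ : Fin (m+1) → ℕ) (hμ : Antitone μ) (ha : 1 ≤ μ 0) :
    (∑ μ' ∈ FS (m+1) μ, (T (∑ i, (μ' i : ℤ)) : LaurentPolynomial ℤ))
      = (∑ μ' ∈ FS (m+1) (fun i => min (μ i) (μ 0 - 1)), (T (∑ i, (μ' i : ℤ)) : LaurentPolynomial ℤ))
        + T (μ 0 : ℤ) * ∑ τ ∈ FS m (μ ∘ Fin.succ), T (∑ i, (τ i : ℤ)) := by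
  classical
  set a := μ 0 with haa
  -- split by whether μ' 0 = a
  rw [← Finset.sum_filter_add_sum_filter_not (FS (m+1) μ) (fun μ' => μ' 0 = a)]
  rw [add_comm]
  congr 1
  · -- μ' 0 ≠ a part equals FS of the min partition
    apply Finset.sum_congr
    · apply Finset.ext
      intro x
      rw [Finset.mem_filter, mem_FS, mem_FS]
      constructor
      · rintro ⟨⟨hanti, hle⟩, hne⟩
        refine ⟨hanti, fun i => le_min (hle i) ?_⟩
        have h0 : x i ≤ x 0 := hanti (Fin.zero_le i)
        have h1 : x 0 ≤ a := hle 0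
        omega
      · rintro ⟨hanti, hle⟩
        refine ⟨⟨hanti, fun i => (hle i).trans (min_le_left _ _)⟩, ?_⟩
        have := hle 0
        have hmin : min (μ 0) (a - 1) ≤ a - 1 := min_le_right _ _
        omega
    · intro x _
      rfl
  · -- μ' 0 = a part
    have himg : (FS (m+1) μ).filter (fun μ' => μ' 0 = a)
        = (FS m (μ ∘ Fin.succ)).image (Fin.cons a) := by
      apply Finset.ext
      intro x
      rw [Finset.mem_filter, mem_FS, Finset.mem_image]
      constructor
      · rintro ⟨⟨hanti, hle⟩, h0⟩
        refine ⟨x ∘ Fin.succ, ?_, ?_⟩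
        · rw [mem_FS]
          exact ⟨hanti.comp_monotone (Fin.strictMono_succ).monotone,
            fun i => hle (Fin.succ i)⟩
        · rw [← h0]
          exact Fin.cons_self_tail x
      · rintro ⟨τ, hτ, rfl⟩
        rw [mem_FS] at hτ
        have hτ0 : ∀ i : Fin m, τ i ≤ a := by
          intro i
          calc τ i ≤ μ (Fin.succ i) := hτ.2 i
            _ ≤ μ 0 := hμ (Fin.zero_le _)
        refine ⟨⟨?_, ?_⟩, Fin.cons_zero _ _⟩
        · rw [Fin.antitone_iff_succ_le]
          intro i
          rw [Fin.cons_succ]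
          by_cases hi : i.castSucc = 0
          · rw [hi, Fin.cons_zero]
            exact hτ0 i
          · obtain ⟨i', hi'⟩ : ∃ i', i.castSucc = i'.succ :=
              ⟨(i.castSucc).pred hi, (Fin.succ_pred _ hi).symm⟩
            rw [hi', Fin.cons_succ]
            refine hτ.1 ?_
            have hv := congrArg Fin.val hi'
            simp only [Fin.coe_castSucc, Fin.val_succ] at hv
            rw [Fin.le_def]
            omega
        · intro i
          induction i using Fin.cases with
          | zero => rw [Fin.cons_zero]
          | succ i' =>
            rw [Fin.cons_succ]
            exact hτ.2 i'
    rw [himg]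
    have himgsum : (∑ x ∈ ((FS m (μ ∘ Fin.succ)).image (Fin.cons a) : Finset (Fin (m+1) → ℕ)),
          (T (∑ i, (x i : ℤ)) : LaurentPolynomial ℤ))
        = ∑ τ ∈ FS m (μ ∘ Fin.succ),
            (T (∑ i : Fin (m+1), (((Fin.cons a τ : Fin (m+1) → ℕ)) i : ℤ)) :
              LaurentPolynomial ℤ) := by
      apply Finset.sum_image
      intro y _ z _ h
      funext i
      have hc := congrFun h i.succ
      rwa [Fin.cons_succ, Fin.cons_succ] at hc
    rw [himgsum]
    rw [Finset.mul_sum]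
    apply Finset.sum_congr rfl
    intro τ _
    rw [← T_add]
    congr 1
    rw [Fin.sum_univ_succ]
    simp [Fin.cons_zero, Fin.cons_succ]


lemma stmt_zero (m : ℕ) :
    Matrix.det (Matrix.of fun i j : Fin m =>
        pw ((i : ℤ), (i : ℤ)) ((((fun _ => 0 : Fin m → ℕ) j.rev : ℕ) : ℤ) + (j : ℤ), (j : ℤ) - 1))
      = LaurentPolynomial.T (∑ i : Fin m, (i : ℤ) * (((fun _ => 0 : Fin m → ℕ) i.rev : ℕ) : ℤ)) *
        ∑ᶠ (μ' : Fin m → ℕ) (_ : Antitone μ' ∧ ∀ i, μ' i ≤ (fun _ => 0 : Fin m → ℕ) i),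
          LaurentPolynomial.T (∑ i, (μ' i : ℤ)) := by
  have h1 : Matrix.det (Matrix.of fun i j : Fin m =>
      pw ((i : ℤ), (i : ℤ)) ((((fun _ => 0 : Fin m → ℕ) j.rev : ℕ) : ℤ) + (j : ℤ), (j : ℤ) - 1))
      = (NM m (fun _ => 0)).det := rfl
  rw [h1, det_NM_zero, F_eq, F_zero, mul_one]
  have h2 : (∑ i : Fin m, (i : ℤ) * (((fun _ => 0 : Fin m → ℕ) i.rev : ℕ) : ℤ)) = 0 := by
    simp
  rw [h2, T_zero]

/-- Lindström–Gessel–Viennot determinant for `Y↑(μ)`.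
`μ = (μ₁ ≥ ⋯ ≥ μ_m ≥ 0)` is a partition (an antitone function `Fin m → ℕ`);
in `ℤ²` (0-based indices `i : Fin m`, so 1-based `i+1`):
`a_i = (i, i)` and `b_i = (μ_{m−i} + i, i − 1)` (i.e. `μ_{m+1-i}+i-1, i-2` 1-based).
Then `det(w(a_i → b_j)) = q^D · Σ_{μ'⊆μ} q^{|μ'|}` with `D = Σ i·μ_{m−i}`. -/
theorem stmt2 (m : ℕ) (μ : Fin m → ℕ) (hμ : Antitone μ) :
    Matrix.det (Matrix.of fun i j : Fin m =>
        pw ((i : ℤ), (i : ℤ)) ((μ j.rev : ℤ) + (j : ℤ), (j : ℤ) - 1))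
      = LaurentPolynomial.T (∑ i : Fin m, (i : ℤ) * (μ i.rev : ℤ)) *
        ∑ᶠ (μ' : Fin m → ℕ) (_ : Antitone μ' ∧ ∀ i, μ' i ≤ μ i),
          LaurentPolynomial.T (∑ i, (μ' i : ℤ)) := by
  induction m with
  | zero =>
    have hz : μ = fun _ => 0 := funext fun i => i.elim0
    subst hz
    exact stmt_zero 0
  | succ m' IH =>
    suffices H : ∀ N (μ : Fin (m'+1) → ℕ), Antitone μ → (∑ i, μ i) ≤ N →
        Matrix.det (Matrix.of fun i j : Fin (m'+1) =>
          pw ((i : ℤ), (i : ℤ)) ((μ j.rev : ℤ) + (j : ℤ), (j : ℤ) - 1))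
        = LaurentPolynomial.T (∑ i : Fin (m'+1), (i : ℤ) * (μ i.rev : ℤ)) *
          ∑ᶠ (μ' : Fin (m'+1) → ℕ) (_ : Antitone μ' ∧ ∀ i, μ' i ≤ μ i),
            LaurentPolynomial.T (∑ i, (μ' i : ℤ)) by
      exact H _ μ hμ le_rfl
    intro N
    induction N with
    | zero =>
      intro μ hμ hsum
      have hz : μ = fun _ => 0 := funext fun i => by
        have hle := Finset.single_le_sum (f := μ) (fun _ _ => Nat.zero_le _) (Finset.mem_univ i)
        omega
      subst hz
      exact stmt_zero (m' + 1)
    | succ N ihN =>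
      intro μ hμ hsum
      by_cases ha0 : μ 0 = 0
      · have hz : μ = fun _ => 0 := funext fun i => by
          have := hμ (Fin.zero_le i)
          omega
        subst hz
        exact stmt_zero (m' + 1)
      -- main case
      set a := μ 0 with haa
      have ha : 1 ≤ a := Nat.pos_of_ne_zero ha0
      set ν : Fin (m'+1) → ℕ := fun j => μ j.rev with hν
      have hbound : ∀ l : Fin (m'+1), ν l ≤ a := fun l => hμ (Fin.zero_le _)
      have hmonoν : Monotone ν := fun l1 l2 h => hμ (by
        rw [Fin.rev_le_rev]
        exact h)
      have hνlast : ν (Fin.last m') = a := by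
        show μ (Fin.last m').rev = a
        rw [Fin.rev_last]
      have hex : ∃ t : ℕ, ∀ l : Fin (m'+1), t ≤ (l : ℕ) → ν l = a := by
        refine ⟨m', fun l hl => ?_⟩
        have : l = Fin.last m' := Fin.ext (by
          have := l.isLt
          simp only [Fin.val_last]
          omega)
        rw [this, hνlast]
      set t₀ := Nat.find hex with ht₀def
      have hchar : ∀ l : Fin (m'+1), ν l = a ↔ t₀ ≤ (l : ℕ) := by
        intro l
        constructor
        · intro hla
          refine Nat.find_min' hex ?_
          intro l' hl'
          have h1 : ν l ≤ ν l' := hmonoν (by rw [Fin.le_def]; exact hl')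
          have h2 := hbound l'
          omega
        · intro h
          exact Nat.find_spec hex l h
      have ht₀ : t₀ ≤ m' := Nat.find_min' hex (fun l hl => by
        have : l = Fin.last m' := Fin.ext (by
          have := l.isLt
          simp only [Fin.val_last]
          omega)
        rw [this, hνlast])
      -- determinant side
      have hC := detC m' ν (by rw [hνlast]; exact ha)
      rw [hνlast] at hC
      have hupd : Function.update ν (Fin.last m') (a - 1)
          = (fun l : Fin (m'+1) => if m' ≤ (l : ℕ) then a - 1 else ν l) := by
        funext l
        by_cases hl : l = Fin.last m'
        · subst hl
          rw [Function.update_self, if_pos (by simp [Fin.val_last])]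
        · rw [Function.update_of_ne hl, if_neg (by
            have := l.isLt
            have hne : (l : ℕ) ≠ m' := fun hc => hl (Fin.ext (by simp [Fin.val_last, hc]))
            omega)]
      rw [hupd] at hC
      have hchain := det_chain (m'+1) ν a t₀ ha hchar m' ht₀ (by omega)
      set E := (∑ l : Fin (m'+1), if t₀ ≤ (l : ℕ) ∧ (l : ℕ) < m' then (l : ℤ) else 0) with hE
      -- ρ
      set ρ : Fin (m'+1) → ℕ := fun i => min (μ i) (a - 1) with hρ
      have hsρ : (fun l : Fin (m'+1) => if t₀ ≤ (l : ℕ) then a - 1 else ν l)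
          = (fun j : Fin (m'+1) => ρ j.rev) := by
        funext l
        show _ = min (μ l.rev) (a - 1)
        by_cases hl : t₀ ≤ (l : ℕ)
        · rw [if_pos hl]
          have : ν l = a := (hchar l).2 hl
          rw [show μ l.rev = a from this]
          omega
        · rw [if_neg hl]
          have h1 : ν l ≠ a := fun hc => hl ((hchar l).1 hc)
          have h2 := hbound l
          show ν l = min (ν l) (a - 1)
          omega
      rw [hsρ] at hchain
      have hρanti : Antitone ρ := fun i j h => min_le_min (hμ h) le_rfl
      have hρsum : (∑ i, ρ i) ≤ N := by
        have hlt : (∑ i, ρ i) < ∑ i, μ i := by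
          refine Finset.sum_lt_sum (fun i _ => min_le_left _ _) ⟨0, Finset.mem_univ _, ?_⟩
          show min (μ 0) (a - 1) < μ 0
          omega
        omega
      have hρdet : (NM (m'+1) (fun j => ρ j.rev)).det
          = LaurentPolynomial.T (∑ i : Fin (m'+1), (i : ℤ) * (ρ i.rev : ℤ)) *
            ∑ᶠ (μ' : Fin (m'+1) → ℕ) (_ : Antitone μ' ∧ ∀ i, μ' i ≤ ρ i),
              LaurentPolynomial.T (∑ i, (μ' i : ℤ)) := ihN ρ hρanti hρsum
      -- tail
      have htailanti : Antitone (μ ∘ Fin.succ) :=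
        hμ.comp_monotone (Fin.strictMono_succ).monotone
      have htaildet : (NM m' (fun j => (μ ∘ Fin.succ) j.rev)).det
          = LaurentPolynomial.T (∑ i : Fin m', (i : ℤ) * ((μ ∘ Fin.succ) i.rev : ℤ)) *
            ∑ᶠ (μ' : Fin m' → ℕ) (_ : Antitone μ' ∧ ∀ i, μ' i ≤ (μ ∘ Fin.succ) i),
              LaurentPolynomial.T (∑ i, (μ' i : ℤ)) := IH (μ ∘ Fin.succ) htailanti
      have hcs : ν ∘ Fin.castSucc = (fun j : Fin m' => (μ ∘ Fin.succ) j.rev) := by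
        funext j
        show μ (Fin.castSucc j).rev = μ (j.rev.succ)
        rw [Fin.rev_castSucc]
      rw [hcs] at hC
      -- assemble determinant side
      show (NM (m'+1) ν).det = _
      rw [hC, hchain, hρdet, htaildet]
      -- RHS side
      rw [F_eq, F_eq, F_eq, F_split m' μ hμ ha]
      -- exponents
      set Dρ := (∑ i : Fin (m'+1), (i : ℤ) * (ρ i.rev : ℤ)) with hDρ
      set Dtail := (∑ i : Fin m', (i : ℤ) * ((μ ∘ Fin.succ) i.rev : ℤ)) with hDtail
      set Dμ := (∑ i : Fin (m'+1), (i : ℤ) * (μ i.rev : ℤ)) with hDμ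
      have hAexp : Dμ = (m' : ℤ) + E + Dρ := by
        have hpt : ∀ l : Fin (m'+1), (l : ℤ) * (μ l.rev : ℤ)
            = ((if (l : ℕ) = m' then (m' : ℤ) else 0)
              + (if t₀ ≤ (l : ℕ) ∧ (l : ℕ) < m' then (l : ℤ) else 0))
              + (l : ℤ) * (ρ l.rev : ℤ) := by
          intro l
          show (l : ℤ) * (ν l : ℤ) = _ + (l : ℤ) * ((min (μ l.rev) (a-1) : ℕ) : ℤ)
          by_cases hl : t₀ ≤ (l : ℕ)
          · have hνl : ν l = a := (hchar l).2 hl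
            rw [show ((min (μ l.rev) (a-1) : ℕ) : ℤ) = ((a : ℤ) - 1) from by
              show ((min (ν l) (a-1) : ℕ) : ℤ) = (a : ℤ) - 1
              omega]
            rw [hνl]
            by_cases hm : (l : ℕ) = m'
            · rw [if_pos hm, if_neg (by omega)]
              have hlz : (l : ℤ) = (m' : ℤ) := by omega
              rw [hlz]
              ring
            · rw [if_neg hm, if_pos ⟨hl, by have := l.isLt; omega⟩]
              ring
          · have h1 : ν l ≠ a := fun hc => hl ((hchar l).1 hc)
            have h2 := hbound l
            rw [show ((min (μ l.rev) (a-1) : ℕ) : ℤ) = ((ν l : ℕ) : ℤ) from by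
              show ((min (ν l) (a-1) : ℕ) : ℤ) = _
              omega]
            rw [if_neg (by omega), if_neg (fun hc => hl hc.1)]
            ring
        rw [hDμ, Finset.sum_congr rfl fun l _ => hpt l, Finset.sum_add_distrib,
          Finset.sum_add_distrib]
        have hm'sum : (∑ l : Fin (m'+1), if (l : ℕ) = m' then (m' : ℤ) else 0) = (m' : ℤ) := by
          rw [Finset.sum_eq_single (Fin.last m')]
          · rw [if_pos (by simp [Fin.val_last])]
          · intro b _ hb
            rw [if_neg (fun hc => hb (Fin.ext (by simp [Fin.val_last, hc])))]
          · intro hmem; exact absurd (Finset.mem_univ _) hmem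
        rw [hm'sum]
      have hBexp : ((m' : ℤ) + 1) * (a : ℤ) + Dtail = Dμ + (a : ℤ) := by
        have hsplit : Dμ = Dtail + (m' : ℤ) * (a : ℤ) := by
          rw [hDμ, Fin.sum_univ_castSucc]
          congr 1
          · rw [hDtail]
            refine Finset.sum_congr rfl fun j _ => ?_
            have : μ (Fin.castSucc j).rev = (μ ∘ Fin.succ) j.rev := by
              show μ (Fin.castSucc j).rev = μ (j.rev.succ)
              rw [Fin.rev_castSucc]
            rw [this]
            congr 1
          · rw [show μ (Fin.last m').rev = a from by rw [Fin.rev_last]]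
            simp
        rw [hsplit]
        ring
      -- final algebra
      set Sρ := (∑ μ' ∈ FS (m'+1) ρ,
        (LaurentPolynomial.T (∑ i, (μ' i : ℤ)) : LaurentPolynomial ℤ)) with hSρ
      set St := (∑ τ ∈ FS m' (μ ∘ Fin.succ),
        (LaurentPolynomial.T (∑ i, (τ i : ℤ)) : LaurentPolynomial ℤ)) with hSt
      have e1 : (T (m' : ℤ) : LaurentPolynomial ℤ) * (T E * (T Dρ * Sρ)) = T Dμ * Sρ := by
        rw [show (T (m' : ℤ) : LaurentPolynomial ℤ) * (T E * (T Dρ * Sρ))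
            = (T (m' : ℤ) * T E * T Dρ) * Sρ from by ring]
        rw [← T_add, ← T_add, ← hAexp]
      have e2 : (T (((m' : ℤ) + 1) * (a : ℤ)) : LaurentPolynomial ℤ) * (T Dtail * St)
          = T Dμ * (T (a : ℤ) * St) := by
        rw [show (T (((m' : ℤ) + 1) * (a : ℤ)) : LaurentPolynomial ℤ) * (T Dtail * St)
            = (T (((m' : ℤ) + 1) * (a : ℤ)) * T Dtail) * St from by ring]
        rw [show (T Dμ : LaurentPolynomial ℤ) * (T (a : ℤ) * St) = (T Dμ * T (a : ℤ)) * St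
            from by ring]
        rw [← T_add, ← T_add, hBexp]
      rw [mul_add, ← e1, ← e2]


end
end

section
/- Let L be a decreasing label of a planar rooted tree T with n edges, l₁ the edge with label 1, and l₂,…,l_m the leaf edges of T strictly right of l₁ ordered so that l_{i+1} is strictly right of l_i. For 1 ≤ i ≤ m, let L_i be the decreasing label of T with label 1 on l_i obtained from L by an unrefinable cover chain of minimal length, and let L̃_i be the decreasing label of the tree T_i = T with l_i deleted, obtained from L_i by deleting l_i and decreasing all remaining labels by 1. If L is 312-avoiding, then L̃_i is 312-avoiding for every 1 ≤ i ≤ m. -/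
noncomputable section

/-- The balance (number of `U`s minus number of `D`s) of the word `w` on `[a, b)`,
where `true` encodes an up step `U` and `false` a down step `D`. -/
def bal (w : ℕ → Bool) (a b : ℕ) : ℤ :=
  (((Finset.Ico a b).filter fun k => w k = true).card : ℤ) -
    (((Finset.Ico a b).filter fun k => w k = false).card : ℤ)

/-- `w` encodes a Dyck path of size `n` (only the first `2n` letters are used; the
rest are normalized to `false`). -/
def IsDyckWord (n : ℕ) (w : ℕ → Bool) : Prop :=
  (∀ k, 2 * n ≤ k → w k = false) ∧ bal w 0 (2 * n) = 0 ∧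
    ∀ m, m ≤ 2 * n → 0 ≤ bal w 0 m

/-- `(i,j)` is a chord pair of `w`: `j` is the matching down step of the up step `i`. -/
def IsChord (w : ℕ → Bool) (i j : ℕ) : Prop :=
  i < j ∧ w i = true ∧ w j = false ∧ bal w i (j + 1) = 0 ∧
    ∀ m, i < m → m ≤ j → 0 < bal w i m

/-- The edges of the planar rooted tree corresponding to `w`, i.e. its chord pairs. -/
def Edge (w : ℕ → Bool) : Type := {p : ℕ × ℕ // IsChord w p.1 p.2}

/-- `InPath w e e'` means `e' ∈ p(e)`: `e'` lies on the path from `e` to the root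
(equivalently the chord `e'` nests the chord `e`); it is reflexive. -/
def InPath (w : ℕ → Bool) (e e' : Edge w) : Prop :=
  e'.1.1 ≤ e.1.1 ∧ e.1.2 ≤ e'.1.2

/-- `SRight w e e'` means the edge `e` is strictly right of the edge `e'`. -/
def SRight (w : ℕ → Bool) (e e' : Edge w) : Prop := e'.1.2 < e.1.1

/-- A label of the tree: a bijection from the edges onto `{1, …, n}`. -/
def IsLabel (n : ℕ) (w : ℕ → Bool) (L : Edge w → ℕ) : Prop :=
  (∀ e, 1 ≤ L e ∧ L e ≤ n) ∧ Function.Injective L ∧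
    ∀ v, 1 ≤ v → v ≤ n → ∃ e, L e = v

/-- A decreasing label: labels strictly decrease from the root towards the leaves,
i.e. a strict ancestor carries a strictly bigger label. -/
def IsDecLabel (n : ℕ) (w : ℕ → Bool) (L : Edge w → ℕ) : Prop :=
  IsLabel n w L ∧ ∀ e e', InPath w e e' → e ≠ e' → L e < L e'

/-- An increasing label: labels strictly increase from the root towards the leaves. -/
def IsIncLabel (n : ℕ) (w : ℕ → Bool) (L : Edge w → ℕ) : Prop :=
  IsLabel n w L ∧ ∀ e e', InPath w e e' → e ≠ e' → L e' < L e

/-- The cover relation on labels of monotone type `P` (Definition of the paper):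
`L'` covers `L` if they differ by swapping the labels of an edge `e_l` strictly left of
an edge `e_r` with `L e_l < L e_r`, with no edge strictly between them carrying a label
in `[L e_l, L e_r]`, and both labels have type `P`. -/
def Covers (w : ℕ → Bool) (P : (Edge w → ℕ) → Prop) (L L' : Edge w → ℕ) : Prop :=
  P L ∧ P L' ∧ ∃ el er : Edge w, SRight w er el ∧
    (∀ e, e ≠ el → e ≠ er → L e = L' e) ∧
    L el < L er ∧ L' er = L el ∧ L' el = L er ∧
    ¬ ∃ ec : Edge w, SRight w ec el ∧ SRight w er ec ∧ L el ≤ L ec ∧ L ec ≤ L er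

/-- The inversion number of the post-order word of the label `L`: the number of pairs
of edges `(e', e)` with `e'` before `e` in post-order (equivalently, the closing
position of `e'` is smaller) and `L e' < L e`. -/
def invNum (w : ℕ → Bool) (L : Edge w → ℕ) : ℕ :=
  Nat.card {p : Edge w × Edge w // p.1.1.2 < p.2.1.2 ∧ L p.1 < L p.2}

/-- The generating function `Z(L, T) = Σ_{L ≤ L'} q^{inv(ω(L'))}`, summed over all
labels `L'` of monotone type `P` reachable from `L` by a chain of covers. -/
def Zgen (w : ℕ → Bool) (P : (Edge w → ℕ) → Prop) (L : Edge w → ℕ) : Polynomial ℤ :=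
  ∑ᶠ (L' : Edge w → ℕ) (_ : P L' ∧ Relation.ReflTransGen (Covers w P) L L'),
    Polynomial.X ^ invNum w L'

/-- The quantum integer `[m] = 1 + q + ⋯ + q^{m-1}`. -/
def qInt (m : ℕ) : Polynomial ℤ := ∑ i ∈ Finset.range m, Polynomial.X ^ i

/-- The quantum factorial `[m]!`. -/
def qFact (m : ℕ) : Polynomial ℤ := ∏ i ∈ Finset.range m, qInt (i + 1)

/-- `ChainLen r p a b`: there is a chain `a = x₀ r x₁ r ⋯ r x_p = b` of length `p`. -/
def ChainLen {α : Sort*} (r : α → α → Prop) : ℕ → α → α → Prop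
  | 0, a, b => a = b
  | p + 1, a, b => ∃ c, r a c ∧ ChainLen r p c b

/-- The word obtained from `w` by deleting the two letters at positions `a, a+1`. -/
def delWord (w : ℕ → Bool) (a : ℕ) : ℕ → Bool := fun k => if k < a then w k else w (k + 2)

/-- The index correspondence from positions of `delWord w a` to positions of `w`. -/
def shiftIdx (a k : ℕ) : ℕ := if k < a then k else k + 2

/-- `L` is 312-avoiding: there are no edges `e₁` strictly right of `e₂` strictly right
of `e₃` with `L e₂ < L e₃ < L e₁`. -/
def Avoid312 (w : ℕ → Bool) (L : Edge w → ℕ) : Prop :=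
  ¬ ∃ e1 e2 e3 : Edge w, SRight w e1 e2 ∧ SRight w e2 e3 ∧ L e2 < L e3 ∧ L e3 < L e1

open scoped Classical

section Basics

variable {n : ℕ} {w : ℕ → Bool}

lemma bal_split (w : ℕ → Bool) {a b c : ℕ} (hab : a ≤ b) (hbc : b ≤ c) :
    bal w a c = bal w a b + bal w b c := by
  unfold bal
  have h1 : Finset.Ico a c = Finset.Ico a b ∪ Finset.Ico b c := by
    rw [Finset.Ico_union_Ico_eq_Ico hab hbc]
  have hd : Disjoint (Finset.Ico a b) (Finset.Ico b c) := by
    apply Finset.Ico_disjoint_Ico_consecutive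
  rw [h1, Finset.filter_union, Finset.filter_union,
    Finset.card_union_of_disjoint, Finset.card_union_of_disjoint]
  · push_cast; ring
  · exact Finset.disjoint_filter_filter hd
  · exact Finset.disjoint_filter_filter hd

lemma bal_single (w : ℕ → Bool) (a : ℕ) :
    bal w a (a + 1) = if w a then 1 else -1 := by
  unfold bal
  rw [Nat.Ico_succ_singleton]
  cases h : w a <;> simp [Finset.filter_singleton, h]

lemma chord_lt {i j : ℕ} (h : IsChord w i j) : i < j := h.1

lemma chord_true {i j : ℕ} (h : IsChord w i j) : w i = true := h.2.1

lemma chord_false {i j : ℕ} (h : IsChord w i j) : w j = false := h.2.2.1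

-- uniqueness of the second endpoint given the first
lemma chord_snd_unique' {i j j' : ℕ} (h : IsChord w i j) (h' : IsChord w i j')
    (hlt : j < j') : False := by
  have hij : i < j := h.1
  have h0 : bal w i (j + 1) = 0 := h.2.2.2.1
  have hpos : 0 < bal w i (j + 1) := h'.2.2.2.2 (j + 1) (by omega) (by omega)
  linarith

lemma chord_snd_unique {i j j' : ℕ} (h : IsChord w i j) (h' : IsChord w i j') : j = j' := by
  rcases lt_trichotomy j j' with hl | he | hl
  · exact absurd (chord_snd_unique' h h' hl) (by simp)
  · exact he
  · exact absurd (chord_snd_unique' h' h hl) (by simp)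

-- two chords with the same second endpoint coincide
lemma chord_fst_unique' {i i' j : ℕ} (h : IsChord w i j) (h' : IsChord w i' j)
    (hlt : i < i') : False := by
  have h1 : bal w i (j+1) = bal w i i' + bal w i' (j+1) :=
    bal_split w (by omega) (le_of_lt (Nat.lt_succ_of_lt h'.1))
  have h2 : bal w i (j+1) = 0 := h.2.2.2.1
  have h3 : bal w i' (j+1) = 0 := h'.2.2.2.1
  have h4 : 0 < bal w i i' := h.2.2.2.2 i' hlt (le_of_lt h'.1)
  linarith

lemma chord_fst_unique {i i' j : ℕ} (h : IsChord w i j) (h' : IsChord w i' j) : i = i' := by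
  rcases lt_trichotomy i i' with hl | he | hl
  · exact absurd (chord_fst_unique' h h' hl) (by simp)
  · exact he
  · exact absurd (chord_fst_unique' h' h hl) (by simp)

-- noncrossing: if chords (i,j), (k,l) satisfy i < k ≤ j then l < j (nesting)
lemma chord_noncross {i j k l : ℕ} (h : IsChord w i j) (h' : IsChord w k l)
    (h1 : i < k) (h2 : k ≤ j) : l < j := by
  have hkj : k ≠ j := by
    intro he; subst he
    have := h.2.2.1; have := h'.2.1; simp_all
  have hkj' : k < j := lt_of_le_of_ne h2 hkj
  by_contra hge
  push_neg at hge  -- j ≤ l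
  have hjl : j ≠ l := by
    intro he; subst he
    have h3 : bal w i (j+1) = bal w i k + bal w k (j+1) := bal_split w (by omega) (by omega)
    have h4 : 0 < bal w i k := h.2.2.2.2 k (by omega) (by omega)
    have h5 : bal w i (j+1) = 0 := h.2.2.2.1
    have h6 : bal w k (j+1) = 0 := h'.2.2.2.1
    linarith
  have hjl' : j < l := lt_of_le_of_ne hge hjl
  have h3 : bal w i (j+1) = bal w i k + bal w k (j+1) := bal_split w (by omega) (by omega)
  have h4 : 0 < bal w i k := h.2.2.2.2 k (by omega) (by omega)
  have h5 : bal w i (j+1) = 0 := h.2.2.2.1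
  have h6 : 0 < bal w k (j+1) := h'.2.2.2.2 (j+1) (by omega) (by omega)
  linarith

lemma edge_lt (e : Edge w) : e.1.1 < e.1.2 := e.2.1

lemma edge_eq_iff_fst {e e' : Edge w} : e = e' ↔ e.1.1 = e'.1.1 := by
  constructor
  · intro h; rw [h]
  · intro h
    have h2 : e.1.2 = e'.1.2 := by
      apply chord_snd_unique e.2 (h ▸ e'.2)
    apply Subtype.ext
    exact Prod.ext h h2

lemma edge_eq_iff_snd {e e' : Edge w} : e = e' ↔ e.1.2 = e'.1.2 := by
  constructor
  · intro h; rw [h]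
  · intro h
    have h2 : e.1.1 = e'.1.1 := by
      apply chord_fst_unique e.2 (h ▸ e'.2)
    apply Subtype.ext
    exact Prod.ext h2 h

lemma key_injective : Function.Injective (fun e : Edge w => e.1.2) := by
  intro e e' h; exact edge_eq_iff_snd.2 h

/-- Trichotomy of relative positions of two edges. -/
lemma edge_trichotomy (e e' : Edge w) :
    e = e' ∨ InPath w e e' ∨ InPath w e' e ∨ SRight w e e' ∨ SRight w e' e := by
  rcases lt_trichotomy e.1.1 e'.1.1 with h | h | h
  · -- e.1.1 < e'.1.1
    rcases le_or_gt e'.1.1 e.1.2 with h2 | h2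
    · right; right; left
      exact ⟨le_of_lt h, le_of_lt (chord_noncross e.2 e'.2 h h2)⟩
    · right; right; right; right
      exact h2
  · left; exact edge_eq_iff_fst.2 h
  · rcases le_or_gt e.1.1 e'.1.2 with h2 | h2
    · right; left
      exact ⟨le_of_lt h, le_of_lt (chord_noncross e'.2 e.2 h h2)⟩
    · right; right; right; left
      exact h2

lemma sright_irrefl (e e' : Edge w) (h : SRight w e e') (h' : SRight w e' e) : False := by
  have := edge_lt e; have := edge_lt e'
  unfold SRight at h h'; omega

lemma sright_ne {e e' : Edge w} (h : SRight w e e') : e ≠ e' := by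
  intro he; subst he; have := edge_lt e; unfold SRight at h; omega

-- a leaf has no strict descendants
lemma leaf_inpath {li e : Edge w} (hleaf : li.1.2 = li.1.1 + 1) (h : InPath w e li) :
    e = li := by
  obtain ⟨h1, h2⟩ := h
  have := edge_lt e
  apply edge_eq_iff_fst.2; omega

lemma edge_bound (hw : IsDyckWord n w) (e : Edge w) : e.1.2 < 2 * n := by
  have h1 := e.2.1
  have htrue := e.2.2.1
  have h1n : e.1.1 < 2 * n := by
    by_contra h
    push_neg at h
    have := hw.1 e.1.1 h
    simp [this] at htrue
  by_contra h
  push_neg at h  -- 2n ≤ e.1.2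
  have hpos : 0 < bal w e.1.1 (2*n) := e.2.2.2.2.2 (2*n) (by omega) (by omega)
  have h2 : bal w 0 (2*n) = bal w 0 e.1.1 + bal w e.1.1 (2*n) := bal_split w (by omega) (by omega)
  have h3 : bal w 0 (2*n) = 0 := hw.2.1
  have h4 : 0 ≤ bal w 0 e.1.1 := hw.2.2 e.1.1 (by omega)
  omega

noncomputable def edgeFintype (hw : IsDyckWord n w) : Fintype (Edge w) := by
  have : Finite (Edge w) := by
    apply Finite.of_injective (fun e : Edge w => ((⟨e.1.1, by have := edge_bound hw e; have := edge_lt e; omega⟩ : Fin (2*n)), (⟨e.1.2, edge_bound hw e⟩ : Fin (2*n))))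
    intro e e' h
    simp only [Prod.mk.injEq, Fin.mk.injEq] at h
    exact edge_eq_iff_fst.2 h.1
  exact Fintype.ofFinite _

end Basics
section Counting

variable {n : ℕ} {w : ℕ → Bool}

/-- prefix counts: number of edges closing at or before `s` with label at least `v`. -/
noncomputable def Fcnt (w : ℕ → Bool) (M : Edge w → ℕ) (s v : ℕ) : ℕ :=
  Nat.card {e : Edge w // e.1.2 ≤ s ∧ v ≤ M e}

lemma Fcnt_eq_sum [Fintype (Edge w)] (M : Edge w → ℕ) (s v : ℕ) :
    Fcnt w M s v = ∑ e : Edge w, if e.1.2 ≤ s ∧ v ≤ M e then 1 else 0 := by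
  rw [Fcnt, Nat.card_eq_fintype_card, Fintype.card_subtype, Finset.card_filter]

lemma invNum_eq_sum [Fintype (Edge w)] (M : Edge w → ℕ) :
    invNum w M = ∑ u : Edge w, ∑ v : Edge w,
      if u.1.2 < v.1.2 ∧ M u < M v then 1 else 0 := by
  rw [invNum, Nat.card_eq_fintype_card, Fintype.card_subtype, Finset.card_filter]
  rw [Fintype.sum_prod_type]

variable [Fintype (Edge w)]

lemma sum_split_pq {p q : Edge w} (hne : p ≠ q) (h : Edge w → ℕ) :
    ∑ v : Edge w, h v = h p + h q + ∑ v ∈ Finset.univ \ {p, q}, h v := by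
  have hsub : ({p, q} : Finset (Edge w)) ⊆ Finset.univ := Finset.subset_univ _
  rw [← Finset.sum_sdiff hsub, Finset.sum_pair hne]
  ring

lemma mem_sdiff_pq {p q u : Edge w} (hu : u ∈ Finset.univ \ ({p, q} : Finset (Edge w))) :
    u ≠ p ∧ u ≠ q := by
  simp only [Finset.mem_sdiff, Finset.mem_univ, Finset.mem_insert,
    Finset.mem_singleton, true_and] at hu
  push_neg at hu; exact hu

/-- The key swap lemma: swapping an increasing pair (in key order) with no
key-intermediate edge carrying a value strictly in between decreases the
number of co-inversions by exactly one. -/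
lemma invNum_swap (M : Edge w → ℕ) (hinj : Function.Injective M)
    (p q : Edge w) (hpq : p.1.2 < q.1.2) (hval : M p < M q)
    (hmid : ∀ r : Edge w, p.1.2 < r.1.2 → r.1.2 < q.1.2 → ¬(M p < M r ∧ M r < M q)) :
    invNum w M = invNum w (fun e => if e = p then M q else if e = q then M p else M e) + 1 := by
  classical
  set M' : Edge w → ℕ := fun e => if e = p then M q else if e = q then M p else M e with hM'
  have hpqne : p ≠ q := by intro h; subst h; omega
  set σ : Equiv.Perm (Edge w) := Equiv.swap p q with hσ
  have hσp : σ p = q := Equiv.swap_apply_left p q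
  have hσq : σ q = p := Equiv.swap_apply_right p q
  have hσo : ∀ x : Edge w, x ≠ p → x ≠ q → σ x = x := fun x h1 h2 =>
    Equiv.swap_apply_of_ne_of_ne h1 h2
  have hMσ : ∀ x : Edge w, M' (σ x) = M x := by
    intro x
    by_cases h1 : x = p
    · subst h1; rw [hσp]; simp [hM', hpqne.symm]
    by_cases h2 : x = q
    · subst h2; rw [hσq]; simp [hM']
    · rw [hσo x h1 h2]; simp [hM', h1, h2]
  -- value / key distinctness helpers
  have keyne : ∀ u v : Edge w, u ≠ v → u.1.2 ≠ v.1.2 := by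
    intro u v huv h; exact huv (key_injective h)
  have valne : ∀ u v : Edge w, u ≠ v → M u ≠ M v := by
    intro u v huv h; exact huv (hinj h)
  -- rewrite RHS via reindexing by σ
  rw [invNum_eq_sum M, invNum_eq_sum M']
  have hre : (∑ u : Edge w, ∑ v : Edge w, if u.1.2 < v.1.2 ∧ M' u < M' v then 1 else 0)
      = ∑ u : Edge w, ∑ v : Edge w, if (σ u).1.2 < (σ v).1.2 ∧ M u < M v then 1 else 0 := by
    rw [← Equiv.sum_comp σ (fun u => ∑ v : Edge w, if u.1.2 < v.1.2 ∧ M' u < M' v then 1 else 0)]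
    apply Finset.sum_congr rfl
    intro u _
    rw [← Equiv.sum_comp σ (fun v => if (σ u).1.2 < v.1.2 ∧ M' (σ u) < M' v then 1 else 0)]
    apply Finset.sum_congr rfl
    intro v _
    rw [hMσ u, hMσ v]
  rw [hre]
  -- now compare the two double sums
  set f : Edge w → Edge w → ℕ := fun u v => if u.1.2 < v.1.2 ∧ M u < M v then 1 else 0 with hf
  set g : Edge w → Edge w → ℕ := fun u v => if (σ u).1.2 < (σ v).1.2 ∧ M u < M v then 1 else 0 with hg
  have inner : ∀ u : Edge w, u ≠ p → u ≠ q → (∑ v : Edge w, f u v) = ∑ v : Edge w, g u v := by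
    intro u hup huq
    rw [sum_split_pq hpqne (f u), sum_split_pq hpqne (g u)]
    have hrest : (∑ v ∈ Finset.univ \ ({p, q} : Finset (Edge w)), f u v)
        = ∑ v ∈ Finset.univ \ ({p, q} : Finset (Edge w)), g u v := by
      apply Finset.sum_congr rfl
      intro v hv
      obtain ⟨hvp, hvq⟩ := mem_sdiff_pq hv
      rw [hf, hg]
      simp only [hσo u hup huq, hσo v hvp hvq]
    have hblock : f u p + f u q = g u p + g u q := by
      rw [hf, hg]
      simp only [hσo u hup huq, hσp, hσq]
      have h1 := keyne u p hup
      have h2 := keyne u q huq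
      have h3 := valne u p hup
      have h4 := valne u q huq
      have h5 := hmid u
      split_ifs <;> omega
    omega
  rw [sum_split_pq hpqne (fun u => ∑ v : Edge w, f u v),
    sum_split_pq hpqne (fun u => ∑ v : Edge w, g u v)]
  have hrest2 : (∑ u ∈ Finset.univ \ ({p, q} : Finset (Edge w)), ∑ v : Edge w, f u v)
      = ∑ u ∈ Finset.univ \ ({p, q} : Finset (Edge w)), ∑ v : Edge w, g u v := by
    apply Finset.sum_congr rfl
    intro u hu
    obtain ⟨hup, huq⟩ := mem_sdiff_pq hu
    exact inner u hup huq
  rw [hrest2]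
  -- remaining: rows p and q
  rw [sum_split_pq hpqne (f p), sum_split_pq hpqne (f q),
    sum_split_pq hpqne (g p), sum_split_pq hpqne (g q)]
  have hrow : (∑ v ∈ Finset.univ \ ({p, q} : Finset (Edge w)), f p v)
      + (∑ v ∈ Finset.univ \ ({p, q} : Finset (Edge w)), f q v)
      = (∑ v ∈ Finset.univ \ ({p, q} : Finset (Edge w)), g p v)
      + (∑ v ∈ Finset.univ \ ({p, q} : Finset (Edge w)), g q v) := by
    rw [← Finset.sum_add_distrib, ← Finset.sum_add_distrib]
    apply Finset.sum_congr rfl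
    intro v hv
    obtain ⟨hvp, hvq⟩ := mem_sdiff_pq hv
    rw [hf, hg]
    simp only [hσo v hvp hvq, hσp, hσq]
    have h1 := keyne v p hvp
    have h2 := keyne v q hvq
    have h3 := valne v p hvp
    have h4 := valne v q hvq
    have h5 := hmid v
    split_ifs <;> omega
  have hblock2 : f p p + f p q + (f q p + f q q)
      = g p p + g p q + (g q p + g q q) + 1 := by
    rw [hf, hg]
    simp only [hσp, hσq]
    split_ifs <;> omega
  omega

/-- Effect of a swap on the prefix counts. -/
lemma Fcnt_swap (M : Edge w → ℕ) (p q : Edge w) (hpq : p.1.2 < q.1.2) (hval : M p < M q)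
    (s v : ℕ) :
    Fcnt w M s v ≤
      Fcnt w (fun e => if e = p then M q else if e = q then M p else M e) s v := by
  classical
  set M' : Edge w → ℕ := fun e => if e = p then M q else if e = q then M p else M e with hM'
  have hpqne : p ≠ q := by intro h; subst h; omega
  rw [Fcnt_eq_sum, Fcnt_eq_sum]
  rw [sum_split_pq hpqne (fun e => if e.1.2 ≤ s ∧ v ≤ M e then 1 else 0),
    sum_split_pq hpqne (fun e => if e.1.2 ≤ s ∧ v ≤ M' e then 1 else 0)]
  have hrest : (∑ e ∈ Finset.univ \ ({p, q} : Finset (Edge w)), if e.1.2 ≤ s ∧ v ≤ M e then 1 else 0)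
      = ∑ e ∈ Finset.univ \ ({p, q} : Finset (Edge w)), if e.1.2 ≤ s ∧ v ≤ M' e then 1 else 0 := by
    apply Finset.sum_congr rfl
    intro e he
    obtain ⟨hep, heq⟩ := mem_sdiff_pq he
    simp [hM', hep, heq]
  have hblock : ((if p.1.2 ≤ s ∧ v ≤ M p then 1 else 0) + (if q.1.2 ≤ s ∧ v ≤ M q then 1 else 0) : ℕ)
      ≤ (if p.1.2 ≤ s ∧ v ≤ M' p then 1 else 0) + (if q.1.2 ≤ s ∧ v ≤ M' q then 1 else 0) := by
    have h1 : M' p = M q := by simp [hM']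
    have h2 : M' q = M p := by simp [hM', hpqne.symm]
    rw [h1, h2]
    split_ifs <;> omega
  omega

end Counting
section Chains

variable {n : ℕ} {w : ℕ → Bool}

lemma covers_swap {M M' : Edge w → ℕ} (hcov : Covers w (IsDecLabel n w) M M') :
    ∃ el er : Edge w, el.1.2 < er.1.2 ∧ M el < M er ∧
      M' = (fun e => if e = el then M er else if e = er then M el else M e) ∧
      ∀ r : Edge w, el.1.2 < r.1.2 → r.1.2 < er.1.2 → ¬(M el < M r ∧ M r < M er) := by
  obtain ⟨hPM, hPM', el, er, hsr, hagree, hlt, h1, h2, hblock⟩ := hcov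
  have hkey : el.1.2 < er.1.2 := by
    have h3 := edge_lt er; unfold SRight at hsr; omega
  refine ⟨el, er, hkey, hlt, ?_, ?_⟩
  · funext e
    by_cases he1 : e = el
    · subst he1; simp [h2]
    by_cases he2 : e = er
    · subst he2; simp [he1, h1]
    · simp [he1, he2, hagree e he1 he2]
  · intro r hk1 hk2 ⟨hv1, hv2⟩
    have hrel : r ≠ el := by intro h; subst h; omega
    have hrer : r ≠ er := by intro h; subst h; omega
    have hMr : M' r = M r := (hagree r hrel hrer).symm
    rcases edge_trichotomy r el with h | h | h | h | h
    · exact hrel h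
    · -- InPath r el : el ancestor of r : r.1.2 ≤ el.1.2
      have := h.2; omega
    · -- InPath el r : r ancestor of el
      have := hPM'.2 el r h (fun hh => hrel hh.symm)
      rw [h2, hMr] at this; omega
    · -- SRight r el
      rcases edge_trichotomy r er with h' | h' | h' | h' | h'
      · exact hrer h'
      · -- InPath r er : er ancestor of r: use M' decreasing
        have := hPM'.2 r er h' hrer
        rw [h1, hMr] at this; omega
      · -- InPath er r : r ancestor of er: r.1.2 ≥ er.1.2
        have := h'.2; omega
      · -- SRight r er: r.1.1 > er.1.2 but r.1.2 < er.1.2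
        have := edge_lt r; unfold SRight at h'; omega
      · -- SRight er r: blocked
        exact hblock ⟨r, h, h', le_of_lt hv1, le_of_lt hv2⟩
    · -- SRight el r : r.1.2 < el.1.1 < el.1.2
      have := edge_lt el; unfold SRight at h; omega

lemma covers_inv [Fintype (Edge w)] {M M' : Edge w → ℕ}
    (hcov : Covers w (IsDecLabel n w) M M') : invNum w M = invNum w M' + 1 := by
  obtain ⟨el, er, hkey, hval, hM', hmid⟩ := covers_swap hcov
  rw [hM']
  exact invNum_swap M hcov.1.1.2.1 el er hkey hval hmid

lemma covers_Fcnt' [Fintype (Edge w)] {M M' : Edge w → ℕ}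
    (hcov : Covers w (IsDecLabel n w) M M') (s v : ℕ) :
    Fcnt w M s v ≤ Fcnt w M' s v := by
  obtain ⟨el, er, hkey, hval, hM', hmid⟩ := covers_swap hcov
  rw [hM']
  exact Fcnt_swap M el er hkey hval s v

lemma chain_prop {α : Sort*} {r : α → α → Prop} {Q : α → Prop}
    (hr : ∀ x y, r x y → Q y) :
    ∀ {p : ℕ} {a b : α}, ChainLen r p a b → Q a → Q b := by
  intro p
  induction p with
  | zero => intro a b h hQ; rw [ChainLen] at h; exact h ▸ hQ
  | succ p ih =>
    intro a b h hQ
    obtain ⟨c, hrc, hch⟩ := h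
    exact ih hch (hr _ _ hrc)

lemma chain_inv [Fintype (Edge w)] :
    ∀ {p : ℕ} {M M' : Edge w → ℕ},
      ChainLen (Covers w (IsDecLabel n w)) p M M' →
      invNum w M = invNum w M' + p ∧ ∀ s v, Fcnt w M s v ≤ Fcnt w M' s v := by
  intro p
  induction p with
  | zero =>
    intro M M' h; rw [ChainLen] at h; subst h; exact ⟨rfl, fun _ _ => le_refl _⟩
  | succ p ih =>
    intro M M' h
    obtain ⟨c, hrc, hch⟩ := h
    obtain ⟨h1, h2⟩ := ih hch
    refine ⟨?_, fun s v => le_trans (covers_Fcnt' hrc s v) (h2 s v)⟩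
    rw [covers_inv hrc, h1]; ring

end Chains
section Bruhat

variable {n : ℕ} {w : ℕ → Bool} [Fintype (Edge w)]

lemma Fcnt_swap_eq (M : Edge w → ℕ) (p q : Edge w) (hpq : p.1.2 < q.1.2) (hval : M p < M q)
    (s v : ℕ) :
    Fcnt w (fun e => if e = p then M q else if e = q then M p else M e) s v =
      Fcnt w M s v + (if p.1.2 ≤ s ∧ s < q.1.2 ∧ M p < v ∧ v ≤ M q then 1 else 0) := by
  classical
  set M' : Edge w → ℕ := fun e => if e = p then M q else if e = q then M p else M e with hM'
  have hpqne : p ≠ q := by intro h; subst h; omega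
  rw [Fcnt_eq_sum, Fcnt_eq_sum]
  rw [sum_split_pq hpqne (fun e => if e.1.2 ≤ s ∧ v ≤ M e then 1 else 0),
    sum_split_pq hpqne (fun e => if e.1.2 ≤ s ∧ v ≤ M' e then 1 else 0)]
  have hrest : (∑ e ∈ Finset.univ \ ({p, q} : Finset (Edge w)), if e.1.2 ≤ s ∧ v ≤ M' e then 1 else 0)
      = ∑ e ∈ Finset.univ \ ({p, q} : Finset (Edge w)), if e.1.2 ≤ s ∧ v ≤ M e then 1 else 0 := by
    apply Finset.sum_congr rfl
    intro e he
    obtain ⟨hep, heq⟩ := mem_sdiff_pq he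
    simp [hM', hep, heq]
  rw [hrest]
  have h1 : M' p = M q := by simp [hM']
  have h2 : M' q = M p := by simp [hM', hpqne.symm]
  rw [h1, h2]
  split_ifs <;> omega

/-- One step towards `x` from `y`: find `y'` with one fewer coinversion, still
dominated by `x`. -/
lemma bruhat_step (x y : Edge w → ℕ) (hx : IsLabel n w x) (hy : IsLabel n w y)
    (hF : ∀ s v, Fcnt w y s v ≤ Fcnt w x s v) (hne : x ≠ y) :
    ∃ y' : Edge w → ℕ, IsLabel n w y' ∧ (∀ s v, Fcnt w y' s v ≤ Fcnt w x s v) ∧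
      invNum w y = invNum w y' + 1 := by
  classical
  -- the first (in key order) position where x and y differ
  have hDne : (Finset.univ.filter (fun e : Edge w => x e ≠ y e)).Nonempty := by
    have hex : ∃ e : Edge w, x e ≠ y e := by
      by_contra hcon
      push_neg at hcon
      exact hne (funext hcon)
    obtain ⟨e0, he0⟩ := hex
    exact ⟨e0, Finset.mem_filter.2 ⟨Finset.mem_univ _, he0⟩⟩
  obtain ⟨p, hpD, hpmin⟩ := Finset.exists_min_image _ (fun e : Edge w => e.1.2) hDne
  have hpD' : x p ≠ y p := (Finset.mem_filter.1 hpD).2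
  have hprefix : ∀ e : Edge w, e.1.2 < p.1.2 → x e = y e := by
    intro e he
    by_contra hce
    have := hpmin e (Finset.mem_filter.2 ⟨Finset.mem_univ e, hce⟩)
    omega
  -- decomposition of Fcnt
  have identity1 : ∀ (z : Edge w → ℕ) (s u : ℕ), p.1.2 ≤ s →
      Fcnt w z s u = (if u ≤ z p then 1 else 0)
        + ((∑ e ∈ Finset.univ.erase p, if e.1.2 < p.1.2 ∧ u ≤ z e then 1 else 0)
          + (∑ e ∈ Finset.univ.erase p, if p.1.2 < e.1.2 ∧ e.1.2 ≤ s ∧ u ≤ z e then 1 else 0)) := by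
    intro z s u hps
    rw [Fcnt_eq_sum]
    rw [← Finset.sum_erase_add _ _ (Finset.mem_univ p)]
    rw [← Finset.sum_add_distrib]
    have : (if p.1.2 ≤ s ∧ u ≤ z p then 1 else 0) = (if u ≤ z p then 1 else 0) := by
      split_ifs <;> omega
    rw [this]
    rw [add_comm]
    congr 1
    apply Finset.sum_congr rfl
    intro e he
    have hep : e ≠ p := Finset.mem_erase.1 he |>.1
    have hkey : e.1.2 ≠ p.1.2 := fun h => hep (key_injective h)
    split_ifs <;> omega
  -- prefix parts agree
  have hA : ∀ u, (∑ e ∈ Finset.univ.erase p, if e.1.2 < p.1.2 ∧ u ≤ y e then 1 else 0)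
      = ∑ e ∈ Finset.univ.erase p, if e.1.2 < p.1.2 ∧ u ≤ x e then 1 else 0 := by
    intro u
    apply Finset.sum_congr rfl
    intro e _
    by_cases h : e.1.2 < p.1.2
    · rw [hprefix e h]
    · rw [if_neg (by tauto), if_neg (by tauto)]
  -- y p < x p
  have hyp : y p < x p := by
    have h1 := identity1 y p.1.2 (y p) (le_refl _)
    have h2 := identity1 x p.1.2 (y p) (le_refl _)
    have h3 := hF p.1.2 (y p)
    have hB0 : ∀ (z : Edge w → ℕ),
        (∑ e ∈ Finset.univ.erase p, if p.1.2 < e.1.2 ∧ e.1.2 ≤ p.1.2 ∧ y p ≤ z e then 1 else 0) = 0 := by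
      intro z
      apply Finset.sum_eq_zero
      intro e _
      rw [if_neg (by omega)]
    rw [h1, h2, hB0, hB0, hA (y p)] at h3
    have hle : y p ≤ x p := by
      by_contra hcon
      push_neg at hcon
      rw [if_pos (le_refl _), if_neg (by omega)] at h3
      omega
    omega
  set b := x p with hb
  -- the swap partner: minimal key among edges past p with y-value in (y p, b]
  have hTne : (Finset.univ.filter (fun e : Edge w => p.1.2 < e.1.2 ∧ y p < y e ∧ y e ≤ b)).Nonempty := by
    have hb1 : 1 ≤ b := (hx.1 p).1
    have hb2 : b ≤ n := (hx.1 p).2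
    obtain ⟨eb, heb⟩ := hy.2.2 b hb1 hb2
    refine ⟨eb, Finset.mem_filter.2 ⟨Finset.mem_univ _, ?_, by omega, by omega⟩⟩
    rcases lt_trichotomy eb.1.2 p.1.2 with h | h | h
    · exfalso
      have hxeb : x eb = b := by rw [hprefix eb h]; exact heb
      have hebp : eb = p := hx.2.1 (by rw [hxeb, hb])
      rw [hebp] at h; omega
    · exfalso
      have hebp : eb = p := key_injective h
      rw [hebp] at heb; omega
    · exact h
  obtain ⟨q, hqT, hqmin⟩ := Finset.exists_min_image _ (fun e : Edge w => e.1.2) hTne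
  obtain ⟨-, hq1, hq2, hq3⟩ := Finset.mem_filter.1 hqT
  have hnoT : ∀ e : Edge w, e.1.2 < q.1.2 → p.1.2 < e.1.2 → ¬(y p < y e ∧ y e ≤ b) := by
    intro e he hpe hcon
    have := hqmin e (Finset.mem_filter.2 ⟨Finset.mem_univ _, hpe, hcon.1, hcon.2⟩)
    omega
  set y' : Edge w → ℕ := fun e => if e = p then y q else if e = q then y p else y e with hy'
  have hy'label : IsLabel n w y' := by
    have hcomp : y' = y ∘ (Equiv.swap p q) := by
      funext e
      by_cases h1 : e = p
      · subst h1; simp [hy', Equiv.swap_apply_left]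
      by_cases h2 : e = q
      · subst h2; simp [hy', h1, Equiv.swap_apply_right]
      · simp [hy', h1, h2, Equiv.swap_apply_of_ne_of_ne h1 h2]
    rw [hcomp]
    refine ⟨fun e => hy.1 _, hy.2.1.comp (Equiv.injective _), fun v hv1 hv2 => ?_⟩
    obtain ⟨e, he⟩ := hy.2.2 v hv1 hv2
    exact ⟨Equiv.swap p q e, by simpa [Equiv.swap_apply_self] using he⟩
  refine ⟨y', hy'label, ?_, ?_⟩
  · -- Fcnt y' ≤ Fcnt x
    intro s v
    have heq := Fcnt_swap_eq y p q hq1 hq2 s v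
    rw [hy']
    rw [heq]
    by_cases hwin : p.1.2 ≤ s ∧ s < q.1.2 ∧ y p < v ∧ v ≤ y q
    · rw [if_pos hwin]
      obtain ⟨hw1, hw2, hw3, hw4⟩ := hwin
      -- need Fcnt y s v + 1 ≤ Fcnt x s v
      have i1y := identity1 y s v hw1
      have i1x := identity1 x s v hw1
      have i2y := identity1 y s (b+1) hw1
      have i2x := identity1 x s (b+1) hw1
      have hvb : v ≤ b := by omega
      -- B_y v = B_y (b+1)
      have hBy : (∑ e ∈ Finset.univ.erase p, if p.1.2 < e.1.2 ∧ e.1.2 ≤ s ∧ v ≤ y e then 1 else 0)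
          = ∑ e ∈ Finset.univ.erase p, if p.1.2 < e.1.2 ∧ e.1.2 ≤ s ∧ b+1 ≤ y e then 1 else 0 := by
        apply Finset.sum_congr rfl
        intro e _
        by_cases hc : p.1.2 < e.1.2 ∧ e.1.2 ≤ s
        · have := hnoT e (by omega) hc.1
          split_ifs <;> omega
        · rw [if_neg (by tauto), if_neg (by tauto)]
      -- B_x (b+1) ≤ B_x v
      have hBx : (∑ e ∈ Finset.univ.erase p, if p.1.2 < e.1.2 ∧ e.1.2 ≤ s ∧ b+1 ≤ x e then 1 else 0)
          ≤ ∑ e ∈ Finset.univ.erase p, if p.1.2 < e.1.2 ∧ e.1.2 ≤ s ∧ v ≤ x e then 1 else 0 := by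
        apply Finset.sum_le_sum
        intro e _
        split_ifs <;> omega
      have hFb := hF s (b+1)
      rw [i2y, i2x, hA (b+1)] at hFb
      have hefb : (if b+1 ≤ y p then 1 else 0 : ℕ) = 0 := by rw [if_neg (by omega)]
      have hefb2 : (if b+1 ≤ x p then 1 else 0 : ℕ) = 0 := by rw [if_neg (by omega)]
      rw [hefb, hefb2] at hFb
      have hFv := hF s v
      have goal2 : Fcnt w y s v + 1 ≤ Fcnt w x s v := by
        rw [i1y, i1x, hA v]
        rw [if_neg (by omega), if_pos (by omega)]
        rw [hBy]
        omega
      omega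
    · rw [if_neg hwin]
      simpa using hF s v
  · -- invNum y = invNum y' + 1
    rw [hy']
    apply invNum_swap y hy.2.1 p q hq1 hq2
    intro r hr1 hr2 hcon
    exact hnoT r hr2 hr1 ⟨hcon.1, by omega⟩

/-- Dominance of prefix counts implies the coinversion number comparison,
with equality only for equal labels. -/
lemma bruhat_le : ∀ (k : ℕ) (x y : Edge w → ℕ), invNum w y = k →
    IsLabel n w x → IsLabel n w y → (∀ s v, Fcnt w y s v ≤ Fcnt w x s v) →
    invNum w x ≤ invNum w y ∧ (x ≠ y → invNum w x < invNum w y) := by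
  intro k
  induction k using Nat.strong_induction_on with
  | _ k ih =>
    intro x y hk hx hy hF
    by_cases hne : x = y
    · subst hne; exact ⟨le_refl _, fun h => absurd rfl h⟩
    · obtain ⟨y', hy'label, hy'F, hy'inv⟩ := bruhat_step x y hx hy hF hne
      have hlt : invNum w y' < k := by omega
      obtain ⟨h1, _⟩ := ih (invNum w y') hlt x y' rfl hx hy'label hy'F
      constructor
      · omega
      · intro _; omega

end Bruhat
section Rotation

variable {n : ℕ} {w : ℕ → Bool}

/-- The set of values that get rotated: `c = L li` together with all smaller values
sitting on edges strictly left of `li`. -/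
noncomputable def Sset (n : ℕ) (w : ℕ → Bool) (L : Edge w → ℕ) (li : Edge w) : Finset ℕ :=
  (Finset.Icc 1 n).filter
    (fun v => v = L li ∨ (v < L li ∧ ∃ e : Edge w, SRight w li e ∧ L e = v))

/-- The next element of `Sset` above `u`. -/
noncomputable def nxt (n : ℕ) (w : ℕ → Bool) (L : Edge w → ℕ) (li : Edge w) (u : ℕ) : ℕ :=
  sInf {x : ℕ | x ∈ Sset n w L li ∧ u < x}

/-- The rotation of `L` along `Sset`: the label of the minimal cover chain. -/
noncomputable def Rlab (n : ℕ) (w : ℕ → Bool) (L : Edge w → ℕ) (li : Edge w) : Edge w → ℕ :=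
  fun e => if e = li then 1
    else if L e ∈ Sset n w L li ∧ L e ≠ L li then nxt n w L li (L e) else L e

variable {L : Edge w → ℕ} {li : Edge w}

lemma mem_Sset (v : ℕ) (h1 : 1 ≤ v) (h2 : v ≤ n)
    (h : v = L li ∨ (v < L li ∧ ∃ e : Edge w, SRight w li e ∧ L e = v)) :
    v ∈ Sset n w L li :=
  Finset.mem_filter.2 ⟨Finset.mem_Icc.2 ⟨h1, h2⟩, h⟩

lemma S_le_c (hv : v ∈ Sset n w L li) : v ≤ L li := by
  rcases (Finset.mem_filter.1 hv).2 with h | h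
  · omega
  · omega

lemma S_ge_one (hv : v ∈ Sset n w L li) : 1 ≤ v :=
  (Finset.mem_Icc.1 (Finset.mem_filter.1 hv).1).1

lemma c_mem_S (hL : IsDecLabel n w L) : L li ∈ Sset n w L li :=
  Finset.mem_filter.2 ⟨Finset.mem_Icc.2 ⟨(hL.1.1 li).1, (hL.1.1 li).2⟩, Or.inl rfl⟩

lemma S_edge (hL : IsDecLabel n w L) (hv : v ∈ Sset n w L li) (hvc : v ≠ L li) :
    ∃ e : Edge w, SRight w li e ∧ L e = v := by
  rcases (Finset.mem_filter.1 hv).2 with h | h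
  · exact absurd h hvc
  · exact h.2

lemma nxt_spec (hL : IsDecLabel n w L) (hv : v ∈ Sset n w L li) (hvc : v ≠ L li) :
    nxt n w L li v ∈ Sset n w L li ∧ v < nxt n w L li v := by
  have hvc' : v < L li := lt_of_le_of_ne (S_le_c hv) hvc
  have hne : {x : ℕ | x ∈ Sset n w L li ∧ v < x}.Nonempty :=
    ⟨L li, c_mem_S hL, hvc'⟩
  exact Nat.sInf_mem hne

lemma nxt_le (hx : x ∈ Sset n w L li) (hvx : v < x) : nxt n w L li v ≤ x :=
  Nat.sInf_le ⟨hx, hvx⟩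

lemma nxt_le_c (hL : IsDecLabel n w L) (hv : v ∈ Sset n w L li) (hvc : v ≠ L li) :
    nxt n w L li v ≤ L li :=
  nxt_le (c_mem_S hL) (lt_of_le_of_ne (S_le_c hv) hvc)

/-- An edge with a small label not in `Sset` must be strictly right of `li`. -/
lemma not_in_S_right (hL : IsDecLabel n w L) (hleaf : li.1.2 = li.1.1 + 1)
    (e : Edge w) (hlt : L e < L li) (hnS : L e ∉ Sset n w L li) : SRight w e li := by
  have hne : e ≠ li := by intro h; subst h; omega
  rcases edge_trichotomy e li with h | h | h | h | h
  · exact absurd h hne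
  · -- InPath e li : li ancestor of e : e=li by leaf
    exact absurd (leaf_inpath hleaf h) hne
  · -- InPath li e : e ancestor of li
    have := hL.2 li e h (fun hh => hne hh.symm)
    omega
  · -- SRight e li
    exact h
  · -- SRight li e : e strictly left: then L e ∈ Sset
    exfalso
    apply hnS
    exact Finset.mem_filter.2 ⟨Finset.mem_Icc.2 ⟨(hL.1.1 e).1, (hL.1.1 e).2⟩,
      Or.inr ⟨hlt, e, h, rfl⟩⟩

/-- `312`-avoidance forces the edges of `Sset` values to appear in increasing key order. -/
lemma S_key_mono (hL : IsDecLabel n w L) (hAv : Avoid312 w L)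
    (e e' : Edge w) (he : SRight w li e) (he' : SRight w li e')
    (hlt : L e < L e') (hlt' : L e' < L li) : e.1.2 < e'.1.2 := by
  rcases edge_trichotomy e e' with h | h | h | h | h
  · subst h; omega
  · -- InPath e e' : e' ancestor of e
    have h2 := h.2
    have hne : e ≠ e' := by intro hh; subst hh; omega
    rcases lt_or_eq_of_le h2 with hh | hh
    · exact hh
    · exact absurd (edge_eq_iff_snd.2 hh) hne
  · -- InPath e' e : e ancestor of e'
    have := hL.2 e' e h (by intro hh; subst hh; omega)
    omega
  · -- SRight e e' : pattern (li, e, e')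
    exact absurd ⟨li, e, e', he, h, hlt, hlt'⟩ hAv
  · -- SRight e' e : e.1.2 < e'.1.1
    have := edge_lt e'
    unfold SRight at h
    omega

end Rotation
section ChainConstruction

variable {n : ℕ} {w : ℕ → Bool} {li : Edge w}

lemma sright_li_ne {e : Edge w} (h : SRight w li e) : e ≠ li :=
  fun hh => sright_irrefl li e (hh ▸ h) (hh ▸ h)

/-- Construction of the minimal chain from `L` to its rotation `Rlab`. -/
lemma chainR (hleaf : li.1.2 = li.1.1 + 1) :
    ∀ (c : ℕ) (L : Edge w → ℕ), IsDecLabel n w L → L li = c →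
      (1 : ℕ) ∈ Sset n w L li →
      ChainLen (Covers w (IsDecLabel n w)) ((Sset n w L li).card - 1) L (Rlab n w L li) := by
  intro c
  induction c using Nat.strong_induction_on with
  | _ c ih =>
    intro L hL hc h1S
    have hc1 : 1 ≤ c := hc ▸ (hL.1.1 li).1
    by_cases hcbase : c = 1
    · -- base case: S = {1}, R = L
      subst hcbase
      have hSsub : Sset n w L li = {1} := by
        apply Finset.eq_singleton_iff_unique_mem.2
        refine ⟨h1S, fun v hv => ?_⟩
        have := S_le_c hv
        have := S_ge_one hv
        omega
      have hRL : Rlab n w L li = L := by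
        funext e
        unfold Rlab
        by_cases he : e = li
        · subst he; rw [if_pos rfl, hc]
        · rw [if_neg he, if_neg ?_]
          rintro ⟨hmem, hne⟩
          have := S_le_c hmem
          have := S_ge_one hmem
          omega
      rw [hSsub, hRL]
      exact rfl
    · -- inductive step
      have hcgt : 1 < c := by omega
      set S := Sset n w L li with hS
      have hcS : c ∈ S := hc ▸ c_mem_S hL
      have h1ne : (1 : ℕ) ≠ c := by omega
      have hSe_ne : (S.erase c).Nonempty := ⟨1, Finset.mem_erase.2 ⟨h1ne, h1S⟩⟩
      set cm := (S.erase c).max' hSe_ne with hcm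
      have hcmS : cm ∈ S.erase c := Finset.max'_mem _ _
      have hcmS' : cm ∈ S := Finset.mem_erase.1 hcmS |>.2
      have hcmne : cm ≠ c := Finset.mem_erase.1 hcmS |>.1
      have hcmmax : ∀ v ∈ S.erase c, v ≤ cm := fun v hv => Finset.le_max' _ v hv
      have hcmlt : cm < c := lt_of_le_of_ne (hc ▸ S_le_c hcmS') hcmne
      have hcm1 : 1 ≤ cm := S_ge_one hcmS'
      obtain ⟨estar, hsr, hval⟩ := S_edge hL hcmS' (by rw [hc]; exact hcmne)
      have hene : estar ≠ li := sright_li_ne hsr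
      set L1 : Edge w → ℕ := fun e => if e = estar then c else if e = li then cm else L e with hL1
      have hL1estar : L1 estar = c := by simp [hL1]
      have hL1li : L1 li = cm := by simp [hL1, hene.symm]
      have hL1other : ∀ e : Edge w, e ≠ estar → e ≠ li → L1 e = L e := by
        intro e h1 h2; simp [hL1, h1, h2]
      -- L1 is a label
      have hL1lab : IsLabel n w L1 := by
        have hcomp : L1 = L ∘ (Equiv.swap estar li) := by
          funext e
          by_cases h1 : e = estar
          · subst h1; simp [hL1, Equiv.swap_apply_left, hc]
          by_cases h2 : e = li
          · subst h2; simp [hL1, h1, Equiv.swap_apply_right, hval]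
          · simp [hL1, h1, h2, Equiv.swap_apply_of_ne_of_ne h1 h2]
        rw [hcomp]
        refine ⟨fun e => hL.1.1 _, hL.1.2.1.comp (Equiv.injective _), fun v hv1 hv2 => ?_⟩
        obtain ⟨e, he⟩ := hL.1.2.2 v hv1 hv2
        exact ⟨Equiv.swap estar li e, by simpa [Equiv.swap_apply_self] using he⟩
      -- ancestors of estar have labels above c
      have hanc : ∀ e' : Edge w, InPath w estar e' → e' ≠ estar → e' ≠ li → c < L e' := by
        intro e' hip hne1 hne2
        have hlt : L estar < L e' := hL.2 estar e' hip (fun hh => hne1 hh.symm)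
        rcases edge_trichotomy e' li with h | h | h | h | h
        · exact absurd h hne2
        · exact absurd (leaf_inpath hleaf h) hne2
        · -- e' ancestor of li
          have := hL.2 li e' h (fun hh => hne2 hh.symm)
          omega
        · -- SRight e' li : e' right of li; but e' is an ancestor of estar which is left of li
          exfalso
          have h1 := hip.1
          have h2 := edge_lt estar
          have h3 := edge_lt li
          unfold SRight at h hsr
          omega
        · -- SRight li e' : e' strictly left of li
          rcases lt_trichotomy (L e') c with hh | hh | hh
          · exfalso
            have hmem : L e' ∈ S.erase c := by
              refine Finset.mem_erase.2 ⟨by omega, ?_⟩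
              rw [hS]
              exact Finset.mem_filter.2 ⟨Finset.mem_Icc.2 ⟨(hL.1.1 e').1, (hL.1.1 e').2⟩,
                Or.inr ⟨hc ▸ hh, e', h, rfl⟩⟩
            have := hcmmax _ hmem
            omega
          · exact absurd (hL.1.2.1 (hh.trans hc.symm)) hne2
          · exact hh
      -- L1 is decreasing
      have hL1dec : IsDecLabel n w L1 := by
        refine ⟨hL1lab, ?_⟩
        intro e e' hip hne
        by_cases he'1 : e' = estar
        · rw [he'1] at hip hne ⊢
          rw [hL1estar]
          have he2 : e ≠ li := by
            intro hh
            rw [hh] at hip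
            have h1 := hip.2
            have h2 := edge_lt estar
            unfold SRight at hsr
            omega
          by_cases he3 : e = estar
          · exact absurd he3 hne
          · rw [hL1other e he3 he2]
            have := hL.2 e estar hip hne
            omega
        by_cases he'2 : e' = li
        · rw [he'2] at hip hne
          exact absurd (leaf_inpath hleaf hip) hne
        rw [hL1other e' he'1 he'2]
        by_cases he1 : e = estar
        · rw [he1] at hip hne ⊢
          rw [hL1estar]
          exact hanc e' hip he'1 he'2
        by_cases he2 : e = li
        · rw [he2] at hip hne ⊢
          rw [hL1li]
          have := hL.2 li e' hip hne
          omega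
        · rw [hL1other e he1 he2]
          exact hL.2 e e' hip hne
      -- the cover L ⋖ L1
      have hcov : Covers w (IsDecLabel n w) L L1 := by
        refine ⟨hL, hL1dec, estar, li, hsr, ?_, ?_, ?_, ?_, ?_⟩
        · intro e h1 h2; exact (hL1other e h1 h2).symm
        · omega
        · rw [hL1li, hval]
        · rw [hL1estar, hc]
        · rintro ⟨ec, hec1, hec2, hec3, hec4⟩
          have hecs : ec ≠ estar := sright_ne hec1
          have hecli : ec ≠ li := sright_li_ne hec2
          have h5 : L ec ≠ cm := by
            intro hh; exact hecs (hL.1.2.1 (hh.trans hval.symm))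
          have h6 : L ec ≠ c := by
            intro hh; exact hecli (hL.1.2.1 (hh.trans hc.symm))
          have hmem : L ec ∈ S.erase c := by
            refine Finset.mem_erase.2 ⟨h6, ?_⟩
            rw [hS]
            refine Finset.mem_filter.2 ⟨Finset.mem_Icc.2 ⟨(hL.1.1 ec).1, (hL.1.1 ec).2⟩,
              Or.inr ⟨by rw [hc] at *; omega, ec, hec2, rfl⟩⟩
          have := hcmmax _ hmem
          rw [hval] at hec3
          rw [hc] at hec4
          omega
      -- Sset of L1 is S.erase c
      have hSL1 : Sset n w L1 li = S.erase c := by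
        ext v
        constructor
        · intro hv
          obtain ⟨hIcc, hor⟩ := Finset.mem_filter.1 hv
          rcases hor with h | h
          · rw [hL1li] at h; subst h; exact hcmS
          · rw [hL1li] at h
            obtain ⟨hvcm, e, he1, he2⟩ := h
            have he3 : e ≠ estar := by
              intro hh; rw [hh, hL1estar] at he2; omega
            have he4 : e ≠ li := sright_li_ne he1
            rw [hL1other e he3 he4] at he2
            refine Finset.mem_erase.2 ⟨by omega, ?_⟩
            rw [hS]
            exact Finset.mem_filter.2 ⟨hIcc, Or.inr ⟨by omega, e, he1, he2⟩⟩
        · intro hv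
          obtain ⟨hvc, hvS⟩ := Finset.mem_erase.1 hv
          have hvcm' : v ≤ cm := hcmmax v hv
          have hvlt : v < c := lt_of_le_of_ne (hc ▸ S_le_c hvS) hvc
          obtain ⟨e, he1, he2⟩ := S_edge hL hvS (hc ▸ hvc)
          have hIcc : v ∈ Finset.Icc 1 n := (Finset.mem_filter.1 hvS).1
          rcases eq_or_lt_of_le hvcm' with hh | hh
          · exact Finset.mem_filter.2 ⟨hIcc, Or.inl (by rw [hL1li]; omega)⟩
          · have he3 : e ≠ estar := by
              intro hhh; rw [hhh, hval] at he2; omega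
            have he4 : e ≠ li := sright_li_ne he1
            refine Finset.mem_filter.2 ⟨hIcc, Or.inr ⟨by rw [hL1li]; omega, e, he1, ?_⟩⟩
            rw [hL1other e he3 he4]; exact he2
      -- 1 ∈ Sset L1
      have h1S1 : (1 : ℕ) ∈ Sset n w L1 li := by
        rw [hSL1]; exact Finset.mem_erase.2 ⟨h1ne, h1S⟩
      -- Rlab L1 = Rlab L
      have hnxtcm : nxt n w L li cm = c := by
        have hspec := nxt_spec hL hcmS' (by rw [hc]; exact hcmne)
        have h1 : nxt n w L li cm ≤ c := nxt_le hcS hcmlt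
        rcases lt_or_eq_of_le h1 with hh | hh
        · exfalso
          have hmem : nxt n w L li cm ∈ S.erase c := Finset.mem_erase.2 ⟨by omega, hspec.1⟩
          have := hcmmax _ hmem
          omega
        · exact hh
      have hRR : Rlab n w L1 li = Rlab n w L li := by
        funext e
        unfold Rlab
        by_cases he1 : e = li
        · simp [he1]
        by_cases he2 : e = estar
        · rw [he2, if_neg hene, if_neg hene]
          rw [hL1estar, hL1li, hval]
          rw [if_neg ?_, if_pos ⟨hcmS', by rw [hc]; exact hcmne⟩]
          · rw [hnxtcm]
          · rintro ⟨hmem, -⟩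
            rw [hSL1] at hmem
            exact (Finset.mem_erase.1 hmem).1 rfl
        · rw [if_neg he1, if_neg he1, hL1other e he2 he1, hL1li]
          set u := L e with hu
          by_cases hc3 : u ∈ S ∧ u ≠ c
          · have hucm : u ≠ cm := by
              intro hh
              exact he2 (hL.1.2.1 (hh.trans hval.symm))
            have hultcm : u < cm :=
              lt_of_le_of_ne (hcmmax u (Finset.mem_erase.2 ⟨hc3.2, hc3.1⟩)) hucm
            rw [if_pos ?_, if_pos ⟨hc3.1, by rw [hc]; exact hc3.2⟩]
            · -- nxt L1 u = nxt L u
              have hn1 : nxt n w L1 li u ∈ Sset n w L1 li ∧ u < nxt n w L1 li u := by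
                apply nxt_spec hL1dec
                · rw [hSL1]; exact Finset.mem_erase.2 ⟨by omega, hc3.1⟩
                · rw [hL1li]; omega
              have hn2 : nxt n w L li u ∈ S ∧ u < nxt n w L li u :=
                nxt_spec hL hc3.1 (by rw [hc]; exact hc3.2)
              have hge : nxt n w L li u ≤ nxt n w L1 li u := by
                apply nxt_le
                · rw [hSL1] at hn1
                  exact (Finset.mem_erase.1 hn1.1).2
                · exact hn1.2
              have hle2 : nxt n w L1 li u ≤ nxt n w L li u := by
                apply nxt_le
                · rw [hSL1]
                  refine Finset.mem_erase.2 ⟨?_, hn2.1⟩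
                  have : nxt n w L li u ≤ cm := nxt_le hcmS' hultcm
                  omega
                · exact hn2.2
              omega
            · rw [hSL1]
              exact ⟨Finset.mem_erase.2 ⟨by omega, hc3.1⟩, by omega⟩
          · rw [if_neg ?_, if_neg (by rw [hc]; exact hc3)]
            rintro ⟨hmem, hne⟩
            rw [hSL1] at hmem
            exact hc3 ⟨(Finset.mem_erase.1 hmem).2, (Finset.mem_erase.1 hmem).1⟩
      -- assemble
      have hcard : S.card - 1 = ((Sset n w L1 li).card - 1) + 1 := by
        rw [hSL1, Finset.card_erase_of_mem hcS]
        have h2 : 1 < S.card := Finset.one_lt_card.2 ⟨1, h1S, c, hcS, h1ne⟩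
        omega
      rw [hcard, ← hRR]
      exact ⟨L1, hcov, ih cm hcmlt L1 hL1dec hL1li h1S1⟩

end ChainConstruction
section RProperties

variable {n : ℕ} {w : ℕ → Bool} {li : Edge w} {L : Edge w → ℕ}

lemma Rlab_li : Rlab n w L li li = 1 := by simp [Rlab]

lemma Rlab_mem (e : Edge w) (he : e ≠ li) (hmem : L e ∈ Sset n w L li ∧ L e ≠ L li) :
    Rlab n w L li e = nxt n w L li (L e) := by
  simp only [Rlab]; rw [if_neg he, if_pos hmem]

lemma Rlab_other (e : Edge w) (he : e ≠ li) (hmem : ¬(L e ∈ Sset n w L li ∧ L e ≠ L li)) :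
    Rlab n w L li e = L e := by
  simp only [Rlab]; rw [if_neg he, if_neg hmem]

/-- The rotation `Rlab` stays dominated by any `M` with `M li = 1` dominating `L`. -/
lemma Fcnt_R_le [Fintype (Edge w)] (hL : IsDecLabel n w L) (hAv : Avoid312 w L)
    (hleaf : li.1.2 = li.1.1 + 1)
    (M : Edge w → ℕ) (hM1 : M li = 1)
    (hMF : ∀ s v, Fcnt w L s v ≤ Fcnt w M s v) (s v : ℕ) :
    Fcnt w (Rlab n w L li) s v ≤ Fcnt w M s v := by
  classical
  have hc1 : 1 ≤ L li := (hL.1.1 li).1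
  by_cases hex : ∃ e0 : Edge w, e0.1.2 ≤ s ∧ L e0 ∈ Sset n w L li ∧ L e0 ≠ L li ∧
      L e0 < v ∧ v ≤ nxt n w L li (L e0)
  · obtain ⟨e0, he0s, he0S, he0c, he0v, hv0⟩ := hex
    have hu1 : 1 ≤ L e0 := S_ge_one he0S
    have h2v : 2 ≤ v := by omega
    have hvc : v ≤ L li := le_trans hv0 (nxt_le_c hL he0S he0c)
    have he0li : e0 ≠ li := fun hh => he0c (by rw [hh])
    have hRe0 : Rlab n w L li e0 = nxt n w L li (L e0) := Rlab_mem e0 he0li ⟨he0S, he0c⟩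
    have hrest : ∀ e : Edge w, e ≠ e0 → e ≠ li →
        ((if e.1.2 ≤ s ∧ v ≤ Rlab n w L li e then 1 else 0 : ℕ)
          = if e.1.2 ≤ s ∧ v ≤ L e then 1 else 0) := by
      intro e hne0 hneli
      by_cases hmem : L e ∈ Sset n w L li ∧ L e ≠ L li
      · have hR : Rlab n w L li e = nxt n w L li (L e) := Rlab_mem e hneli hmem
        have hnea : L e ≠ L e0 := fun hh => hne0 (hL.1.2.1 hh)
        rcases lt_or_gt_of_ne hnea with hlt | hgt
        · have h3 : nxt n w L li (L e) ≤ L e0 := nxt_le he0S hlt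
          rw [hR]; split_ifs <;> omega
        · have h3 : nxt n w L li (L e0) ≤ L e := nxt_le hmem.1 hgt
          have h4 : L e < nxt n w L li (L e) := (nxt_spec hL hmem.1 hmem.2).2
          rw [hR]; split_ifs <;> omega
      · rw [Rlab_other e hneli hmem]
    by_cases hlis : li.1.2 ≤ s
    · refine le_trans ?_ (hMF s v)
      rw [Fcnt_eq_sum, Fcnt_eq_sum,
        sum_split_pq he0li (fun e => if e.1.2 ≤ s ∧ v ≤ Rlab n w L li e then 1 else 0),
        sum_split_pq he0li (fun e => if e.1.2 ≤ s ∧ v ≤ L e then 1 else 0)]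
      have hrest2 : (∑ e ∈ Finset.univ \ ({e0, li} : Finset (Edge w)),
            if e.1.2 ≤ s ∧ v ≤ Rlab n w L li e then 1 else 0)
          = ∑ e ∈ Finset.univ \ ({e0, li} : Finset (Edge w)),
            if e.1.2 ≤ s ∧ v ≤ L e then 1 else 0 := by
        apply Finset.sum_congr rfl
        intro e he
        obtain ⟨h1, h2⟩ := mem_sdiff_pq he
        exact hrest e h1 h2
      rw [hrest2, hRe0, Rlab_li]
      split_ifs <;> omega
    · push_neg at hlis
      have hEclaim : ∀ e : Edge w, s < e.1.2 → e.1.2 ≤ li.1.2 → e ≠ li → v ≤ L e := by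
        intro e hse hel hneli
        by_contra hvL
        push_neg at hvL
        have hlelic : L e < L li := by omega
        by_cases hmem : L e ∈ Sset n w L li ∧ L e ≠ L li
        · rcases lt_trichotomy (L e) (L e0) with h | h | h
          · obtain ⟨ee, hee1, hee2⟩ := S_edge hL hmem.1 hmem.2
            obtain ⟨ee0, hee01, hee02⟩ := S_edge hL he0S he0c
            have heq : ee = e := hL.1.2.1 hee2
            have heq0 : ee0 = e0 := hL.1.2.1 hee02
            rw [heq] at hee1; rw [heq0] at hee01
            have := S_key_mono hL hAv e e0 hee1 hee01 h
              (lt_of_le_of_ne (S_le_c he0S) he0c)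
            omega
          · have : e = e0 := hL.1.2.1 h
            rw [this] at hse; omega
          · have := nxt_le hmem.1 h
            omega
        · have hnec : L e ≠ L li := fun hh => hneli (hL.1.2.1 hh)
          have hnotS : L e ∉ Sset n w L li := fun hh => hmem ⟨hh, hnec⟩
          have h5 := not_in_S_right hL hleaf e hlelic hnotS
          unfold SRight at h5
          have := edge_lt e
          omega
      -- Step A : Fcnt R s v ≤ Fcnt L s v + 1
      have hstepA : Fcnt w (Rlab n w L li) s v ≤ Fcnt w L s v + 1 := by
        rw [Fcnt_eq_sum, Fcnt_eq_sum,
          sum_split_pq he0li (fun e => if e.1.2 ≤ s ∧ v ≤ Rlab n w L li e then 1 else 0),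
          sum_split_pq he0li (fun e => if e.1.2 ≤ s ∧ v ≤ L e then 1 else 0)]
        have hrest2 : (∑ e ∈ Finset.univ \ ({e0, li} : Finset (Edge w)),
              if e.1.2 ≤ s ∧ v ≤ Rlab n w L li e then 1 else 0)
            = ∑ e ∈ Finset.univ \ ({e0, li} : Finset (Edge w)),
              if e.1.2 ≤ s ∧ v ≤ L e then 1 else 0 := by
          apply Finset.sum_congr rfl
          intro e he
          obtain ⟨h1, h2⟩ := mem_sdiff_pq he
          exact hrest e h1 h2
        rw [hrest2, hRe0, Rlab_li]
        split_ifs <;> omega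
      -- Step B : Fcnt L s v + 1 ≤ Fcnt M s v
      have hsplit : ∀ z : Edge w → ℕ, Fcnt w z li.1.2 v = Fcnt w z s v
          + ∑ e : Edge w, (if s < e.1.2 ∧ e.1.2 ≤ li.1.2 ∧ v ≤ z e then 1 else 0) := by
        intro z
        rw [Fcnt_eq_sum, Fcnt_eq_sum, ← Finset.sum_add_distrib]
        apply Finset.sum_congr rfl
        intro e _
        split_ifs <;> omega
      have hT : (∑ e : Edge w, if s < e.1.2 ∧ e.1.2 ≤ li.1.2 ∧ v ≤ L e then 1 else 0)
          = ∑ e : Edge w, if s < e.1.2 ∧ e.1.2 ≤ li.1.2 then 1 else 0 := by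
        apply Finset.sum_congr rfl
        intro e _
        by_cases hcond : s < e.1.2 ∧ e.1.2 ≤ li.1.2
        · by_cases heli : e = li
          · rw [heli]
            split_ifs <;> omega
          · have := hEclaim e hcond.1 hcond.2 heli
            rw [if_pos ⟨hcond.1, hcond.2, this⟩, if_pos hcond]
        · rw [if_neg (by tauto), if_neg hcond]
      have hTM : (∑ e : Edge w, if s < e.1.2 ∧ e.1.2 ≤ li.1.2 ∧ v ≤ M e then 1 else 0) + 1
          ≤ ∑ e : Edge w, if s < e.1.2 ∧ e.1.2 ≤ li.1.2 then 1 else 0 := by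
        rw [← Finset.sum_erase_add _ _ (Finset.mem_univ li),
          ← Finset.sum_erase_add _ _ (Finset.mem_univ li)]
        have h1 : (if s < li.1.2 ∧ li.1.2 ≤ li.1.2 ∧ v ≤ M li then 1 else 0 : ℕ) = 0 := by
          rw [hM1]; split_ifs <;> omega
        have h2 : (if s < li.1.2 ∧ li.1.2 ≤ li.1.2 then 1 else 0 : ℕ) = 1 := by
          rw [if_pos ⟨hlis, le_refl _⟩]
        rw [h1, h2]
        have h3 : (∑ e ∈ Finset.univ.erase li, if s < e.1.2 ∧ e.1.2 ≤ li.1.2 ∧ v ≤ M e then 1 else 0)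
            ≤ ∑ e ∈ Finset.univ.erase li, if s < e.1.2 ∧ e.1.2 ≤ li.1.2 then 1 else 0 := by
          apply Finset.sum_le_sum
          intro e _
          split_ifs <;> omega
        omega
      have hB := hMF li.1.2 v
      have hsL := hsplit L
      have hsM := hsplit M
      omega
  · push_neg at hex
    refine le_trans ?_ (hMF s v)
    rw [Fcnt_eq_sum, Fcnt_eq_sum]
    apply Finset.sum_le_sum
    intro e _
    by_cases he : e = li
    · rw [he, Rlab_li]
      split_ifs <;> omega
    · by_cases hmem : L e ∈ Sset n w L li ∧ L e ≠ L li
      · rw [Rlab_mem e he hmem]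
        by_cases h1 : e.1.2 ≤ s ∧ v ≤ nxt n w L li (L e)
        · have hvL : v ≤ L e := by
            by_contra hvL
            push_neg at hvL
            exact absurd h1.2 (by
              have := hex e h1.1 hmem.1 hmem.2 hvL
              omega)
          rw [if_pos h1, if_pos ⟨h1.1, hvL⟩]
        · rw [if_neg h1]
          exact Nat.zero_le _
      · rw [Rlab_other e he hmem]

/-- The restriction of the rotation `Rlab` to edges other than `li` avoids `312`. -/
lemma Rlab_avoid (hL : IsDecLabel n w L) (hAv : Avoid312 w L)
    (hleaf : li.1.2 = li.1.1 + 1)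
    (E1 E2 E3 : Edge w) (h1 : E1 ≠ li) (h2 : E2 ≠ li) (h3 : E3 ≠ li)
    (hr1 : SRight w E1 E2) (hr2 : SRight w E2 E3)
    (hv1 : Rlab n w L li E2 < Rlab n w L li E3)
    (hv2 : Rlab n w L li E3 < Rlab n w L li E1) : False := by
  classical
  -- flip characterization
  have flip : ∀ e e' : Edge w, e ≠ li → e' ≠ li → L e < L e' →
      Rlab n w L li e' < Rlab n w L li e →
      (L e ∈ Sset n w L li ∧ L e ≠ L li ∧ SRight w li e) ∧
        (L e' ∉ Sset n w L li ∧ L e' < L li ∧ SRight w e' li) ∧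
        L e' < nxt n w L li (L e) := by
    intro e e' hne hne' hlt hRlt
    have hmem : L e ∈ Sset n w L li ∧ L e ≠ L li := by
      by_contra hmem
      rw [Rlab_other e hne hmem] at hRlt
      have : L e' ≤ Rlab n w L li e' := by
        by_cases hmem' : L e' ∈ Sset n w L li ∧ L e' ≠ L li
        · rw [Rlab_mem e' hne' hmem']
          exact le_of_lt (nxt_spec hL hmem'.1 hmem'.2).2
        · rw [Rlab_other e' hne' hmem']
      omega
    rw [Rlab_mem e hne hmem] at hRlt
    have hSRe : SRight w li e := by
      obtain ⟨ee, hee1, hee2⟩ := S_edge hL hmem.1 hmem.2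
      have : ee = e := hL.1.2.1 hee2
      rw [this] at hee1; exact hee1
    have hmem' : L e' ∉ Sset n w L li := by
      intro hmemS
      have hnec : L e' ≠ L li := fun hh => hne' (hL.1.2.1 hh)
      rw [Rlab_mem e' hne' ⟨hmemS, hnec⟩] at hRlt
      have ha : nxt n w L li (L e) ≤ L e' := nxt_le hmemS hlt
      have hb : L e' < nxt n w L li (L e') := (nxt_spec hL hmemS hnec).2
      omega
    have hRe' : Rlab n w L li e' = L e' := by
      apply Rlab_other e' hne'
      intro hh; exact hmem' hh.1
    rw [hRe'] at hRlt
    have hltc : L e' < L li := by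
      have := nxt_le_c hL hmem.1 hmem.2
      omega
    exact ⟨⟨hmem.1, hmem.2, hSRe⟩, ⟨hmem', hltc, not_in_S_right hL hleaf e' hltc hmem'⟩, hRlt⟩
  have hlt31 : L E3 < L E1 := by
    rcases lt_trichotomy (L E1) (L E3) with h | h | h
    · exfalso
      obtain ⟨⟨-, -, ha⟩, ⟨-, -, hb⟩, -⟩ := flip E1 E3 h1 h3 h hv2
      -- E3 right of li, E2 right of E3, E1 right of E2 ⇒ E1 right of li; contra li right of E1
      have c1 := edge_lt E2
      have c2 := edge_lt E3
      have c3 := edge_lt E1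
      unfold SRight at ha hb hr1 hr2
      omega
    · exact absurd (hL.1.2.1 h) (fun hh => by rw [hh] at hv2; omega)
    · exact h
  have hlt21 : L E2 < L E1 := by
    rcases lt_trichotomy (L E1) (L E2) with h | h | h
    · exfalso
      obtain ⟨⟨-, -, ha⟩, ⟨-, -, hb⟩, -⟩ := flip E1 E2 h1 h2 h (by omega)
      have c1 := edge_lt E2
      have c3 := edge_lt E1
      unfold SRight at ha hb hr1
      omega
    · exact absurd (hL.1.2.1 h) (fun hh => by rw [← hh] at hv1; omega)
    · exact h
  rcases lt_trichotomy (L E2) (L E3) with h | h | h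
  · exact hAv ⟨E1, E2, E3, hr1, hr2, h, hlt31⟩
  · exact absurd (hL.1.2.1 h) (fun hh => by rw [hh] at hv1; omega)
  · -- flip on (E3, E2)
    obtain ⟨⟨hS3, hne3c, hsr3⟩, ⟨hnS2, hlt2c, hsr2⟩, hlt2n⟩ := flip E3 E2 h3 h2 h hv1
    have hRE3 : Rlab n w L li E3 = nxt n w L li (L E3) := Rlab_mem E3 h3 ⟨hS3, hne3c⟩
    set sstar := nxt n w L li (L E3) with hsstar
    have hsS : sstar ∈ Sset n w L li ∧ L E3 < sstar := nxt_spec hL hS3 hne3c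
    have hsc : sstar ≤ L li := nxt_le_c hL hS3 hne3c
    -- E1 is strictly right of li
    have hE1r : SRight w E1 li := by
      have c1 := edge_lt E2
      unfold SRight at hsr2 hr1 ⊢
      omega
    -- R E1 = L E1 > sstar
    have hRE1 : Rlab n w L li E1 = L E1 := by
      apply Rlab_other E1 h1
      rintro ⟨hmem1, hne1c⟩
      obtain ⟨ee, hee1, hee2⟩ := S_edge hL hmem1 hne1c
      have heq : ee = E1 := hL.1.2.1 hee2
      rw [heq] at hee1
      exact sright_irrefl E1 li hE1r hee1
    rw [hRE1, hRE3] at hv2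
    rcases lt_or_eq_of_le hsc with hslt | hseq
    · -- sstar < L li : get its edge
      obtain ⟨estar, hes1, hes2⟩ := S_edge hL hsS.1 (by omega)
      refine hAv ⟨E1, E2, estar, hr1, ?_, by omega, by omega⟩
      have c1 := edge_lt li
      unfold SRight at hes1 hsr2 ⊢
      omega
    · -- sstar = L li : pattern with li itself
      refine hAv ⟨E1, E2, li, hr1, hsr2, by omega, by omega⟩

end RProperties
section DelWord

variable {w : ℕ → Bool} {a : ℕ}

lemma delWord_eq (w : ℕ → Bool) (a k : ℕ) : delWord w a k = w (shiftIdx a k) := by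
  unfold delWord shiftIdx
  split_ifs <;> rfl

lemma shiftIdx_mono {k l : ℕ} (h : k < l) : shiftIdx a k < shiftIdx a l := by
  unfold shiftIdx; split_ifs <;> omega

lemma shiftIdx_ne (k : ℕ) : shiftIdx a k ≠ a ∧ shiftIdx a k ≠ a + 1 := by
  unfold shiftIdx; split_ifs <;> omega

lemma shiftIdx_low (k : ℕ) (h : k < a) : shiftIdx a k = k := by
  unfold shiftIdx; rw [if_pos h]

lemma shiftIdx_high (k : ℕ) (h : a ≤ k) : shiftIdx a k = k + 2 := by
  unfold shiftIdx; rw [if_neg (by omega)]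

lemma bal_del_low (x y : ℕ) (hy : y ≤ a) : bal (delWord w a) x y = bal w x y := by
  have h : ∀ p : Bool, (Finset.Ico x y).filter (fun k => delWord w a k = p)
      = (Finset.Ico x y).filter (fun k => w k = p) := by
    intro p
    apply Finset.filter_congr
    intro k hk
    simp only [Finset.mem_Ico] at hk
    rw [delWord_eq, shiftIdx_low k (by omega)]
  unfold bal
  rw [h true, h false]

lemma bal_del_high (x y : ℕ) (hx : a ≤ x) :
    bal (delWord w a) x y = bal w (x + 2) (y + 2) := by
  unfold bal
  have himg : ∀ p : Bool, (Finset.Ico (x+2) (y+2)).filter (fun k => w k = p)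
      = ((Finset.Ico x y).filter (fun k => delWord w a k = p)).image (· + 2) := by
    intro p
    ext k
    simp only [Finset.mem_filter, Finset.mem_Ico, Finset.mem_image]
    constructor
    · rintro ⟨⟨h1, h2⟩, h3⟩
      refine ⟨k - 2, ⟨by omega, ?_⟩, by omega⟩
      rw [delWord_eq, shiftIdx_high (k-2) (by omega)]
      have : k - 2 + 2 = k := by omega
      rw [this]; exact h3
    · rintro ⟨l, ⟨⟨h1, h2⟩, h3⟩, h4⟩
      rw [delWord_eq, shiftIdx_high l (by omega)] at h3
      exact ⟨by omega, by rw [← h4]; exact h3⟩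
  rw [himg true, himg false,
    Finset.card_image_of_injective _ (add_left_injective 2),
    Finset.card_image_of_injective _ (add_left_injective 2)]

lemma bal_del_mid (hwa : w a = true) (hwa1 : w (a+1) = false) (x y : ℕ)
    (hx : x ≤ a) (hy : a ≤ y) :
    bal (delWord w a) x y = bal w x (y + 2) := by
  have h1 : bal (delWord w a) x y = bal (delWord w a) x a + bal (delWord w a) a y :=
    bal_split _ hx hy
  have h2 : bal w x (y+2) = bal w x a + (bal w a (a+1) + (bal w (a+1) (a+2) + bal w (a+2) (y+2))) := by
    rw [← bal_split w (by omega) (by omega), ← bal_split w (by omega) (by omega),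
      ← bal_split w hx (by omega)]
  rw [h1, bal_del_low x a (le_refl _), bal_del_high a y (le_refl _), h2,
    bal_single, bal_single, hwa, hwa1]
  simp

/-- chords of the deleted word lift to chords of `w`. -/
lemma chord_shift (hwa : w a = true) (hwa1 : w (a+1) = false) {p q : ℕ}
    (h : IsChord (delWord w a) p q) : IsChord w (shiftIdx a p) (shiftIdx a q) := by
  obtain ⟨hpq, htr, hfa, hbal, hpos⟩ := h
  refine ⟨shiftIdx_mono hpq, by rw [← delWord_eq w a p]; exact htr,
    by rw [← delWord_eq w a q]; exact hfa, ?_, ?_⟩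
  · -- balance zero
    by_cases hq : q < a
    · rw [shiftIdx_low p (by omega), shiftIdx_low q hq]
      rw [← bal_del_low (a := a) p (q+1) (by omega)]
      exact hbal
    · push_neg at hq
      by_cases hp : p < a
      · rw [shiftIdx_low p hp, shiftIdx_high q (by omega)]
        have : q + 2 + 1 = (q + 1) + 2 := by omega
        rw [this, ← bal_del_mid hwa hwa1 p (q+1) (by omega) (by omega)]
        exact hbal
      · push_neg at hp
        rw [shiftIdx_high p hp, shiftIdx_high q (by omega)]
        have : q + 2 + 1 = (q + 1) + 2 := by omega
        rw [this, ← bal_del_high p (q+1) hp]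
        exact hbal
  · -- positivity
    intro m hm1 hm2
    by_cases hq : q < a
    · rw [shiftIdx_low p (by omega)] at hm1 ⊢
      rw [shiftIdx_low q hq] at hm2
      rw [← bal_del_low (a := a) p m (by omega)]
      exact hpos m hm1 hm2
    · push_neg at hq
      by_cases hp : p < a
      · rw [shiftIdx_low p hp] at hm1 ⊢
        rw [shiftIdx_high q (by omega)] at hm2
        by_cases hma : m ≤ a
        · rw [← bal_del_low (a := a) p m hma]
          exact hpos m hm1 (by omega)
        · push_neg at hma
          by_cases hma1 : m = a + 1
          · subst hma1
            have hsplit : bal w p (a+1) = bal w p a + bal w a (a+1) :=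
              bal_split w (by omega) (by omega)
            rw [hsplit, bal_single, hwa]
            have hda : 0 ≤ bal (delWord w a) p a := by
              rcases eq_or_lt_of_le (show p ≤ a by omega) with hh | hh
              · rw [← hh]; unfold bal; simp
              · exact le_of_lt (hpos a hh (by omega))
            rw [← bal_del_low (a := a) p a (le_refl _)]
            simp only [if_true]
            omega
          · -- m ≥ a + 2
            have hm3 : a + 2 ≤ m := by omega
            have hsplit : bal w p m = bal w p (a+2) + bal w (a+2) m :=
              bal_split w (by omega) (by omega)
            have hsplit2 : bal w p (a+2) = bal w p a + (bal w a (a+1) + bal w (a+1) (a+2)) := by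
              rw [← bal_split w (by omega) (by omega), ← bal_split w (by omega) (by omega)]
            have hm2' : m - 2 ≤ q := by omega
            have hld : bal w (a+2) m = bal (delWord w a) a (m - 2) := by
              rw [bal_del_high a (m-2) (le_refl _)]
              congr 1
              omega
            have hdsplit : bal (delWord w a) p (m-2) =
                bal (delWord w a) p a + bal (delWord w a) a (m-2) :=
              bal_split _ (by omega) (by omega)
            have hdpos : 0 < bal (delWord w a) p (m - 2) := hpos (m-2) (by omega) hm2'
            rw [hsplit, hsplit2, bal_single, bal_single, hwa, hwa1,
              ← bal_del_low (a := a) p a (le_refl _), hld]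
            simp only [if_true, Bool.false_eq_true, if_false]
            omega
      · push_neg at hp
        rw [shiftIdx_high p hp] at hm1 ⊢
        rw [shiftIdx_high q (by omega)] at hm2
        have hm3 : m - 2 ≤ q := by omega
        have : bal w (p+2) m = bal (delWord w a) p (m-2) := by
          rw [bal_del_high p (m-2) hp]
          congr 1
          omega
        rw [this]
        exact hpos (m-2) (by omega) hm3

end DelWord

/-- with the data of the recursive formula (STATEMENT 4) — `L` a decreasing
label with label `1` on the leaf `ℓ 1`, `ℓ 2, …, ℓ m` the leaves strictly right of `ℓ 1`,
`Li i` the minimal-chain label with `1` on `ℓ i`, and `Lt i` the label of the tree with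
`ℓ i` deleted — if `L` is `312`-avoiding, then every `Lt i` is `312`-avoiding. -/
theorem stmt5 (n : ℕ) (hn : 1 ≤ n) (w : ℕ → Bool) (hw : IsDyckWord n w)
    (L : Edge w → ℕ) (hL : IsDecLabel n w L) (hAv : Avoid312 w L)
    (m : ℕ) (hm : 1 ≤ m) (ℓ : ℕ → Edge w)
    (hleaf : ∀ i, 1 ≤ i → i ≤ m → (ℓ i).1.2 = (ℓ i).1.1 + 1)
    (hinj : ∀ i j, 1 ≤ i → i ≤ m → 1 ≤ j → j ≤ m → ℓ i = ℓ j → i = j)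
    (hl1 : L (ℓ 1) = 1)
    (hord : ∀ i, 1 ≤ i → i < m → SRight w (ℓ (i + 1)) (ℓ i))
    (hall : ∀ e : Edge w, e.1.2 = e.1.1 + 1 → SRight w e (ℓ 1) →
      ∃ i, 2 ≤ i ∧ i ≤ m ∧ e = ℓ i)
    (Li : ℕ → Edge w → ℕ) (pi : ℕ → ℕ)
    (hLi : ∀ i, 1 ≤ i → i ≤ m → IsDecLabel n w (Li i) ∧ Li i (ℓ i) = 1 ∧
      ChainLen (Covers w (IsDecLabel n w)) (pi i) L (Li i) ∧
      ∀ (L'' : Edge w → ℕ) (p'' : ℕ), IsDecLabel n w L'' → L'' (ℓ i) = 1 →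
        ChainLen (Covers w (IsDecLabel n w)) p'' L L'' → pi i ≤ p'')
    (Lt : (i : ℕ) → Edge (delWord w (ℓ i).1.1) → ℕ)
    (hLt : ∀ i, 1 ≤ i → i ≤ m → ∀ (a b : ℕ)
      (h' : IsChord (delWord w (ℓ i).1.1) a b)
      (h : IsChord w (shiftIdx (ℓ i).1.1 a) (shiftIdx (ℓ i).1.1 b)),
      Lt i ⟨(a, b), h'⟩ = Li i ⟨(shiftIdx (ℓ i).1.1 a, shiftIdx (ℓ i).1.1 b), h⟩ - 1) :
    ∀ i, 1 ≤ i → i ≤ m → Avoid312 (delWord w (ℓ i).1.1) (Lt i) := by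
  intro i hi1 him
  haveI : Fintype (Edge w) := edgeFintype hw
  set li := ℓ i with hli
  have hleaf_li : li.1.2 = li.1.1 + 1 := hleaf i hi1 him
  obtain ⟨hLi_dec, hLi1, hchain, hmin⟩ := hLi i hi1 him
  -- ℓ j is strictly right of ℓ 1 for j ≥ 2
  have hright : ∀ j, 2 ≤ j → j ≤ m → SRight w (ℓ j) (ℓ 1) := by
    intro j
    induction j with
    | zero => omega
    | succ j ihj =>
      intro hj2 hjm
      by_cases hj1 : j = 1
      · subst hj1
        exact hord 1 (le_refl _) (by omega)
      · have h1 : SRight w (ℓ (j+1)) (ℓ j) := hord j (by omega) (by omega)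
        have h2 : SRight w (ℓ j) (ℓ 1) := ihj (by omega) (by omega)
        have := edge_lt (ℓ j)
        unfold SRight at h1 h2 ⊢
        omega
  -- 1 belongs to the rotation set
  have h1S : (1 : ℕ) ∈ Sset n w L li := by
    by_cases hci : L li = 1
    · exact mem_Sset 1 (le_refl _) hn (Or.inl hci.symm)
    · have hne : li ≠ ℓ 1 := fun hh => hci (by rw [hh, hl1])
      have hi2 : 2 ≤ i := by
        by_contra hcon
        push_neg at hcon
        have hieq : i = 1 := by omega
        exact hne (by rw [hli, hieq])
      refine mem_Sset 1 (le_refl _) hn (Or.inr ⟨?_, ℓ 1, hright i hi2 him, hl1⟩)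
      have := (hL.1.1 li).1
      omega
  -- the explicit minimal chain to the rotation label
  have hchainR := chainR hleaf_li (L li) L hL rfl h1S
  have hRdec : IsDecLabel n w (Rlab n w L li) :=
    chain_prop (fun x y hc => hc.2.1) hchainR hL
  have hple : pi i ≤ (Sset n w L li).card - 1 :=
    hmin (Rlab n w L li) ((Sset n w L li).card - 1) hRdec Rlab_li hchainR
  obtain ⟨hinvLi, hFLi⟩ := chain_inv hchain
  obtain ⟨hinvR, hFR⟩ := chain_inv hchainR
  have hFdom : ∀ s v, Fcnt w (Rlab n w L li) s v ≤ Fcnt w (Li i) s v :=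
    Fcnt_R_le hL hAv hleaf_li (Li i) hLi1 hFLi
  obtain ⟨hle, hstrict⟩ := bruhat_le (invNum w (Rlab n w L li)) (Li i)
    (Rlab n w L li) rfl hLi_dec.1 hRdec.1 hFdom
  have hLiR : Li i = Rlab n w L li := by
    by_contra hne
    have := hstrict hne
    omega
  -- transfer a 312 pattern of Lt i to one of Rlab
  have hwa : w li.1.1 = true := chord_true li.2
  have hwa1 : w (li.1.1 + 1) = false := by
    rw [← hleaf_li]; exact chord_false li.2
  set a := li.1.1 with ha
  rintro ⟨e1, e2, e3, hsr1, hsr2, hv1, hv2⟩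
  -- lift the three edges
  have hCh1 := chord_shift hwa hwa1 e1.2
  have hCh2 := chord_shift hwa hwa1 e2.2
  have hCh3 := chord_shift hwa hwa1 e3.2
  set E1 : Edge w := ⟨(shiftIdx a e1.1.1, shiftIdx a e1.1.2), hCh1⟩ with hE1
  set E2 : Edge w := ⟨(shiftIdx a e2.1.1, shiftIdx a e2.1.2), hCh2⟩ with hE2
  set E3 : Edge w := ⟨(shiftIdx a e3.1.1, shiftIdx a e3.1.2), hCh3⟩ with hE3
  have hEne : ∀ (E : Edge w) (k : ℕ), E.1.1 = shiftIdx a k → E ≠ li := by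
    intro E k hEk hcon
    have h1 := (shiftIdx_ne (a := a) k).1
    rw [hcon] at hEk
    exact h1 (by rw [← hEk])
  have hne1 : E1 ≠ li := hEne E1 e1.1.1 rfl
  have hne2 : E2 ≠ li := hEne E2 e2.1.1 rfl
  have hne3 : E3 ≠ li := hEne E3 e3.1.1 rfl
  -- label equations
  have heq1 : Lt i e1 = Li i E1 - 1 := hLt i hi1 him e1.1.1 e1.1.2 e1.2 hCh1
  have heq2 : Lt i e2 = Li i E2 - 1 := hLt i hi1 him e2.1.1 e2.1.2 e2.2 hCh2
  have heq3 : Lt i e3 = Li i E3 - 1 := hLt i hi1 him e3.1.1 e3.1.2 e3.2 hCh3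
  have hb1 : 1 ≤ Li i E1 := (hLi_dec.1.1 E1).1
  have hb2 : 1 ≤ Li i E2 := (hLi_dec.1.1 E2).1
  have hb3 : 1 ≤ Li i E3 := (hLi_dec.1.1 E3).1
  rw [heq2, heq3] at hv1
  rw [heq3, heq1] at hv2
  have hw1 : Li i E2 < Li i E3 := by omega
  have hw2 : Li i E3 < Li i E1 := by omega
  rw [hLiR] at hw1 hw2
  -- SRight transfers
  have hSR1 : SRight w E1 E2 := by
    have : shiftIdx a e2.1.2 < shiftIdx a e1.1.1 := shiftIdx_mono hsr1
    exact this
  have hSR2 : SRight w E2 E3 := by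
    have : shiftIdx a e3.1.2 < shiftIdx a e2.1.1 := shiftIdx_mono hsr2
    exact this
  exact Rlab_avoid hL hAv hleaf_li E1 E2 E3 hne1 hne2 hne3 hSR1 hSR2 hw1 hw2

end
end

section
/- Let T be a planar rooted tree with n edges and let L, L' be decreasing labels of T. If τ(L) ⋖ τ(L') in the sequence cover relation on integer sequences, then L ⋖ L' in the label cover relation. -/
noncomputable section

/-- The integer sequence `τ(L)` of a decreasing label `L` (1-based index `i`):
`τ_i = 2·#{j > n+1−i : e(j) strictly right of e(n+1−i)}
       + #{j > n+1−i : e(j) ∈ p(e(n+1−i))}`,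
where `e(k)` is the edge with label `k`. -/
def tauSeq (n : ℕ) (w : ℕ → Bool) (L : Edge w → ℕ) : ℕ → ℕ := fun i =>
  2 * Nat.card {q : Edge w × Edge w //
        L q.1 = n + 1 - i ∧ n + 1 - i < L q.2 ∧ SRight w q.2 q.1} +
    Nat.card {q : Edge w × Edge w //
        L q.1 = n + 1 - i ∧ n + 1 - i < L q.2 ∧ InPath w q.1 q.2}

/-- The cover relation on integer sequences (positions `1, …, n`): `τ' ` covers `τ` if
there are `1 ≤ i < j ≤ n` with `τ_j ≥ τ_i + 2`, `τ_k ≥ τ_j` for `i < k < j`,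
`τ'_i = τ_j − 2`, `τ'_j = τ_i`, and `τ'_k = τ_k` otherwise. -/
def SeqCover (n : ℕ) (τ τ' : ℕ → ℕ) : Prop :=
  ∃ i j : ℕ, 1 ≤ i ∧ i < j ∧ j ≤ n ∧
    τ i + 2 ≤ τ j ∧ (∀ k, i < k → k < j → τ j ≤ τ k) ∧
    τ' i = τ j - 2 ∧ τ' j = τ i ∧ ∀ k, k ≠ i → k ≠ j → τ' k = τ k

namespace Stmt11aux

lemma bal_add (w : ℕ → Bool) {a b c : ℕ} (hab : a ≤ b) (hbc : b ≤ c) :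
    bal w a c = bal w a b + bal w b c := by
  unfold bal
  rw [← Finset.Ico_union_Ico_eq_Ico hab hbc, Finset.filter_union, Finset.filter_union,
    Finset.card_union_of_disjoint, Finset.card_union_of_disjoint]
  · push_cast; ring
  · exact Finset.disjoint_filter_filter (Finset.Ico_disjoint_Ico_consecutive a b c)
  · exact Finset.disjoint_filter_filter (Finset.Ico_disjoint_Ico_consecutive a b c)

variable {w : ℕ → Bool}

lemma chord_close_unique {i j j' : ℕ} (h : IsChord w i j) (h' : IsChord w i j') : j = j' := by
  rcases lt_trichotomy j j' with hlt | he | hlt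
  · have h5 := h'.2.2.2.2 (j+1) (by have := h.1; omega) (by omega)
    have h6 := h.2.2.2.1; linarith
  · exact he
  · have h5 := h.2.2.2.2 (j'+1) (by have := h'.1; omega) (by omega)
    have h6 := h'.2.2.2.1; linarith

lemma chord_open_unique {i i' j : ℕ} (h : IsChord w i j) (h' : IsChord w i' j) : i = i' := by
  have key : ∀ a b : ℕ, IsChord w a j → IsChord w b j → a < b → False := by
    intro a b ha hb hab
    have h1 : bal w a j.succ = bal w a b + bal w b j.succ :=
      bal_add w (le_of_lt hab) (by have := hb.1; omega)
    have h2 := ha.2.2.2.2 b hab (le_of_lt hb.1)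
    have h3 := ha.2.2.2.1
    have h4 := hb.2.2.2.1
    simp only [Nat.succ_eq_add_one] at h1
    linarith
  rcases lt_trichotomy i i' with hlt | he | hlt
  · exact absurd (key i i' h h' hlt) (by simp)
  · exact he
  · exact absurd (key i' i h' h hlt) (by simp)

lemma chord_noncross {i j i' j' : ℕ} (h : IsChord w i j) (h' : IsChord w i' j')
    (h1 : i < i') (h2 : i' < j) (h3 : j < j') : False := by
  have e1 : bal w i (j+1) = bal w i i' + bal w i' (j+1) := bal_add w (by omega) (by omega)
  have e2 := h.2.2.2.2 i' h1 (by omega)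
  have e3 := h'.2.2.2.2 (j+1) (by omega) (by omega)
  have e4 := h.2.2.2.1
  linarith

lemma edge_olt (e : Edge w) : e.1.1 < e.1.2 := e.2.1

lemma edge_eq_of_open (e f : Edge w) (h : e.1.1 = f.1.1) : e = f := by
  have := chord_close_unique e.2 (h ▸ f.2)
  apply Subtype.ext
  exact Prod.ext h this

lemma edge_eq_of_close (e f : Edge w) (h : e.1.2 = f.1.2) : e = f := by
  have := chord_open_unique e.2 (h ▸ f.2)
  apply Subtype.ext
  exact Prod.ext this h

/-- trichotomy: equal, f strict ancestor of e, e strict ancestor of f, e right of f, f right of e -/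
lemma trichotomy (e f : Edge w) :
    e = f ∨ (InPath w e f ∧ e ≠ f) ∨ (InPath w f e ∧ e ≠ f) ∨ SRight w e f ∨ SRight w f e := by
  by_cases hef : e = f
  · exact Or.inl hef
  have ho : e.1.1 ≠ f.1.1 := fun hh => hef (edge_eq_of_open e f hh)
  have hc : e.1.2 ≠ f.1.2 := fun hh => hef (edge_eq_of_close e f hh)
  have hoc : e.1.1 ≠ f.1.2 := by
    intro hh; have q1 := e.2.2.1; have q2 := f.2.2.2.1; rw [hh] at q1; simp [q1] at q2
  have hco : e.1.2 ≠ f.1.1 := by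
    intro hh; have q1 := f.2.2.1; have q2 := e.2.2.2.1; rw [← hh] at q1; simp [q1] at q2
  rcases lt_or_gt_of_ne ho with h1 | h1
  · -- e.o < f.o
    rcases lt_or_gt_of_ne hco with h2 | h2
    · -- e.c < f.o ... f right of e
      exact Or.inr (Or.inr (Or.inr (Or.inr h2)))
    · -- f.o < e.c : f nested in e (else crossing)
      rcases lt_or_gt_of_ne hc with h3 | h3
      · exact absurd (chord_noncross e.2 f.2 h1 h2 h3) (by simp)
      · exact Or.inr (Or.inr (Or.inl ⟨⟨le_of_lt h1, le_of_lt h3⟩, hef⟩))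
  · -- f.o < e.o
    rcases lt_or_gt_of_ne hoc with h2 | h2
    · rcases lt_or_gt_of_ne hc with h3 | h3
      · exact Or.inr (Or.inl ⟨⟨le_of_lt h1, le_of_lt h3⟩, hef⟩)
      · exact absurd (chord_noncross f.2 e.2 h1 h2 h3) (by simp)
    · exact Or.inr (Or.inr (Or.inr (Or.inl h2)))

open scoped Classical

noncomputable def rOf (w : ℕ → Bool) [Fintype (Edge w)] (x : Edge w) : Finset (Edge w) :=
  Finset.univ.filter (fun y => SRight w y x)

noncomputable def aOf (w : ℕ → Bool) [Fintype (Edge w)] (x : Edge w) : Finset (Edge w) :=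
  Finset.univ.filter (fun y => y ≠ x ∧ InPath w x y)

noncomputable def psi (w : ℕ → Bool) [Fintype (Edge w)] (P : Finset (Edge w)) (x : Edge w) : ℕ :=
  2 * ((rOf w x).filter (fun y => y ∉ P)).card + (aOf w x).card

variable [Fintype (Edge w)]

lemma mem_rOf {x y : Edge w} : y ∈ rOf w x ↔ SRight w y x := by simp [rOf]

lemma mem_aOf {x y : Edge w} : y ∈ aOf w x ↔ y ≠ x ∧ InPath w x y := by simp [aOf]

lemma key (P : Finset (Edge w)) (x z : Edge w) (hxz : SRight w z x) (hzP : z ∉ P)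
    (hanc : ∀ y, y ≠ z → InPath w z y → y ∉ P) : psi w P z + 2 ≤ psi w P x := by
  classical
  have hxz' : (x.1).2 < (z.1).1 := hxz
  set A := (rOf w z).filter (fun y => y ∉ P) with hA
  set B := (rOf w x).filter (fun y => y ∉ P) with hB
  set C := (aOf w z) \ (aOf w x) with hC
  have hzo := edge_olt z
  have hxo := edge_olt x
  have hCB : C ⊆ B := by
    intro y hy
    rw [hC, Finset.mem_sdiff, mem_aOf, mem_aOf] at hy
    obtain ⟨⟨hyz, hip⟩, hnx⟩ := hy
    have hyP : y ∉ P := hanc y hyz hip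
    have hyo := edge_olt y
    obtain ⟨hip1, hip2⟩ := hip
    have hynex : y ≠ x := by
      intro hh; subst hh
      simp only [SRight] at hxz; omega
    have hnip : ¬ InPath w x y := fun hh => hnx ⟨hynex, hh⟩
    rcases trichotomy y x with h | ⟨h, hne⟩ | ⟨h, hne⟩ | h | h
    · exact absurd h hynex
    · -- InPath w y x : x strict ancestor of y
      obtain ⟨ha1, ha2⟩ := h
      simp only [SRight] at hxz; omega
    · exact absurd h hnip
    · rw [hB, Finset.mem_filter, mem_rOf]; exact ⟨h, hyP⟩
    · -- SRight w x y
      simp only [SRight] at h hxz; omega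
  have hzB : z ∈ B := by
    rw [hB, Finset.mem_filter, mem_rOf]; exact ⟨hxz, hzP⟩
  have hAB : A ⊆ B := by
    intro y hy
    rw [hA, Finset.mem_filter, mem_rOf] at hy
    obtain ⟨hy1, hy2⟩ := hy
    rw [hB, Finset.mem_filter, mem_rOf]
    refine ⟨?_, hy2⟩
    simp only [SRight] at hy1 ⊢
    omega
  have hzA : z ∉ A := by
    rw [hA, Finset.mem_filter, mem_rOf]
    rintro ⟨hh, -⟩
    simp only [SRight] at hh
    omega
  have hdisj : Disjoint (insert z A) C := by
    rw [Finset.disjoint_left]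
    intro y hy hyC
    rw [hC, Finset.mem_sdiff, mem_aOf] at hyC
    rcases Finset.mem_insert.mp hy with hh | hh
    · exact hyC.1.1 (by rw [hh])
    · rw [hA, Finset.mem_filter, mem_rOf] at hh
      obtain ⟨⟨hyz, hip⟩, -⟩ := hyC
      obtain ⟨hh1, -⟩ := hh
      simp only [SRight] at hh1
      obtain ⟨hip1, hip2⟩ := hip
      omega
  have hsub : (insert z A) ∪ C ⊆ B := by
    intro y hy
    rcases Finset.mem_union.mp hy with hh | hh
    · rcases Finset.mem_insert.mp hh with h1 | h1
      · rwa [h1]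
      · exact hAB h1
    · exact hCB hh
  have hcard1 : A.card + 1 + C.card ≤ B.card := by
    have h1 : ((insert z A) ∪ C).card ≤ B.card := Finset.card_le_card hsub
    rw [Finset.card_union_of_disjoint hdisj, Finset.card_insert_of_notMem hzA] at h1
    omega
  have hcard2 : (aOf w z).card ≤ C.card + (aOf w x).card := by
    have : aOf w z ⊆ C ∪ (aOf w x) := by
      intro y hy
      rw [Finset.mem_union, hC, Finset.mem_sdiff]
      by_cases hh : y ∈ aOf w x
      · exact Or.inr hh
      · exact Or.inl ⟨hy, hh⟩
    calc (aOf w z).card ≤ (C ∪ aOf w x).card := Finset.card_le_card this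
      _ ≤ C.card + (aOf w x).card := Finset.card_union_le _ _
  simp only [psi, ← hA, ← hB]
  omega

lemma anc_lt (P : Finset (Edge w)) (x y : Edge w) (hne : y ≠ x) (hip : InPath w x y) :
    psi w P y + 1 ≤ psi w P x := by
  classical
  have h1 : (rOf w y).filter (fun g => g ∉ P) ⊆ (rOf w x).filter (fun g => g ∉ P) := by
    intro g hg
    rw [Finset.mem_filter, mem_rOf] at hg ⊢
    refine ⟨?_, hg.2⟩
    obtain ⟨hi1, hi2⟩ := hip
    simp only [SRight] at hg ⊢
    omega
  have h2 : insert y (aOf w y) ⊆ aOf w x := by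
    intro g hg
    rcases Finset.mem_insert.mp hg with hh | hh
    · rw [hh, mem_aOf]; exact ⟨hne, hip⟩
    · rw [mem_aOf] at hh ⊢
      obtain ⟨hg1, hg2, hg3⟩ := hh
      constructor
      · intro hgx
        apply hne
        apply edge_eq_of_open y x
        have hg2' : (x.1).1 ≤ (y.1).1 := by rw [← hgx]; exact hg2
        exact le_antisymm hip.1 hg2'

      · exact ⟨le_trans hg2 hip.1, le_trans hip.2 hg3⟩
  have h3 : (aOf w y).card + 1 ≤ (aOf w x).card := by
    have := Finset.card_le_card h2
    rwa [Finset.card_insert_of_notMem (by rw [mem_aOf]; simp)] at this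
  have h4 := Finset.card_le_card h1
  simp only [psi]
  omega

lemma psi_mono (P Q : Finset (Edge w)) (hPQ : P ⊆ Q) (x : Edge w) : psi w Q x ≤ psi w P x := by
  have : (rOf w x).filter (fun y => y ∉ Q) ⊆ (rOf w x).filter (fun y => y ∉ P) := by
    intro y hy
    rw [Finset.mem_filter] at hy ⊢
    exact ⟨hy.1, fun hh => hy.2 (hPQ hh)⟩
  have := Finset.card_le_card this
  simp only [psi]; omega

lemma psi_insert_right (P : Finset (Edge w)) (x g : Edge w) (hg : SRight w g x) (hgP : g ∉ P) :
    psi w (insert g P) x + 2 = psi w P x := by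
  classical
  have hset : (rOf w x).filter (fun y => y ∉ insert g P) =
      ((rOf w x).filter (fun y => y ∉ P)).erase g := by
    ext y
    simp only [Finset.mem_filter, Finset.mem_erase, Finset.mem_insert, not_or]
    constructor
    · rintro ⟨hy1, hy2, hy3⟩; exact ⟨hy2, hy1, hy3⟩
    · rintro ⟨hy1, hy2, hy3⟩; exact ⟨hy2, hy1, hy3⟩
  have hgmem : g ∈ (rOf w x).filter (fun y => y ∉ P) := by
    rw [Finset.mem_filter, mem_rOf]; exact ⟨hg, hgP⟩
  have := Finset.card_erase_of_mem hgmem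
  have hpos : 1 ≤ ((rOf w x).filter (fun y => y ∉ P)).card :=
    Finset.card_pos.mpr ⟨g, hgmem⟩
  simp only [psi, hset]
  omega

lemma psi_eq_of_irrel (P Q : Finset (Edge w)) (x : Edge w) (hPQ : P ⊆ Q)
    (h : ∀ y ∈ Q, y ∉ P → ¬ SRight w y x) : psi w Q x = psi w P x := by
  have hset : (rOf w x).filter (fun y => y ∉ Q) = (rOf w x).filter (fun y => y ∉ P) := by
    ext y
    simp only [Finset.mem_filter, mem_rOf]
    constructor
    · rintro ⟨h1, h2⟩; exact ⟨h1, fun hh => h2 (hPQ hh)⟩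
    · rintro ⟨h1, h2⟩
      refine ⟨h1, fun hh => ?_⟩
      exact h y hh h2 h1
  simp only [psi, hset]

lemma psi_swap (P : Finset (Edge w)) (x xb z : Edge w) (h1 : SRight w xb x) (h2 : SRight w z x)
    (hxbP : xb ∈ P) (hzP : z ∉ P) :
    psi w (insert z (P.erase xb)) x = psi w P x := by
  classical
  have hne : xb ≠ z := fun hh => hzP (hh ▸ hxbP)
  have hxbr : xb ∈ rOf w x := mem_rOf.mpr h1
  have hset : (rOf w x).filter (fun y => y ∉ insert z (P.erase xb)) =
      insert xb (((rOf w x).filter (fun y => y ∉ P)).erase z) := by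
    ext y
    simp only [Finset.mem_filter, Finset.mem_insert, Finset.mem_erase, not_or, not_and]
    constructor
    · rintro ⟨hy1, hy2, hy3⟩
      by_cases hyxb : y = xb
      · exact Or.inl hyxb
      · exact Or.inr ⟨hy2, hy1, hy3 hyxb⟩
    · rintro (rfl | ⟨hz2, hy1, hyP⟩)
      · exact ⟨hxbr, hne, fun hcon => absurd rfl hcon⟩
      · exact ⟨hy1, hz2, fun _ => hyP⟩
  have hzF : z ∈ (rOf w x).filter (fun y => y ∉ P) := by
    rw [Finset.mem_filter, mem_rOf]; exact ⟨h2, hzP⟩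
  have hxbne : xb ∉ ((rOf w x).filter (fun y => y ∉ P)).erase z := by
    rw [Finset.mem_erase, Finset.mem_filter]
    rintro ⟨-, -, hcon⟩; exact hcon hxbP
  have hc1 := Finset.card_erase_of_mem hzF
  have hc2 : (insert xb (((rOf w x).filter (fun y => y ∉ P)).erase z)).card =
      (((rOf w x).filter (fun y => y ∉ P)).erase z).card + 1 :=
    Finset.card_insert_of_notMem hxbne
  have hpos : 1 ≤ ((rOf w x).filter (fun y => y ∉ P)).card :=
    Finset.card_pos.mpr ⟨z, hzF⟩
  simp only [psi, hset]
  omega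

end Stmt11aux

open Stmt11aux
open scoped Classical

/-- for decreasing labels `L, L'` of the tree of `w`, if
`τ(L) ⋖ τ(L')` in the sequence cover relation, then `L ⋖ L'` in the label cover
relation. -/
theorem stmt11 (n : ℕ) (w : ℕ → Bool) (hw : IsDyckWord n w)
    (L L' : Edge w → ℕ) (hL : IsDecLabel n w L) (hL' : IsDecLabel n w L')
    (h : SeqCover n (tauSeq n w L) (tauSeq n w L')) :
    Covers w (IsDecLabel n w) L L' := by
  obtain ⟨i, j, h1i, hij, hjn, hcov, hmidcov, h'i, h'j, h'k⟩ := h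
  have hn2 : 2 ≤ n := by omega
  -- basic label facts
  have hLbd : ∀ e, 1 ≤ L e ∧ L e ≤ n := hL.1.1
  have hLinj : Function.Injective L := hL.1.2.1
  have hLsur : ∀ v, 1 ≤ v → v ≤ n → ∃ e, L e = v := hL.1.2.2
  have hLdec : ∀ e e', InPath w e e' → e ≠ e' → L e < L e' := hL.2
  have hL'bd : ∀ e, 1 ≤ L' e ∧ L' e ≤ n := hL'.1.1
  have hL'inj : Function.Injective L' := hL'.1.2.1
  have hL'sur : ∀ v, 1 ≤ v → v ≤ n → ∃ e, L' e = v := hL'.1.2.2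
  have hL'dec : ∀ e e', InPath w e e' → e ≠ e' → L' e < L' e' := hL'.2
  obtain ⟨e0, -⟩ := hLsur 1 le_rfl (by omega)
  haveI : Nonempty (Edge w) := ⟨e0⟩
  haveI : Finite (Edge w) := by
    apply Finite.of_injective (fun e : Edge w => (⟨L e, by have := (hLbd e).2; omega⟩ : Fin (n+1)))
    intro e f hef
    apply hLinj
    have := congrArg Fin.val hef
    simpa using this
  haveI : Fintype (Edge w) := Fintype.ofFinite _
  -- the edge with a given label
  have hexL : ∀ v : ℕ, ∃ e : Edge w, (1 ≤ v → v ≤ n → L e = v) := by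
    intro v
    by_cases hv : 1 ≤ v ∧ v ≤ n
    · exact (hLsur v hv.1 hv.2).imp (fun e he _ _ => he)
    · exact ⟨e0, fun h1 h2 => absurd ⟨h1, h2⟩ hv⟩
  have hexL' : ∀ v : ℕ, ∃ e : Edge w, (1 ≤ v → v ≤ n → L' e = v) := by
    intro v
    by_cases hv : 1 ≤ v ∧ v ≤ n
    · exact (hL'sur v hv.1 hv.2).imp (fun e he _ _ => he)
    · exact ⟨e0, fun h1 h2 => absurd ⟨h1, h2⟩ hv⟩
  choose eL heL using hexL
  choose eL' heL' using hexL'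
  have heLu : ∀ e : Edge w, eL (L e) = e := by
    intro e
    exact hLinj (heL (L e) (hLbd e).1 (hLbd e).2)
  have heL'u : ∀ e : Edge w, eL' (L' e) = e := by
    intro e
    exact hL'inj (heL' (L' e) (hL'bd e).1 (hL'bd e).2)
  -- placed sets
  set PL : ℕ → Finset (Edge w) := fun v => Finset.univ.filter (fun y => L y < v) with hPL
  set PL' : ℕ → Finset (Edge w) := fun v => Finset.univ.filter (fun y => L' y < v) with hPL'
  have memPL : ∀ (y : Edge w) (v : ℕ), y ∈ PL v ↔ L y < v := by
    intro y v; rw [hPL]; simp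
  have memPL' : ∀ (y : Edge w) (v : ℕ), y ∈ PL' v ↔ L' y < v := by
    intro y v; rw [hPL']; simp
  have hPLmono : ∀ u v : ℕ, u ≤ v → PL u ⊆ PL v := by
    intro u v huv y hy
    rw [memPL] at hy ⊢; omega
  have hPL'mono : ∀ u v : ℕ, u ≤ v → PL' u ⊆ PL' v := by
    intro u v huv y hy
    rw [memPL'] at hy ⊢; omega
  -- the bridge between tauSeq and psi
  have bridge : ∀ (M : Edge w → ℕ), IsDecLabel n w M → ∀ eM : ℕ → Edge w,
      (∀ v, 1 ≤ v → v ≤ n → M (eM v) = v) → ∀ v, 1 ≤ v → v ≤ n →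
      tauSeq n w M (n+1-v) =
        psi w (Finset.univ.filter (fun y => M y < v)) (eM v) := by
    intro M hM eM heM v hv1 hv2
    have hMinj := hM.1.2.1
    have hMx : M (eM v) = v := heM v hv1 hv2
    have hvv : n + 1 - (n + 1 - v) = v := by omega
    have pairCard1 :
        Nat.card {q : Edge w × Edge w // M q.1 = v ∧ v < M q.2 ∧ SRight w q.2 q.1} =
        Nat.card {y : Edge w // v < M y ∧ SRight w y (eM v)} := by
      apply Nat.card_congr
      refine ⟨fun q => ⟨q.1.2, q.2.2.1, ?_⟩, fun y => ⟨(eM v, y.1), hMx, y.2.1, y.2.2⟩, ?_, ?_⟩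
      · have hq : q.1.1 = eM v := hMinj (q.2.1.trans hMx.symm)
        rw [← hq]; exact q.2.2.2
      · intro q
        have hq : q.1.1 = eM v := hMinj (q.2.1.trans hMx.symm)
        apply Subtype.ext
        exact Prod.ext hq.symm rfl
      · intro y
        exact Subtype.ext rfl
    have pairCard2 :
        Nat.card {q : Edge w × Edge w // M q.1 = v ∧ v < M q.2 ∧ InPath w q.1 q.2} =
        Nat.card {y : Edge w // v < M y ∧ InPath w (eM v) y} := by
      apply Nat.card_congr
      refine ⟨fun q => ⟨q.1.2, q.2.2.1, ?_⟩, fun y => ⟨(eM v, y.1), hMx, y.2.1, y.2.2⟩, ?_, ?_⟩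
      · have hq : q.1.1 = eM v := hMinj (q.2.1.trans hMx.symm)
        rw [← hq]; exact q.2.2.2
      · intro q
        have hq : q.1.1 = eM v := hMinj (q.2.1.trans hMx.symm)
        apply Subtype.ext
        exact Prod.ext hq.symm rfl
      · intro y
        exact Subtype.ext rfl
    have count1 : Nat.card {y : Edge w // v < M y ∧ SRight w y (eM v)} =
        ((rOf w (eM v)).filter (fun y => y ∉ Finset.univ.filter (fun y => M y < v))).card := by
      rw [← Nat.card_eq_finsetCard]
      apply Nat.card_congr
      apply Equiv.subtypeEquivRight
      intro y
      simp only [Finset.mem_filter, Stmt11aux.mem_rOf, Finset.mem_univ, true_and]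
      constructor
      · rintro ⟨h1, h2⟩; exact ⟨h2, by omega⟩
      · rintro ⟨h1, h2⟩
        refine ⟨?_, h1⟩
        rcases Nat.lt_or_ge v (M y) with hh | hh
        · exact hh
        · exfalso
          have hMyv : M y = v := by omega
          have hyx : y = eM v := hMinj (hMyv.trans hMx.symm)
          have holt := Stmt11aux.edge_olt (eM v)
          rw [hyx] at h1
          have h1' : ((eM v).1).2 < ((eM v).1).1 := h1
          omega
    have count2 : Nat.card {y : Edge w // v < M y ∧ InPath w (eM v) y} = (aOf w (eM v)).card := by
      rw [← Nat.card_eq_finsetCard]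
      apply Nat.card_congr
      apply Equiv.subtypeEquivRight
      intro y
      simp only [Stmt11aux.mem_aOf, Finset.mem_univ, true_and]
      constructor
      · rintro ⟨h1, h2⟩
        refine ⟨fun hh => ?_, h2⟩
        rw [hh, hMx] at h1; omega
      · rintro ⟨h1, h2⟩
        refine ⟨?_, h2⟩
        have := hM.2 (eM v) y h2 (fun hh => h1 hh.symm)
        omega
    simp only [tauSeq]
    rw [hvv, pairCard1, pairCard2, count1, count2]
    rfl
    -- values a > b corresponding to indices i < j
  set a := n + 1 - i with haDef
  set b := n + 1 - j with hbDef
  have hb1 : 1 ≤ b := by omega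
  have hba : b < a := by omega
  have han : a ≤ n := by omega
  have hia : n + 1 - a = i := by omega
  have hjb : n + 1 - b = j := by omega
  have tauL : ∀ v, 1 ≤ v → v ≤ n → tauSeq n w L (n+1-v) = psi w (PL v) (eL v) := by
    intro v h1 h2
    simp only [hPL]
    exact bridge L hL eL heL v h1 h2
  have tauL' : ∀ v, 1 ≤ v → v ≤ n → tauSeq n w L' (n+1-v) = psi w (PL' v) (eL' v) := by
    intro v h1 h2
    simp only [hPL']
    exact bridge L' hL' eL' heL' v h1 h2
  have Hab : psi w (PL a) (eL a) + 2 ≤ psi w (PL b) (eL b) := by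
    have h1 := tauL a (by omega) han
    have h2 := tauL b hb1 (by omega)
    rw [hia] at h1; rw [hjb] at h2
    omega
  have Hmid : ∀ v, b < v → v < a → psi w (PL b) (eL b) ≤ psi w (PL v) (eL v) := by
    intro v hv1 hv2
    have h1 := tauL v (by omega) (by omega)
    have h2 := tauL b hb1 (by omega)
    rw [hjb] at h2
    have h3 := hmidcov (n+1-v) (by omega) (by omega)
    omega
  have H'a : psi w (PL' a) (eL' a) + 2 = psi w (PL b) (eL b) := by
    have h1 := tauL' a (by omega) han
    have h2 := tauL b hb1 (by omega)
    have h0 := tauL a (by omega) han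
    rw [hia] at h1 h0; rw [hjb] at h2
    omega
  have H'b : psi w (PL' b) (eL' b) = psi w (PL a) (eL a) := by
    have h1 := tauL' b hb1 (by omega)
    have h2 := tauL a (by omega) han
    rw [hjb] at h1; rw [hia] at h2
    omega
  have H'v : ∀ v, 1 ≤ v → v ≤ n → v ≠ a → v ≠ b →
      psi w (PL' v) (eL' v) = psi w (PL v) (eL v) := by
    intro v h1 h2 hna hnb
    have e1 := tauL' v h1 h2
    have e2 := tauL v h1 h2
    have e3 := h'k (n+1-v) (by omega) (by omega)
    omega
  -- candidate facts
  have candL1 : ∀ v, 1 ≤ v → v ≤ n → eL v ∉ PL v := by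
    intro v h1 h2
    rw [memPL, heL v h1 h2]; omega
  have candL1' : ∀ v, 1 ≤ v → v ≤ n → eL' v ∉ PL' v := by
    intro v h1 h2
    rw [memPL', heL' v h1 h2]; omega
  have candL2 : ∀ v, 1 ≤ v → v ≤ n → ∀ u, u ≤ v → ∀ y, y ≠ eL v → InPath w (eL v) y → y ∉ PL u := by
    intro v h1 h2 u hu y hy hip
    rw [memPL]
    have h3 := hLdec (eL v) y hip (fun hh => hy hh.symm)
    rw [heL v h1 h2] at h3; omega
  have candL2' : ∀ v, 1 ≤ v → v ≤ n → ∀ u, u ≤ v → ∀ y, y ≠ eL' v → InPath w (eL' v) y → y ∉ PL' u := by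
    intro v h1 h2 u hu y hy hip
    rw [memPL']
    have h3 := hL'dec (eL' v) y hip (fun hh => hy hh.symm)
    rw [heL' v h1 h2] at h3; omega
  have descL : ∀ v, 1 ≤ v → v ≤ n → ∀ y, y ≠ eL v → InPath w y (eL v) → y ∈ PL v := by
    intro v h1 h2 y hy hip
    rw [memPL]
    have h3 := hLdec y (eL v) hip hy
    rw [heL v h1 h2] at h3; omega
  have descL' : ∀ v, 1 ≤ v → v ≤ n → ∀ y, y ≠ eL' v → InPath w y (eL' v) → y ∈ PL' v := by
    intro v h1 h2 y hy hip
    rw [memPL']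
    have h3 := hL'dec y (eL' v) hip hy
    rw [heL' v h1 h2] at h3; omega
  -- the common step lemma
  have step : ∀ v, 1 ≤ v → v ≤ n → PL' v = PL v →
      psi w (PL' v) (eL' v) = psi w (PL v) (eL v) → eL' v = eL v := by
    intro v h1 h2 hPeq hpsi
    by_contra hne
    rcases trichotomy (eL' v) (eL v) with hh | ⟨hip, hne2⟩ | ⟨hip, hne2⟩ | hh | hh
    · exact hne hh
    · have h3 := descL v h1 h2 (eL' v) hne hip
      rw [← hPeq] at h3
      exact candL1' v h1 h2 h3
    · have h3 := descL' v h1 h2 (eL v) (fun hh => hne hh.symm) hip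
      rw [hPeq] at h3
      exact candL1 v h1 h2 h3
    · have hk := key (PL v) (eL v) (eL' v) hh
        (by rw [← hPeq]; exact candL1' v h1 h2)
        (by intro y hy hip2
            rw [← hPeq]
            exact candL2' v h1 h2 v le_rfl y hy hip2)
      rw [hPeq] at hpsi
      omega
    · have hk := key (PL v) (eL' v) (eL v) hh (candL1 v h1 h2)
        (fun y hy hip2 => candL2 v h1 h2 v le_rfl y hy hip2)
      rw [hPeq] at hpsi
      omega
  -- placed sets agree given agreement of labels below
  have setEq : ∀ v : ℕ, (∀ u, 1 ≤ u → u < v → eL' u = eL u) → PL' v = PL v := by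
    intro v hag
    ext y
    rw [memPL, memPL']
    constructor
    · intro hy
      have h1 := (hL'bd y).1
      have h2 := (hL'bd y).2
      have hy2 : eL' (L' y) = y := heL'u y
      rw [hag (L' y) h1 hy] at hy2
      have h3 := heL (L' y) h1 h2
      rw [hy2] at h3
      omega
    · intro hy
      have h1 := (hLbd y).1
      have h2 := (hLbd y).2
      have hy2 : eL (L y) = y := heLu y
      have h3 := heL' (L y) h1 h2
      rw [hag (L y) h1 hy, hy2] at h3
      omega
  -- agreement below b
  have aglowAux : ∀ v : ℕ, v ≤ b → ∀ u, 1 ≤ u → u < v → eL' u = eL u := by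
    intro v
    induction v with
    | zero => intro _ u _ hu; omega
    | succ m ih =>
      intro hm u h1 hu
      rcases Nat.lt_succ_iff_lt_or_eq.mp hu with hlt | heq
      · exact ih (by omega) u h1 hlt
      · subst heq
        exact step u h1 (by omega) (setEq u (ih (by omega)))
          (H'v u h1 (by omega) (by omega) (by omega))
  have aglow : ∀ u, 1 ≤ u → u < b → eL' u = eL u := aglowAux b le_rfl
  -- the situation at level b
  have hPb : PL' b = PL b := setEq b aglow
  have hxbL : L (eL b) = b := heL b hb1 (by omega)
  have hzL' : L' (eL' b) = b := heL' b hb1 (by omega)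
  have hxaL : L (eL a) = a := heL a (by omega) han
  have hne_bz : eL b ≠ eL' b := by
    intro hh
    have h1 : psi w (PL b) (eL b) = psi w (PL a) (eL a) := by
      rw [hh, ← hPb]; exact H'b
    omega
  have hzpsi : psi w (PL b) (eL' b) = psi w (PL a) (eL a) := by
    rw [← hPb]; exact H'b
  have hzPb : eL' b ∉ PL b := by rw [← hPb]; exact candL1' b hb1 (by omega)
  have hz_right : SRight w (eL' b) (eL b) := by
    rcases trichotomy (eL' b) (eL b) with hh | ⟨hip, hne2⟩ | ⟨hip, hne2⟩ | hh | hh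
    · exact absurd hh.symm hne_bz
    · exfalso
      have h3 := descL b hb1 (by omega) (eL' b) hne2 hip
      rw [← hPb] at h3
      exact candL1' b hb1 (by omega) h3
    · exfalso
      have h3 := descL' b hb1 (by omega) (eL b) hne_bz hip
      rw [hPb] at h3
      exact candL1 b hb1 (by omega) h3
    · exact hh
    · exfalso
      have hk := key (PL b) (eL' b) (eL b) hh (candL1 b hb1 (by omega))
        (fun y hy hip2 => candL2 b hb1 (by omega) b le_rfl y hy hip2)
      omega
  -- mid values sit strictly left of eL b
  have midL_notanc : ∀ v, b < v → v < a → ¬ (eL v ≠ eL b ∧ InPath w (eL b) (eL v)) := by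
    rintro v hv1 hv2 ⟨hne2, hip⟩
    have h1 := anc_lt (PL b) (eL b) (eL v) hne2 hip
    have h2 := psi_mono (PL b) (PL v) (hPLmono b v (by omega)) (eL v)
    have h3 := Hmid v hv1 hv2
    omega
  have midL_notright : ∀ v, b < v → v < a → ¬ SRight w (eL v) (eL b) := by
    intro v hv1 hv2 hsr
    have hvn : v ≤ n := by omega
    have hk := key (PL b) (eL b) (eL v) hsr
      (by rw [memPL, heL v (by omega) hvn]; omega)
      (fun y hy hip => candL2 v (by omega) hvn b (by omega) y hy hip)
    have h2 := psi_mono (PL b) (PL v) (hPLmono b v (by omega)) (eL v)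
    have h3 := Hmid v hv1 hv2
    omega
  have midLeft : ∀ v, b < v → v < a → SRight w (eL b) (eL v) := by
    intro v hv1 hv2
    have hvn : v ≤ n := by omega
    rcases trichotomy (eL v) (eL b) with hh | ⟨hip, hne2⟩ | ⟨hip, hne2⟩ | hh | hh
    · exfalso
      have h3 := heL v (by omega) hvn
      rw [hh, hxbL] at h3
      omega
    · exfalso
      have h3 := descL b hb1 (by omega) (eL v) hne2 hip
      rw [memPL, heL v (by omega) hvn] at h3
      omega
    · exact absurd ⟨hne2, hip⟩ (midL_notanc v hv1 hv2)
    · exact absurd hh (midL_notright v hv1 hv2)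
    · exact hh
  have midL'_notanc : ∀ v, b < v → v < a → ¬ (eL' v ≠ eL b ∧ InPath w (eL b) (eL' v)) := by
    rintro v hv1 hv2 ⟨hne2, hip⟩
    have hvn : v ≤ n := by omega
    have h1 := anc_lt (PL b) (eL b) (eL' v) hne2 hip
    have h2 : psi w (PL' v) (eL' v) ≤ psi w (PL b) (eL' v) := by
      rw [← hPb]
      exact psi_mono (PL' b) (PL' v) (hPL'mono b v (by omega)) (eL' v)
    have h3 := Hmid v hv1 hv2
    have h4 := H'v v (by omega) hvn (by omega) (by omega)
    omega
  have midL'_notright : ∀ v, b < v → v < a → ¬ SRight w (eL' v) (eL b) := by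
    intro v hv1 hv2 hsr
    have hvn : v ≤ n := by omega
    have hk := key (PL b) (eL b) (eL' v) hsr
      (by rw [← hPb, memPL', heL' v (by omega) hvn]; omega)
      (by intro y hy hip
          rw [← hPb]
          exact candL2' v (by omega) hvn b (by omega) y hy hip)
    have h2 : psi w (PL' v) (eL' v) ≤ psi w (PL b) (eL' v) := by
      rw [← hPb]
      exact psi_mono (PL' b) (PL' v) (hPL'mono b v (by omega)) (eL' v)
    have h3 := Hmid v hv1 hv2
    have h4 := H'v v (by omega) hvn (by omega) (by omega)
    omega
  have midL'_noteq : ∀ v, b < v → v < a → eL' v ≠ eL b := by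
    intro v hv1 hv2 hh
    have hvn : v ≤ n := by omega
    have hQsub : insert (eL' b) (PL b) ⊆ PL' v := by
      intro y hy
      rcases Finset.mem_insert.mp hy with h5 | h5
      · rw [h5, memPL', hzL']; omega
      · have h6 : y ∈ PL' b := by rw [hPb]; exact h5
        exact hPL'mono b v (by omega) h6
    have h5 := psi_insert_right (PL b) (eL b) (eL' b) hz_right hzPb
    have h6 := psi_mono (insert (eL' b) (PL b)) (PL' v) hQsub (eL b)
    have h7 := H'v v (by omega) hvn (by omega) (by omega)
    have h3 := Hmid v hv1 hv2
    rw [hh] at h7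
    omega
  have midLeft' : ∀ v, b < v → v < a → SRight w (eL b) (eL' v) := by
    intro v hv1 hv2
    have hvn : v ≤ n := by omega
    rcases trichotomy (eL' v) (eL b) with hh | ⟨hip, hne2⟩ | ⟨hip, hne2⟩ | hh | hh
    · exact absurd hh (midL'_noteq v hv1 hv2)
    · exfalso
      have h3 := descL b hb1 (by omega) (eL' v) hne2 hip
      rw [← hPb, memPL', heL' v (by omega) hvn] at h3
      omega
    · exact absurd ⟨hne2, hip⟩ (midL'_notanc v hv1 hv2)
    · exact absurd hh (midL'_notright v hv1 hv2)
    · exact hh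
    -- placed sets in the middle range
  have setEqMid : ∀ v, b < v → v ≤ a → (∀ u, b < u → u < v → eL' u = eL u) →
      PL' v = insert (eL' b) ((PL v).erase (eL b)) := by
    intro v hv1 hv2 hag
    ext y
    constructor
    · intro hy
      rw [memPL'] at hy
      rw [Finset.mem_insert, Finset.mem_erase, memPL]
      have h1 := (hL'bd y).1
      have h2 := (hL'bd y).2
      have hy2 : eL' (L' y) = y := heL'u y
      by_cases hub2 : L' y = b
      · left; rw [← hub2]; exact hy2.symm
      · right
        have h3 : eL' (L' y) = eL (L' y) := by
          rcases Nat.lt_or_ge (L' y) b with hc | hc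
          · exact aglow (L' y) h1 hc
          · exact hag (L' y) (by omega) hy
        rw [h3] at hy2
        have h5 := heL (L' y) h1 h2
        rw [hy2] at h5
        constructor
        · intro hh
          have h7 : L y = b := by rw [hh]; exact hxbL
          omega
        · omega
    · intro hy
      rw [Finset.mem_insert, Finset.mem_erase, memPL] at hy
      rw [memPL']
      rcases hy with hh | ⟨hne2, hylt⟩
      · rw [hh, hzL']; omega
      · have h1 := (hLbd y).1
        have h2 := (hLbd y).2
        have hy2 : eL (L y) = y := heLu y
        have hub2 : L y ≠ b := by
          intro hh2
          rw [hh2] at hy2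
          exact hne2 hy2.symm
        have h3 : eL' (L y) = eL (L y) := by
          rcases Nat.lt_or_ge (L y) b with hc | hc
          · exact aglow (L y) h1 hc
          · exact hag (L y) (by omega) hylt
        rw [hy2] at h3
        have h5 := heL' (L y) h1 h2
        rw [h3] at h5
        omega
  -- the middle step
  have stepMid : ∀ v, b < v → v < a → (∀ u, b < u → u < v → eL' u = eL u) → eL' v = eL v := by
    intro v hv1 hv2 hag
    have hvn : v ≤ n := by omega
    have hv1n : 1 ≤ v := by omega
    have hP' : PL' v = insert (eL' b) ((PL v).erase (eL b)) := setEqMid v hv1 (by omega) hag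
    have hxnot : eL v ∉ PL v := candL1 v hv1n hvn
    have hz'not : eL' v ∉ PL' v := candL1' v hv1n hvn
    have hsr_xbx : SRight w (eL b) (eL v) := midLeft v hv1 hv2
    have hsr_xbz' : SRight w (eL b) (eL' v) := midLeft' v hv1 hv2
    have hx_ne_z : eL v ≠ eL' b := by
      intro hh
      have h0 := psi_mono (PL b) (PL v) (hPLmono b v (by omega)) (eL v)
      have h1 : psi w (PL b) (eL v) = psi w (PL b) (eL' b) := by rw [hh]
      have h3 := Hmid v hv1 hv2
      omega
    have hz'_ne_xb : eL' v ≠ eL b := midL'_noteq v hv1 hv2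
    have hz'notP : eL' v ∉ PL v := by
      intro hmem
      apply hz'not
      rw [hP', Finset.mem_insert, Finset.mem_erase]
      exact Or.inr ⟨hz'_ne_xb, hmem⟩
    have hxnotP' : eL v ∉ PL' v := by
      rw [hP', Finset.mem_insert, Finset.mem_erase]
      rintro (hh | ⟨-, hh⟩)
      · exact hx_ne_z hh
      · exact hxnot hh
    have hzLge : ¬ L (eL' b) < v := by
      intro hlt
      rcases Nat.lt_trichotomy (L (eL' b)) b with hc | hc | hc
      · exact hzPb ((memPL _ _).mpr hc)
      · have h4 : eL (L (eL' b)) = eL' b := heLu (eL' b)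
        rw [hc] at h4
        exact hne_bz h4
      · have h4 : eL (L (eL' b)) = eL' b := heLu (eL' b)
        have h5 : eL' (L (eL' b)) = eL (L (eL' b)) := hag _ hc hlt
        rw [h4] at h5
        have h6 := heL' (L (eL' b)) (by omega) (by omega)
        rw [h5, hzL'] at h6
        omega
    have hswap : psi w (PL' v) (eL' v) = psi w (PL v) (eL' v) := by
      rw [hP']
      apply psi_swap
      · exact hsr_xbz'
      · have q1 : ((eL' v).1).2 < ((eL b).1).1 := hsr_xbz'
        have q2 := edge_olt (eL b)
        have q3 : ((eL b).1).2 < ((eL' b).1).1 := hz_right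
        show ((eL' v).1).2 < ((eL' b).1).1
        omega
      · rw [memPL, hxbL]; omega
      · rw [memPL]; exact hzLge
    have hpsieq : psi w (PL v) (eL' v) = psi w (PL v) (eL v) := by
      rw [← hswap]
      exact H'v v hv1n hvn (by omega) (by omega)
    by_contra hne
    rcases trichotomy (eL' v) (eL v) with hh | ⟨hip, hne2⟩ | ⟨hip, hne2⟩ | hh | hh
    · exact hne hh
    · exact hz'notP (descL v hv1n hvn (eL' v) hne hip)
    · exact hxnotP' (descL' v hv1n hvn (eL v) (fun hh2 => hne hh2.symm) hip)
    · have hk := key (PL v) (eL v) (eL' v) hh hz'notP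
        (by intro y hy hip2
            intro hymem
            have hynotP' : y ∉ PL' v := candL2' v hv1n hvn v le_rfl y hy hip2
            have hyxb : y = eL b := by
              by_contra hyne
              apply hynotP'
              rw [hP', Finset.mem_insert, Finset.mem_erase]
              exact Or.inr ⟨hyne, hymem⟩
            subst hyxb
            have q1 : ((eL b).1).1 ≤ ((eL' v).1).1 := hip2.1
            have q2 : ((eL' v).1).2 < ((eL b).1).1 := hsr_xbz'
            have q3 := edge_olt (eL' v)
            omega)
      omega
    · have hk := key (PL v) (eL' v) (eL v) hh hxnot
        (fun y hy hip2 => candL2 v hv1n hvn v le_rfl y hy hip2)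
      omega
  have agmidAux : ∀ v : ℕ, v ≤ a → ∀ u, b < u → u < v → eL' u = eL u := by
    intro v
    induction v with
    | zero => intro _ u _ hu; omega
    | succ m ih =>
      intro hm u hub hu
      rcases Nat.lt_succ_iff_lt_or_eq.mp hu with hlt | heq
      · exact ih (by omega) u hub hlt
      · subst heq
        exact stepMid u hub (by omega) (ih (by omega))
  have agmid : ∀ u, b < u → u < a → eL' u = eL u := fun u h1 h2 => agmidAux a le_rfl u h1 h2
    -- the situation at level a
  have hPa' : PL' a = insert (eL' b) ((PL a).erase (eL b)) := setEqMid a hba le_rfl agmid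
  have hxbpsi : psi w (PL' a) (eL b) + 2 = psi w (PL b) (eL b) := by
    have hQ : psi w (insert (eL' b) (PL b)) (eL b) + 2 = psi w (PL b) (eL b) :=
      psi_insert_right (PL b) (eL b) (eL' b) hz_right hzPb
    have hirr : psi w (PL' a) (eL b) = psi w (insert (eL' b) (PL b)) (eL b) := by
      apply psi_eq_of_irrel
      · intro y hy
        rcases Finset.mem_insert.mp hy with hh | hh
        · rw [hh, memPL', hzL']; omega
        · have h6 : y ∈ PL' b := by rw [hPb]; exact hh
          exact hPL'mono b a (by omega) h6
      · intro y hy hynot hsr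
        rw [hPa', Finset.mem_insert, Finset.mem_erase] at hy
        rcases hy with hh | ⟨hne2, hmem⟩
        · exact hynot (Finset.mem_insert.mpr (Or.inl hh))
        · rw [memPL] at hmem
          have h1 := (hLbd y).1
          have hyb : ¬ L y < b := fun hc =>
            hynot (Finset.mem_insert.mpr (Or.inr ((memPL _ _).mpr hc)))
          have hynb : L y ≠ b := by
            intro hc
            have h4 : eL (L y) = y := heLu y
            rw [hc] at h4
            exact hne2 h4.symm
          have h4 : eL (L y) = y := heLu y
          have h5 := midL_notright (L y) (by omega) (by omega)
          rw [h4] at h5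
          exact h5 hsr
    omega
  have hstepa : eL' a = eL b := by
    have hz''psi := H'a
    by_contra hne
    have hz''notP : eL' a ∉ PL' a := candL1' a (by omega) han
    rcases trichotomy (eL' a) (eL b) with hh | ⟨hip, hne2⟩ | ⟨hip, hne2⟩ | hh | hh
    · exact hne hh
    · have h3 := descL b hb1 (by omega) (eL' a) hne hip
      have h6 : eL' a ∈ PL' b := by rw [hPb]; exact h3
      exact hz''notP (hPL'mono b a (by omega) h6)
    · have h1 := anc_lt (PL' a) (eL b) (eL' a) hne2 hip
      omega
    · have hk := key (PL' a) (eL b) (eL' a) hh hz''notP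
        (fun y hy hip2 => candL2' a (by omega) han a le_rfl y hy hip2)
      omega
    · have hxbnotPa' : eL b ∉ PL' a := by
        rw [hPa', Finset.mem_insert, Finset.mem_erase]
        rintro (hh2 | ⟨hne2, -⟩)
        · exact hne_bz hh2
        · exact hne2 rfl
      have hk := key (PL' a) (eL' a) (eL b) hh hxbnotPa'
        (by intro y hy hip2
            rw [hPa', Finset.mem_insert, Finset.mem_erase]
            rintro (hh2 | ⟨hne2, hmem⟩)
            · subst hh2
              have q1 : ((eL' b).1).1 ≤ ((eL b).1).1 := hip2.1
              have q2 : ((eL b).1).2 < ((eL' b).1).1 := hz_right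
              have q3 := edge_olt (eL b)
              omega
            · rw [memPL] at hmem
              have h1 := (hLbd y).1
              rcases Nat.lt_trichotomy (L y) b with hc | hc | hc
              · exact candL2 b hb1 (by omega) b le_rfl y hy hip2 ((memPL _ _).mpr hc)
              · have h4 : eL (L y) = y := heLu y
                rw [hc] at h4
                exact hy h4.symm
              · have h4 : eL (L y) = y := heLu y
                have h5 := midL_notanc (L y) hc (by omega)
                rw [h4] at h5
                exact h5 ⟨hy, hip2⟩)
      omega
  -- the right edge of the cover is the edge labelled a in L
  have hzLa : eL' b = eL a := by
    by_contra hne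
    have hzn1 := (hLbd (eL' b)).1
    have hzn2 := (hLbd (eL' b)).2
    have h4z : eL (L (eL' b)) = eL' b := heLu (eL' b)
    have hznb : L (eL' b) ≠ b := by
      intro hc; rw [hc] at h4z; exact hne_bz h4z
    have hznlt : ¬ L (eL' b) < b := fun hc => hzPb ((memPL _ _).mpr hc)
    have hznmid : ¬ (b < L (eL' b) ∧ L (eL' b) < a) := by
      rintro ⟨hc1, hc2⟩
      have h5 := agmid (L (eL' b)) hc1 hc2
      rw [h4z] at h5
      have h6 := heL' (L (eL' b)) (by omega) (by omega)
      rw [h5, hzL'] at h6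
      omega
    have hzna : L (eL' b) ≠ a := by
      intro hc; rw [hc] at h4z; exact hne h4z.symm
    have hznotPa : eL' b ∉ PL a := by rw [memPL]; omega
    have hpsia : psi w (PL a) (eL' b) = psi w (PL a) (eL a) := by
      have h5 : psi w (PL a) (eL' b) = psi w (PL b) (eL' b) := by
        apply psi_eq_of_irrel
        · exact hPLmono b a (by omega)
        · intro y hy hynot hsr
          rw [memPL] at hy
          have hyb : ¬ L y < b := fun hc => hynot ((memPL _ _).mpr hc)
          have h6 : eL (L y) = y := heLu y
          rcases Nat.eq_or_lt_of_le (show b ≤ L y by omega) with hc | hc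
          · rw [← hc] at h6
            rw [← h6] at hsr
            have q2 : ((eL' b).1).2 < ((eL b).1).1 := hsr
            have q3 : ((eL b).1).2 < ((eL' b).1).1 := hz_right
            have q4 := edge_olt (eL b)
            have q5 := edge_olt (eL' b)
            omega
          · have h7 := midLeft (L y) hc (by omega)
            rw [h6] at h7
            have q1 : ((y.1)).2 < ((eL b).1).1 := h7
            have q2 : ((eL' b).1).2 < (y.1).1 := hsr
            have q3 := edge_olt y
            have q4 : ((eL b).1).2 < ((eL' b).1).1 := hz_right
            have q5 := edge_olt (eL b)
            have q6 := edge_olt (eL' b)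
            omega
      rw [h5, hzpsi]
    rcases trichotomy (eL' b) (eL a) with hh | ⟨hip, hne2⟩ | ⟨hip, hne2⟩ | hh | hh
    · exact hne hh
    · exact hznotPa (descL a (by omega) han (eL' b) hne hip)
    · have h5 := descL' b hb1 (by omega) (eL a) (fun hh2 => hne hh2.symm) hip
      rw [hPb, memPL, hxaL] at h5
      omega
    · have hk := key (PL a) (eL a) (eL' b) hh hznotPa
        (by intro y hy hip2
            rw [memPL]
            intro hmem
            have h6 : eL (L y) = y := heLu y
            have h1 := (hLbd y).1
            rcases Nat.lt_trichotomy (L y) b with hc | hc | hc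
            · have h7 := candL2' b hb1 (by omega) b le_rfl y hy hip2
              rw [hPb] at h7
              exact h7 ((memPL _ _).mpr hc)
            · rw [hc] at h6
              rw [← h6] at hip2
              have q1 : ((eL b).1).1 ≤ ((eL' b).1).1 := hip2.1
              have q2 : ((eL' b).1).2 ≤ ((eL b).1).2 := hip2.2
              have q3 : ((eL b).1).2 < ((eL' b).1).1 := hz_right
              have q5 := edge_olt (eL' b)
              omega
            · have h7 := midLeft (L y) hc (by omega)
              rw [h6] at h7
              have q1 : ((y.1)).2 < ((eL b).1).1 := h7
              have q2' : ((eL' b).1).2 ≤ ((y.1)).2 := hip2.2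
              have q3 : ((eL b).1).2 < ((eL' b).1).1 := hz_right
              have q4 := edge_olt (eL b)
              have q5 := edge_olt (eL' b)
              omega)
      omega
    · have hk := key (PL a) (eL' b) (eL a) hh (candL1 a (by omega) han)
        (fun y hy hip2 => candL2 a (by omega) han a le_rfl y hy hip2)
      omega
    -- agreement above a
  have setEqHigh : ∀ v : ℕ, a < v → (∀ u, a < u → u < v → eL' u = eL u) → PL' v = PL v := by
    intro v hv hag
    ext y
    rw [memPL, memPL']
    have h1 := (hLbd y).1
    have h2 := (hLbd y).2
    have h1' := (hL'bd y).1
    have h2' := (hL'bd y).2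
    constructor
    · intro hy
      have hy2' : eL' (L' y) = y := heL'u y
      rcases Nat.lt_trichotomy (L' y) b with hc | hc | hc
      · have h3 := aglow (L' y) h1' hc
        rw [h3] at hy2'
        have h5 := heL (L' y) h1' h2'
        rw [hy2'] at h5
        omega
      · rw [hc, hzLa] at hy2'
        have h5 : L y = a := by rw [← hy2']; exact hxaL
        omega
      · rcases Nat.lt_trichotomy (L' y) a with hd | hd | hd
        · have h3 := agmid (L' y) hc hd
          rw [h3] at hy2'
          have h5 := heL (L' y) h1' h2'
          rw [hy2'] at h5
          omega
        · rw [hd, hstepa] at hy2'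
          have h5 : L y = b := by rw [← hy2']; exact hxbL
          omega
        · have h3 := hag (L' y) hd hy
          rw [h3] at hy2'
          have h5 := heL (L' y) h1' h2'
          rw [hy2'] at h5
          omega
    · intro hy
      have hy2 : eL (L y) = y := heLu y
      rcases Nat.lt_trichotomy (L y) b with hc | hc | hc
      · have h3 := aglow (L y) h1 hc
        rw [← h3] at hy2
        have h5 := heL' (L y) h1 h2
        rw [hy2] at h5
        omega
      · rw [hc] at hy2
        rw [← hstepa] at hy2
        have h5 : L' y = a := by rw [← hy2]; exact heL' a (by omega) han
        omega
      · rcases Nat.lt_trichotomy (L y) a with hd | hd | hd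
        · have h3 := agmid (L y) hc hd
          rw [← h3] at hy2
          have h5 := heL' (L y) h1 h2
          rw [hy2] at h5
          omega
        · rw [hd] at hy2
          rw [← hzLa] at hy2
          have h5 : L' y = b := by rw [← hy2]; exact hzL'
          omega
        · have h3 := hag (L y) hd hy
          rw [← h3] at hy2
          have h5 := heL' (L y) h1 h2
          rw [hy2] at h5
          omega
  have aghighAux : ∀ v : ℕ, v ≤ n + 1 → ∀ u, a < u → u < v → eL' u = eL u := by
    intro v
    induction v with
    | zero => intro _ u _ hu; omega
    | succ m ih =>
      intro hm u hau hu
      rcases Nat.lt_succ_iff_lt_or_eq.mp hu with hlt | heq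
      · exact ih (by omega) u hau hlt
      · subst heq
        exact step u (by omega) (by omega) (setEqHigh u hau (ih (by omega)))
          (H'v u (by omega) (by omega) (by omega) (by omega))
  have aghigh : ∀ u, a < u → u ≤ n → eL' u = eL u := fun u h1 h2 =>
    aghighAux (n+1) le_rfl u h1 (by omega)
  -- final assembly
  refine ⟨hL, hL', eL b, eL' b, hz_right, ?_, ?_, ?_, ?_, ?_⟩
  · intro e he1 he2
    have h1' := (hL'bd e).1
    have h2' := (hL'bd e).2
    have hy2' : eL' (L' e) = e := heL'u e
    have hLb' : L' e ≠ b := by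
      intro hc; rw [hc] at hy2'; exact he2 hy2'.symm
    have hLa' : L' e ≠ a := by
      intro hc; rw [hc, hstepa] at hy2'; exact he1 hy2'.symm
    have h3 : eL' (L' e) = eL (L' e) := by
      rcases Nat.lt_trichotomy (L' e) b with hc | hc | hc
      · exact aglow (L' e) h1' hc
      · exact absurd hc hLb'
      · rcases Nat.lt_trichotomy (L' e) a with hd | hd | hd
        · exact agmid (L' e) hc hd
        · exact absurd hd hLa'
        · exact aghigh (L' e) hd h2'
    rw [h3] at hy2'
    have h5 := heL (L' e) h1' h2'
    rw [hy2'] at h5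
    exact h5
  · rw [hxbL, hzLa, hxaL]
    omega
  · rw [hzL', hxbL]
  · rw [← hstepa, heL' a (by omega) han, hzLa, hxaL]
  · rintro ⟨ec, hr1, hr2, hb1c, hb2c⟩
    rw [hxbL] at hb1c
    rw [hzLa, hxaL] at hb2c
    have h6 : eL (L ec) = ec := heLu ec
    rcases Nat.eq_or_lt_of_le hb1c with hc | hc
    · rw [← hc] at h6
      rw [← h6] at hr1
      have q1 : ((eL b).1).2 < ((eL b).1).1 := hr1
      have q2 := edge_olt (eL b)
      omega
    · rcases Nat.eq_or_lt_of_le hb2c with hd | hd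
      · rw [hd] at h6
        rw [← hzLa] at h6
        rw [← h6] at hr2
        have q1 : ((eL' b).1).2 < ((eL' b).1).1 := hr2
        have q2 := edge_olt (eL' b)
        omega
      · have h7 := midLeft (L ec) hc hd
        rw [h6] at h7
        have q1 : ((ec.1)).2 < ((eL b).1).1 := h7
        have q2 : ((eL b).1).2 < ((ec.1)).1 := hr1
        have q3 := edge_olt ec
        have q4 := edge_olt (eL b)
        omega

end
end
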